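/- arXiv:1804.01493 — 10 statements merged into one kernel-verified Lean document; each statement's English description precedes it below -/
import Mathlib

section
/- Suppose R0 < 0. Then condition (Q1) holds if and only if condition (QA1) holds. -/
/-- Forward helper: in the all-nonnegative branch of (Q1), with `R0 < 0`,
we get `d0 ≠ 0`, `d2 ≠ 0`, `alpha1 > 0`. -/
lemma stmt_0_fwd (c0 c1 c2 d0 d1 d2 : ℝ)
    (hc0 : 0 ≤ c0) (hc1 : 0 ≤ c1) (hc2 : 0 ≤ c2)
    (hd0 : 0 ≤ d0) (hd1 : 0 ≤ d1) (hd2 : 0 ≤ d2)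
    (hl : 0 ≤ d1 * (c1 * d0 - c0 * d1) - d0 * (c2 * d0 - c0 * d2))
    (ha2 : 0 ≤ c2 * d0 - c0 * d2)
    (hR : (c1 * d0 - c0 * d1) * (c2 * d1 - c1 * d2) - (c2 * d0 - c0 * d2) ^ 2 < 0) :
    d0 ≠ 0 ∧ d2 ≠ 0 ∧ 0 < c1 * d0 - c0 * d1 := by
  have hd0ne : d0 ≠ 0 := by
    intro h
    subst h
    have hc0d2 : c0 * d2 = 0 := le_antisymm (by linarith) (mul_nonneg hc0 hd2)
    have hsq : (c2 * 0 - c0 * d2) ^ 2 = 0 := by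
      rw [show c2 * 0 - c0 * d2 = -(c0 * d2) by ring, hc0d2]; ring
    nlinarith [mul_nonneg hc2 hl, mul_nonneg (mul_nonneg (mul_nonneg hc0 hc1) hd1) hd2, hsq]
  have hd2ne : d2 ≠ 0 := by
    intro h
    subst h
    -- R0 = c2*d1*alpha1 - c2^2*d0^2 < 0 but lambda1 ≥ 0 gives d1*alpha1 ≥ c2*d0^2
    nlinarith [mul_nonneg hc2 hl, sq_nonneg (c2 * d0)]
  have hd0pos : 0 < d0 := lt_of_le_of_ne hd0 (Ne.symm hd0ne)
  have hd2pos : 0 < d2 := lt_of_le_of_ne hd2 (Ne.symm hd2ne)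
  refine ⟨hd0ne, hd2ne, ?_⟩
  -- key identity: d0 * R0 = alpha2 * lambda1 - d2 * alpha1^2
  have ha1ne : c1 * d0 - c0 * d1 ≠ 0 := by
    intro h
    have h2 : d1 * (c1 * d0 - c0 * d1) = 0 := by rw [h]; ring
    have h3 : (c1 * d0 - c0 * d1) * (c2 * d1 - c1 * d2) = 0 := by rw [h]; ring
    have ha2le : c2 * d0 - c0 * d2 ≤ 0 := by nlinarith
    have h0 : c2 * d0 - c0 * d2 = 0 := le_antisymm ha2le ha2
    have hsq : (c2 * d0 - c0 * d2) ^ 2 = 0 := by rw [h0]; ring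
    linarith
  -- if alpha1 < 0 then d1*alpha1 ≥ d0*alpha2 ≥ 0 forces d1 = 0, then alpha1 = c1*d0 ≥ 0
  rcases lt_or_gt_of_ne ha1ne with h | h
  · exfalso
    have hd1a1 : 0 ≤ d1 * (c1 * d0 - c0 * d1) := by nlinarith [mul_nonneg hd0 ha2]
    have hd10 : d1 = 0 := by nlinarith [mul_nonneg hd1 (le_of_lt (neg_pos.mpr h))]
    nlinarith [mul_nonneg hc1 hd0]
  · exact h

/-- Backward helper: from (QA1) with `d0 > 0` and `R0 < 0`, all signs are nonnegative. -/
lemma stmt_0_bwd (c0 c1 c2 d0 d1 d2 : ℝ)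
    (hd0 : 0 < d0)
    (hc0d0 : 0 ≤ c0 * d0)
    (hd2l : 0 ≤ d2 * (d1 * (c1 * d0 - c0 * d1) - d0 * (c2 * d0 - c0 * d2)))
    (ha2dd : 0 ≤ (c2 * d0 - c0 * d2) * d0 * d2)
    (hd2ne : d2 ≠ 0)
    (ha1 : 0 < c1 * d0 - c0 * d1)
    (hR : (c1 * d0 - c0 * d1) * (c2 * d1 - c1 * d2) - (c2 * d0 - c0 * d2) ^ 2 < 0) :
    0 ≤ c0 ∧ 0 ≤ c1 ∧ 0 ≤ c2 ∧ 0 ≤ d1 ∧ 0 ≤ d2 ∧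
      0 ≤ d1 * (c1 * d0 - c0 * d1) - d0 * (c2 * d0 - c0 * d2) ∧
      0 ≤ c2 * d0 - c0 * d2 := by
  -- key identity: d0 * R0 = alpha2 * lambda1 - d2 * alpha1^2
  have hkey : (c2 * d0 - c0 * d2) * (d1 * (c1 * d0 - c0 * d1) - d0 * (c2 * d0 - c0 * d2))
      - d2 * (c1 * d0 - c0 * d1) ^ 2 < 0 := by nlinarith [mul_pos hd0 (neg_pos.mpr hR)]
  have hd2pos : 0 < d2 := by
    rcases lt_or_gt_of_ne hd2ne with h | h
    · exfalso
      have ha2 : c2 * d0 - c0 * d2 ≤ 0 := by nlinarith [mul_pos hd0 (neg_pos.mpr h)]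
      have hl : d1 * (c1 * d0 - c0 * d1) - d0 * (c2 * d0 - c0 * d2) ≤ 0 := by nlinarith
      nlinarith [mul_nonneg (neg_nonneg.mpr ha2) (neg_nonneg.mpr hl),
        mul_pos (neg_pos.mpr h) (mul_pos ha1 ha1)]
    · exact h
  have hl : 0 ≤ d1 * (c1 * d0 - c0 * d1) - d0 * (c2 * d0 - c0 * d2) := by
    nlinarith
  have ha2 : 0 ≤ c2 * d0 - c0 * d2 := by nlinarith [mul_pos hd0 hd2pos]
  have hc0 : 0 ≤ c0 := by nlinarith
  have hd1 : 0 ≤ d1 := by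
    have h1 : 0 ≤ d1 * (c1 * d0 - c0 * d1) := by nlinarith [mul_nonneg (le_of_lt hd0) ha2]
    nlinarith
  have hc1 : 0 ≤ c1 := by nlinarith [mul_nonneg (mul_nonneg hc0 hd1) (le_of_lt hd0)]
  have hc2 : 0 ≤ c2 := by nlinarith [mul_nonneg (mul_nonneg hc0 (le_of_lt hd2pos)) (le_of_lt hd0)]
  exact ⟨hc0, hc1, hc2, hd1, le_of_lt hd2pos, hl, ha2⟩

/-- with `R0 < 0`, condition (Q1) holds iff condition (QA1) holds. -/
theorem stmt_0 (c0 c1 c2 d0 d1 d2 : ℝ)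
    (alpha1 alpha2 alpha3 lambda1 R0 : ℝ)
    (halpha1 : alpha1 = c1 * d0 - c0 * d1)
    (halpha2 : alpha2 = c2 * d0 - c0 * d2)
    (halpha3 : alpha3 = c2 * d1 - c1 * d2)
    (hlambda1 : lambda1 = d1 * alpha1 - d0 * alpha2)
    (hR0 : R0 = alpha1 * alpha3 - alpha2 ^ 2)
    (hR0neg : R0 < 0) :
    -- (Q1)
    ((((0 ≤ c0 ∧ 0 ≤ c1 ∧ 0 ≤ c2 ∧ 0 ≤ d0 ∧ 0 ≤ d1 ∧ 0 ≤ d2 ∧ 0 ≤ lambda1) ∨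
       (c0 ≤ 0 ∧ c1 ≤ 0 ∧ c2 ≤ 0 ∧ d0 ≤ 0 ∧ d1 ≤ 0 ∧ d2 ≤ 0 ∧ lambda1 ≤ 0)) ∧
      0 ≤ alpha2)
    ↔
    -- (QA1)
    (0 ≤ c0 * d0 ∧ 0 ≤ d2 * lambda1 ∧ 0 ≤ alpha2 * d0 * d2 ∧
      d0 ≠ 0 ∧ d2 ≠ 0 ∧ 0 < alpha1)) := by
  subst halpha1 halpha2 halpha3 hlambda1 hR0
  constructor
  · rintro ⟨h | h, ha2⟩
    · obtain ⟨hc0, hc1, hc2, hd0, hd1, hd2, hl⟩ := h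
      obtain ⟨h1, h2, h3⟩ := stmt_0_fwd c0 c1 c2 d0 d1 d2 hc0 hc1 hc2 hd0 hd1 hd2 hl ha2 hR0neg
      exact ⟨mul_nonneg hc0 hd0, mul_nonneg hd2 hl,
        mul_nonneg (mul_nonneg ha2 hd0) hd2, h1, h2, h3⟩
    · obtain ⟨hc0, hc1, hc2, hd0, hd1, hd2, hl⟩ := h
      have hc0' : (0:ℝ) ≤ -c0 := by linarith
      have hc1' : (0:ℝ) ≤ -c1 := by linarith
      have hc2' : (0:ℝ) ≤ -c2 := by linarith
      have hd0' : (0:ℝ) ≤ -d0 := by linarith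
      have hd1' : (0:ℝ) ≤ -d1 := by linarith
      have hd2' : (0:ℝ) ≤ -d2 := by linarith
      have hl' : 0 ≤ (-d1) * ((-c1) * (-d0) - (-c0) * (-d1))
          - (-d0) * ((-c2) * (-d0) - (-c0) * (-d2)) := by nlinarith
      have ha2' : 0 ≤ (-c2) * (-d0) - (-c0) * (-d2) := by nlinarith
      have hR' : ((-c1) * (-d0) - (-c0) * (-d1)) * ((-c2) * (-d1) - (-c1) * (-d2))
          - ((-c2) * (-d0) - (-c0) * (-d2)) ^ 2 < 0 := by nlinarith
      obtain ⟨h1, h2, h3⟩ := stmt_0_fwd (-c0) (-c1) (-c2) (-d0) (-d1) (-d2)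
        hc0' hc1' hc2' hd0' hd1' hd2' hl' ha2' hR'
      refine ⟨by nlinarith, by nlinarith, ?_, fun h => h1 (by rw [h]; ring), fun h => h2 (by rw [h]; ring), by nlinarith⟩
      have hd0d2 : 0 ≤ d0 * d2 := by nlinarith
      nlinarith [mul_nonneg ha2 hd0d2]
  · rintro ⟨hc0d0, hd2l, ha2dd, hd0ne, hd2ne, ha1⟩
    rcases lt_or_gt_of_ne hd0ne with h | h
    · -- d0 < 0 : apply bwd to negated variables
      have hd0' : (0:ℝ) < -d0 := by linarith
      have hc0d0' : 0 ≤ (-c0) * (-d0) := by nlinarith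
      have hd2l' : 0 ≤ (-d2) * ((-d1) * ((-c1) * (-d0) - (-c0) * (-d1))
          - (-d0) * ((-c2) * (-d0) - (-c0) * (-d2))) := by nlinarith
      have ha2dd' : 0 ≤ ((-c2) * (-d0) - (-c0) * (-d2)) * (-d0) * (-d2) := by nlinarith
      have hd2ne' : (-d2 : ℝ) ≠ 0 := by simpa using hd2ne
      have ha1' : 0 < (-c1) * (-d0) - (-c0) * (-d1) := by nlinarith
      have hR' : ((-c1) * (-d0) - (-c0) * (-d1)) * ((-c2) * (-d1) - (-c1) * (-d2))
          - ((-c2) * (-d0) - (-c0) * (-d2)) ^ 2 < 0 := by nlinarith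
      obtain ⟨h1, h2, h3, h4, h5, h6, h7⟩ :=
        stmt_0_bwd (-c0) (-c1) (-c2) (-d0) (-d1) (-d2) hd0' hc0d0' hd2l' ha2dd' hd2ne' ha1' hR'
      constructor
      · right
        refine ⟨by linarith, by linarith, by linarith, le_of_lt h, by linarith, by linarith, by nlinarith⟩
      · nlinarith
    · obtain ⟨h1, h2, h3, h4, h5, h6, h7⟩ :=
        stmt_0_bwd c0 c1 c2 d0 d1 d2 h hc0d0 hd2l ha2dd hd2ne ha1 hR0neg
      exact ⟨Or.inl ⟨h1, h2, h3, le_of_lt h, h4, h5, h6⟩, h7⟩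
end

section
/- Suppose R0 < 0. Then condition (Q2) holds if and only if condition (QA4) holds. -/
/-- Forward direction, nonnegative case. -/
private lemma fwd_pos (c0 c1 c2 d0 d1 d2 : ℝ)
    (h0 : 0 ≤ c0) (h1 : 0 ≤ c1) (h2 : 0 ≤ c2) (h3 : 0 ≤ d0) (h4 : 0 ≤ d1) (h5 : 0 ≤ d2)
    (hl2 : 0 ≤ c1 * (c2*d1 - c1*d2) - c2 * (c2*d0 - c0*d2))
    (ha2 : 0 ≤ c2*d0 - c0*d2)
    (hR0 : (c1*d0 - c0*d1) * (c2*d1 - c1*d2) - (c2*d0 - c0*d2)^2 < 0) :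
    c0 ≠ 0 ∧ c2 ≠ 0 ∧ 0 < c2*d1 - c1*d2 := by
  have ha3 : 0 < c2*d1 - c1*d2 := by
    nlinarith [mul_nonneg h1 h5, mul_nonneg h2 h4, mul_nonneg h0 h4, mul_nonneg h1 h3,
      mul_nonneg (mul_nonneg h0 h4) (mul_nonneg h2 h4), sq_nonneg (c2*d0 - c0*d2),
      mul_nonneg h0 h5, mul_nonneg h2 h3, mul_nonneg (mul_nonneg h1 h3) (mul_nonneg h1 h5)]
  refine ⟨?_, ?_, ha3⟩
  · intro hc0
    subst hc0
    nlinarith [mul_nonneg h3 hl2]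
  · intro hc2
    subst hc2
    nlinarith [mul_nonneg h1 h5]

/-- Backward direction, case `0 < c2`. -/
private lemma bwd_pos (c0 c1 c2 d0 d1 d2 : ℝ)
    (hc2 : 0 < c2) (hd2 : 0 ≤ c2 * d2) (hc0 : c0 ≠ 0)
    (ha3 : 0 < c2*d1 - c1*d2)
    (ha2c : 0 ≤ (c2*d0 - c0*d2) * c0 * c2)
    (hl2c : 0 ≤ c0 * (c1*(c2*d1 - c1*d2) - c2*(c2*d0 - c0*d2)))
    (hR0 : (c1*d0 - c0*d1) * (c2*d1 - c1*d2) - (c2*d0 - c0*d2)^2 < 0) :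
    0 ≤ c0 ∧ 0 ≤ c1 ∧ 0 ≤ d0 ∧ 0 ≤ d1 ∧
      0 ≤ c1*(c2*d1 - c1*d2) - c2*(c2*d0 - c0*d2) ∧ 0 ≤ c2*d0 - c0*d2 := by
  have hd2' : 0 ≤ d2 := nonneg_of_mul_nonneg_right hd2 hc2
  rcases hc0.lt_or_gt with hneg | hpos
  · -- c0 < 0 : contradiction
    exfalso
    have ha2 : c2*d0 - c0*d2 ≤ 0 := by
      nlinarith [mul_pos (neg_pos.2 hneg) hc2]
    have hl2 : c1*(c2*d1 - c1*d2) - c2*(c2*d0 - c0*d2) ≤ 0 := by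
      nlinarith
    have hc1 : c1 ≤ 0 := by
      nlinarith [mul_nonneg (neg_nonneg.2 ha2) hc2.le]
    have hd0 : d0 ≤ 0 := by
      nlinarith [mul_nonneg (neg_nonneg.2 hneg.le) hd2']
    nlinarith [sq_nonneg (c2*d0 - c0*d2), sq_nonneg (c2*d1 - c1*d2), sq_nonneg (c1*d0-c0*d1),
      mul_pos hc2 ha3, sq_nonneg (c2*d0 + c0*d2), sq_nonneg (c1*d2 + c2*d1),
      mul_nonneg hd2' hc2.le, mul_nonneg (neg_nonneg.2 hc1) (neg_nonneg.2 hd0),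
      sq_nonneg (c0*d1 - c1*d0 + c2*d0 - c0*d2), mul_pos (neg_pos.2 hneg) hc2,
      sq_nonneg (c1*d1 - 2*c2*d0), sq_nonneg (c1*d1 - 2*c0*d2), sq_nonneg d1, sq_nonneg c1]
  · -- c0 > 0
    have ha2 : 0 ≤ c2*d0 - c0*d2 := by
      nlinarith [mul_pos hpos hc2]
    have hl2 : 0 ≤ c1*(c2*d1 - c1*d2) - c2*(c2*d0 - c0*d2) := by
      nlinarith
    have hc1 : 0 ≤ c1 := by
      by_contra h
      push_neg at h
      nlinarith [mul_pos ha3 (neg_pos.2 h), mul_nonneg hc2.le ha2]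
    have hd0 : 0 ≤ d0 := by
      nlinarith [mul_nonneg hpos.le hd2']
    have hd1 : 0 ≤ d1 := by
      nlinarith [mul_nonneg hc1 hd2']
    exact ⟨hpos.le, hc1, hd0, hd1, hl2, ha2⟩

/-- with `R0 < 0`, condition (Q2) holds iff condition (QA4) holds. -/
theorem stmt_1 (c0 c1 c2 d0 d1 d2 : ℝ)
    (alpha1 alpha2 alpha3 lambda2 R0 : ℝ)
    (halpha1 : alpha1 = c1 * d0 - c0 * d1)
    (halpha2 : alpha2 = c2 * d0 - c0 * d2)
    (halpha3 : alpha3 = c2 * d1 - c1 * d2)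
    (hlambda2 : lambda2 = c1 * alpha3 - c2 * alpha2)
    (hR0 : R0 = alpha1 * alpha3 - alpha2 ^ 2)
    (hR0neg : R0 < 0) :
    -- (Q2)
    ((((0 ≤ c0 ∧ 0 ≤ c1 ∧ 0 ≤ c2 ∧ 0 ≤ d0 ∧ 0 ≤ d1 ∧ 0 ≤ d2 ∧ 0 ≤ lambda2) ∨
       (c0 ≤ 0 ∧ c1 ≤ 0 ∧ c2 ≤ 0 ∧ d0 ≤ 0 ∧ d1 ≤ 0 ∧ d2 ≤ 0 ∧ lambda2 ≤ 0)) ∧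
      0 ≤ alpha2)
    ↔
    -- (QA4)
    (0 ≤ c2 * d2 ∧ 0 ≤ c0 * lambda2 ∧ 0 ≤ alpha2 * c0 * c2 ∧
      c0 ≠ 0 ∧ c2 ≠ 0 ∧ 0 < alpha3)) := by
  subst halpha1 halpha2 halpha3 hlambda2 hR0
  constructor
  · rintro ⟨h | h, ha2⟩
    · obtain ⟨h0, h1, h2, h3, h4, h5, hl2⟩ := h
      obtain ⟨hc0, hc2, ha3⟩ := fwd_pos c0 c1 c2 d0 d1 d2 h0 h1 h2 h3 h4 h5 hl2 ha2 hR0neg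
      exact ⟨mul_nonneg h2 h5, mul_nonneg h0 hl2,
        mul_nonneg (mul_nonneg ha2 h0) h2, hc0, hc2, ha3⟩
    · obtain ⟨h0, h1, h2, h3, h4, h5, hl2⟩ := h
      have key := fwd_pos (-c0) (-c1) (-c2) (-d0) (-d1) (-d2)
        (by linarith) (by linarith) (by linarith) (by linarith) (by linarith) (by linarith)
        (by ring_nf; ring_nf at hl2; linarith) (by ring_nf; ring_nf at ha2; linarith)
        (by ring_nf; ring_nf at hR0neg; linarith)
      obtain ⟨hc0, hc2, ha3⟩ := key
      refine ⟨by nlinarith [mul_nonneg (neg_nonneg.2 h2) (neg_nonneg.2 h5)],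
        by nlinarith [mul_nonneg (neg_nonneg.2 h0) (neg_nonneg.2 hl2)],
        by nlinarith [mul_nonneg ha2 (mul_nonneg (neg_nonneg.2 h0) (neg_nonneg.2 h2))], ?_, ?_,
        by nlinarith⟩
      · intro h; exact hc0 (by rw [h]; ring)
      · intro h; exact hc2 (by rw [h]; ring)
  · rintro ⟨hcd2, hcl2, hacc, hc0, hc2, ha3⟩
    rcases hc2.lt_or_gt with hc2n | hc2p
    · -- c2 < 0 : use bwd_pos on negated variables
      have key := bwd_pos (-c0) (-c1) (-c2) (-d0) (-d1) (-d2)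
        (by linarith) (by ring_nf; ring_nf at hcd2; linarith)
        (by simpa using hc0)
        (by ring_nf; ring_nf at ha3; linarith)
        (by ring_nf; ring_nf at hacc; linarith)
        (by ring_nf; ring_nf at hcl2; linarith)
        (by ring_nf; ring_nf at hR0neg; linarith)
      obtain ⟨k0, k1, k3, k4, kl2, ka2⟩ := key
      have hd2 : d2 ≤ 0 := by
        by_contra h
        push_neg at h
        nlinarith
      refine ⟨Or.inr ⟨by linarith, by linarith, hc2n.le, by linarith, by linarith, hd2,
        by nlinarith⟩, by nlinarith⟩
    · have key := bwd_pos c0 c1 c2 d0 d1 d2 hc2p hcd2 hc0 ha3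
        (by nlinarith) (by nlinarith) hR0neg
      obtain ⟨k0, k1, k3, k4, kl2, ka2⟩ := key
      have hd2 : 0 ≤ d2 := nonneg_of_mul_nonneg_right hcd2 hc2p
      exact ⟨Or.inl ⟨k0, k1, hc2p.le, k3, k4, hd2, kl2⟩, ka2⟩
end

section
/- Suppose R0 > 0. Then conditions (Q3), (Q4) and (QA5) are all equivalent (each holds if and only if each of the others holds). -/
/-- Positive-branch lemma for (Q3): the sign conditions of Q3 force
`a3 < 0`, `0 < d2`, `0 < l3`. -/
lemma lemA (c0 c1 c2 d0 d1 d2 a1 a2 a3 l3 R0 : ℝ)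
    (h1 : a1 = c1 * d0 - c0 * d1) (h2 : a2 = c2 * d0 - c0 * d2)
    (h3 : a3 = c2 * d1 - c1 * d2) (hl3 : l3 = d2 * a2 - d1 * a3)
    (hR : R0 = a1 * a3 - a2 ^ 2) (hRpos : 0 < R0)
    (hc0 : 0 ≤ c0) (hc1 : 0 ≤ c1) (hc2 : 0 ≤ c2)
    (hd0 : 0 ≤ d0) (hd1 : 0 ≤ d1) (hd2 : 0 ≤ d2)
    (hl3n : 0 ≤ l3) (ha2 : a2 ≤ 0) :
    a3 < 0 ∧ 0 < d2 ∧ 0 < l3 := by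
  have h13 : 0 < a1 * a3 := by nlinarith [sq_nonneg a2]
  have ha3 : a3 < 0 := by
    by_contra h
    push_neg at h
    have ha3ne : a3 ≠ 0 := by
      intro h0; rw [h0, mul_zero] at h13; exact lt_irrefl 0 h13
    have ha3pos : 0 < a3 := lt_of_le_of_ne h (Ne.symm ha3ne)
    have hd2a2 : d2 * a2 ≤ 0 := mul_nonpos_of_nonneg_of_nonpos hd2 ha2
    have hd1a3 : d1 * a3 ≤ 0 := by linarith [hl3n, hl3.symm ▸ hl3n]
    have hd1z : d1 ≤ 0 := by
      by_contra h'
      push_neg at h'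
      exact absurd hd1a3 (not_le.mpr (mul_pos h' ha3pos))
    have hd1e : d1 = 0 := le_antisymm hd1z hd1
    rw [hd1e] at h3
    nlinarith [mul_nonneg hc1 hd2]
  have ha1 : a1 < 0 := by nlinarith
  have hd2p : 0 < d2 := by
    rcases hd2.lt_or_eq with h | h
    · exact h
    · exfalso; rw [← h] at h3; nlinarith [mul_nonneg hc2 hd1]
  have I1 : d2 * R0 + l3 * a2 + d0 * a3 ^ 2 = 0 := by
    rw [hR, hl3, h1, h2, h3]; ring
  have ha2s : a2 < 0 := by
    rcases ha2.lt_or_eq with h | h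
    · exact h
    · exfalso; rw [h] at I1
      nlinarith [mul_pos hd2p hRpos, mul_nonneg hd0 (sq_nonneg a3)]
  have hl3p : 0 < l3 := by
    rcases hl3n.lt_or_eq with h | h
    · exact h
    · exfalso; rw [← h] at I1
      nlinarith [mul_pos hd2p hRpos, mul_nonneg hd0 (sq_nonneg a3)]
  exact ⟨ha3, hd2p, hl3p⟩

/-- Positive-branch lemma for (Q4): the sign conditions of Q4 force
`a3 < 0`, `0 < d2`, `0 < l3`. -/
lemma lemC (c0 c1 c2 d0 d1 d2 a1 a2 a3 l3 l4 R0 : ℝ)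
    (h1 : a1 = c1 * d0 - c0 * d1) (h2 : a2 = c2 * d0 - c0 * d2)
    (h3 : a3 = c2 * d1 - c1 * d2) (hl3 : l3 = d2 * a2 - d1 * a3)
    (hl4 : l4 = c0 * a2 - c1 * a1)
    (hR : R0 = a1 * a3 - a2 ^ 2) (hRpos : 0 < R0)
    (hc0 : 0 ≤ c0) (hc1 : 0 ≤ c1) (hc2 : 0 ≤ c2)
    (hd0 : 0 ≤ d0) (hd1 : 0 ≤ d1) (hd2 : 0 ≤ d2)
    (hl4n : 0 ≤ l4) (ha2 : a2 ≤ 0) :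
    a3 < 0 ∧ 0 < d2 ∧ 0 < l3 := by
  have h13 : 0 < a1 * a3 := by nlinarith [sq_nonneg a2]
  have ha3 : a3 < 0 := by
    by_contra h
    push_neg at h
    have ha3ne : a3 ≠ 0 := by
      intro h0; rw [h0, mul_zero] at h13; exact lt_irrefl 0 h13
    have ha3pos : 0 < a3 := lt_of_le_of_ne h (Ne.symm ha3ne)
    have ha1pos : 0 < a1 := by
      rcases mul_pos_iff.mp h13 with ⟨hp, _⟩ | ⟨_, hn⟩
      · exact hp
      · linarith
    have hc0a2 : c0 * a2 ≤ 0 := mul_nonpos_of_nonneg_of_nonpos hc0 ha2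
    have hc1a1 : c1 * a1 ≤ 0 := by linarith [hl4.symm ▸ hl4n]
    have hc1z : c1 ≤ 0 := by
      by_contra h'
      push_neg at h'
      exact absurd hc1a1 (not_le.mpr (mul_pos h' ha1pos))
    have hc1e : c1 = 0 := le_antisymm hc1z hc1
    rw [hc1e] at h1
    nlinarith [mul_nonneg hc0 hd1]
  have ha1 : a1 < 0 := by nlinarith
  have hd2p : 0 < d2 := by
    rcases hd2.lt_or_eq with h | h
    · exact h
    · exfalso; rw [← h] at h3; nlinarith [mul_nonneg hc2 hd1]
  have I1 : d2 * R0 + l3 * a2 + d0 * a3 ^ 2 = 0 := by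
    rw [hR, hl3, h1, h2, h3]; ring
  have ha2s : a2 < 0 := by
    rcases ha2.lt_or_eq with h | h
    · exact h
    · exfalso; rw [h] at I1
      nlinarith [mul_pos hd2p hRpos, mul_nonneg hd0 (sq_nonneg a3)]
  have hl3p : 0 < l3 := by
    by_contra h
    push_neg at h
    nlinarith [mul_nonneg (neg_nonneg.mpr h) (neg_nonneg.mpr ha2s.le),
      mul_pos hd2p hRpos, mul_nonneg hd0 (sq_nonneg a3)]
  exact ⟨ha3, hd2p, hl3p⟩

/-- Positive-branch lemma for (QA5): its sign conditions force all the
remaining signs needed for (Q3) and (Q4). -/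
lemma lemB (c0 c1 c2 d0 d1 d2 a1 a2 a3 l3 l4 R0 : ℝ)
    (h1 : a1 = c1 * d0 - c0 * d1) (h2 : a2 = c2 * d0 - c0 * d2)
    (h3 : a3 = c2 * d1 - c1 * d2) (hl3 : l3 = d2 * a2 - d1 * a3)
    (hl4 : l4 = c0 * a2 - c1 * a1)
    (hR : R0 = a1 * a3 - a2 ^ 2) (hRpos : 0 < R0)
    (hc2 : 0 ≤ c2) (hd0 : 0 ≤ d0) (hd2 : 0 ≤ d2) (hl3n : 0 ≤ l3)
    (hd2ne : d2 ≠ 0) (hl3ne : l3 ≠ 0) (ha3 : a3 < 0) :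
    0 < c0 ∧ 0 < c1 ∧ 0 < d1 ∧ a2 < 0 ∧ 0 < l4 := by
  have hd2p : 0 < d2 := lt_of_le_of_ne hd2 (Ne.symm hd2ne)
  have hl3p : 0 < l3 := lt_of_le_of_ne hl3n (Ne.symm hl3ne)
  have ha1 : a1 < 0 := by nlinarith [sq_nonneg a2]
  have I1 : d2 * R0 + l3 * a2 + d0 * a3 ^ 2 = 0 := by
    rw [hR, hl3, h1, h2, h3]; ring
  have ha2s : a2 < 0 := by
    by_contra h
    push_neg at h
    nlinarith [mul_nonneg hl3p.le h, mul_pos hd2p hRpos,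
      mul_nonneg hd0 (sq_nonneg a3)]
  have hd1p : 0 < d1 := by
    by_contra h
    push_neg at h
    have h0 : 0 ≤ d1 * a3 := by
      nlinarith [mul_nonneg (neg_nonneg.mpr h) (neg_nonneg.mpr ha3.le)]
    nlinarith [mul_pos hd2p (neg_pos.mpr ha2s)]
  have hc0p : 0 < c0 := by
    by_contra h
    push_neg at h
    have h0 : c0 * d2 ≤ 0 := mul_nonpos_of_nonpos_of_nonneg h hd2p.le
    nlinarith [mul_nonneg hc2 hd0]
  have hc1p : 0 < c1 := by
    by_contra h
    push_neg at h
    have h0 : c1 * d2 ≤ 0 := mul_nonpos_of_nonpos_of_nonneg h hd2p.le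
    nlinarith [mul_nonneg hc2 hd1p.le]
  have I4 : c0 * R0 + l4 * a2 + c2 * a1 ^ 2 = 0 := by
    rw [hR, hl4, h1, h2, h3]; ring
  have hl4p : 0 < l4 := by
    by_contra h
    push_neg at h
    nlinarith [mul_nonneg (neg_nonneg.mpr h) (neg_nonneg.mpr ha2s.le),
      mul_pos hc0p hRpos, mul_nonneg hc2 (sq_nonneg a1)]
  exact ⟨hc0p, hc1p, hd1p, ha2s, hl4p⟩

/-- with `R0 > 0`, conditions (Q3), (Q4) and (QA5) are all equivalent. -/
theorem stmt_4 (c0 c1 c2 d0 d1 d2 : ℝ)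
    (alpha1 alpha2 alpha3 lambda2 lambda3 lambda4 R0 : ℝ)
    (halpha1 : alpha1 = c1 * d0 - c0 * d1)
    (halpha2 : alpha2 = c2 * d0 - c0 * d2)
    (halpha3 : alpha3 = c2 * d1 - c1 * d2)
    (hlambda2 : lambda2 = c1 * alpha3 - c2 * alpha2)
    (hlambda3 : lambda3 = d2 * alpha2 - d1 * alpha3)
    (hlambda4 : lambda4 = c0 * alpha2 - c1 * alpha1)
    (hR0 : R0 = alpha1 * alpha3 - alpha2 ^ 2)
    (hR0pos : 0 < R0)
    (Q3 Q4 QA5 : Prop)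
    (hQ3 : Q3 ↔
      (((0 ≤ c0 ∧ 0 ≤ c1 ∧ 0 ≤ c2 ∧ 0 ≤ d0 ∧ 0 ≤ d1 ∧ 0 ≤ d2 ∧ 0 ≤ lambda3) ∨
        (c0 ≤ 0 ∧ c1 ≤ 0 ∧ c2 ≤ 0 ∧ d0 ≤ 0 ∧ d1 ≤ 0 ∧ d2 ≤ 0 ∧ lambda3 ≤ 0)) ∧
       alpha2 ≤ 0))
    (hQ4 : Q4 ↔
      (((0 ≤ c0 ∧ 0 ≤ c1 ∧ 0 ≤ c2 ∧ 0 ≤ d0 ∧ 0 ≤ d1 ∧ 0 ≤ d2 ∧ 0 ≤ lambda4) ∨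
        (c0 ≤ 0 ∧ c1 ≤ 0 ∧ c2 ≤ 0 ∧ d0 ≤ 0 ∧ d1 ≤ 0 ∧ d2 ≤ 0 ∧ lambda4 ≤ 0)) ∧
       alpha2 ≤ 0))
    (hQA5 : QA5 ↔
      (((0 ≤ c2 ∧ 0 ≤ d0 ∧ 0 ≤ d2 ∧ 0 ≤ lambda3) ∨
        (c2 ≤ 0 ∧ d0 ≤ 0 ∧ d2 ≤ 0 ∧ lambda3 ≤ 0)) ∧
       d2 ≠ 0 ∧ lambda3 ≠ 0 ∧ alpha3 < 0)) :
    (Q3 ↔ Q4) ∧ (Q4 ↔ QA5) ∧ (Q3 ↔ QA5) := by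
  -- negated-variable versions of the defining identities
  have n1 : alpha1 = (-c1) * (-d0) - (-c0) * (-d1) := by rw [halpha1]; ring
  have n2 : alpha2 = (-c2) * (-d0) - (-c0) * (-d2) := by rw [halpha2]; ring
  have n3 : alpha3 = (-c2) * (-d1) - (-c1) * (-d2) := by rw [halpha3]; ring
  have nl3 : -lambda3 = (-d2) * alpha2 - (-d1) * alpha3 := by rw [hlambda3]; ring
  have nl4 : -lambda4 = (-c0) * alpha2 - (-c1) * alpha1 := by rw [hlambda4]; ring
  have h3A5 : Q3 ↔ QA5 := by
    rw [hQ3, hQA5]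
    constructor
    · rintro ⟨hb | hb, ha2⟩
      · obtain ⟨hc0, hc1, hc2, hd0, hd1, hd2, hl3⟩ := hb
        obtain ⟨ha3, hd2p, hl3p⟩ := lemA c0 c1 c2 d0 d1 d2 alpha1 alpha2 alpha3
          lambda3 R0 halpha1 halpha2 halpha3 hlambda3 hR0 hR0pos
          hc0 hc1 hc2 hd0 hd1 hd2 hl3 ha2
        exact ⟨Or.inl ⟨hc2, hd0, hd2, hl3⟩, ne_of_gt hd2p, ne_of_gt hl3p, ha3⟩
      · obtain ⟨hc0, hc1, hc2, hd0, hd1, hd2, hl3⟩ := hb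
        obtain ⟨ha3, hd2p, hl3p⟩ := lemA (-c0) (-c1) (-c2) (-d0) (-d1) (-d2)
          alpha1 alpha2 alpha3 (-lambda3) R0 n1 n2 n3 nl3 hR0 hR0pos
          (by linarith) (by linarith) (by linarith) (by linarith) (by linarith)
          (by linarith) (by linarith) ha2
        exact ⟨Or.inr ⟨hc2, hd0, hd2, hl3⟩, by intro h; rw [h] at hd2p; simp at hd2p,
          by intro h; rw [h] at hl3p; simp at hl3p, ha3⟩
    · rintro ⟨hb | hb, hd2ne, hl3ne, ha3⟩
      · obtain ⟨hc2, hd0, hd2, hl3⟩ := hb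
        obtain ⟨hc0p, hc1p, hd1p, ha2s, _⟩ := lemB c0 c1 c2 d0 d1 d2 alpha1 alpha2
          alpha3 lambda3 lambda4 R0 halpha1 halpha2 halpha3 hlambda3 hlambda4 hR0
          hR0pos hc2 hd0 hd2 hl3 hd2ne hl3ne ha3
        exact ⟨Or.inl ⟨hc0p.le, hc1p.le, hc2, hd0, hd1p.le, hd2, hl3⟩, ha2s.le⟩
      · obtain ⟨hc2, hd0, hd2, hl3⟩ := hb
        obtain ⟨hc0p, hc1p, hd1p, ha2s, _⟩ := lemB (-c0) (-c1) (-c2) (-d0) (-d1)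
          (-d2) alpha1 alpha2 alpha3 (-lambda3) (-lambda4) R0 n1 n2 n3 nl3 nl4 hR0
          hR0pos (by linarith) (by linarith) (by linarith) (by linarith)
          (by simpa using hd2ne) (by simpa using hl3ne) ha3
        exact ⟨Or.inr ⟨by linarith, by linarith, by linarith, by linarith, by linarith,
          by linarith, hl3⟩, ha2s.le⟩
  have h4A5 : Q4 ↔ QA5 := by
    rw [hQ4, hQA5]
    constructor
    · rintro ⟨hb | hb, ha2⟩
      · obtain ⟨hc0, hc1, hc2, hd0, hd1, hd2, hl4⟩ := hb
        obtain ⟨ha3, hd2p, hl3p⟩ := lemC c0 c1 c2 d0 d1 d2 alpha1 alpha2 alpha3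
          lambda3 lambda4 R0 halpha1 halpha2 halpha3 hlambda3 hlambda4 hR0 hR0pos
          hc0 hc1 hc2 hd0 hd1 hd2 hl4 ha2
        exact ⟨Or.inl ⟨hc2, hd0, hd2, hl3p.le⟩, ne_of_gt hd2p, ne_of_gt hl3p, ha3⟩
      · obtain ⟨hc0, hc1, hc2, hd0, hd1, hd2, hl4⟩ := hb
        obtain ⟨ha3, hd2p, hl3p⟩ := lemC (-c0) (-c1) (-c2) (-d0) (-d1) (-d2)
          alpha1 alpha2 alpha3 (-lambda3) (-lambda4) R0 n1 n2 n3 nl3 nl4 hR0 hR0pos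
          (by linarith) (by linarith) (by linarith) (by linarith) (by linarith)
          (by linarith) (by linarith) ha2
        exact ⟨Or.inr ⟨hc2, hd0, hd2, by linarith⟩,
          by intro h; rw [h] at hd2p; simp at hd2p,
          by intro h; rw [h] at hl3p; simp at hl3p, ha3⟩
    · rintro ⟨hb | hb, hd2ne, hl3ne, ha3⟩
      · obtain ⟨hc2, hd0, hd2, hl3⟩ := hb
        obtain ⟨hc0p, hc1p, hd1p, ha2s, hl4p⟩ := lemB c0 c1 c2 d0 d1 d2 alpha1
          alpha2 alpha3 lambda3 lambda4 R0 halpha1 halpha2 halpha3 hlambda3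
          hlambda4 hR0 hR0pos hc2 hd0 hd2 hl3 hd2ne hl3ne ha3
        exact ⟨Or.inl ⟨hc0p.le, hc1p.le, hc2, hd0, hd1p.le, hd2, hl4p.le⟩, ha2s.le⟩
      · obtain ⟨hc2, hd0, hd2, hl3⟩ := hb
        obtain ⟨hc0p, hc1p, hd1p, ha2s, hl4p⟩ := lemB (-c0) (-c1) (-c2) (-d0)
          (-d1) (-d2) alpha1 alpha2 alpha3 (-lambda3) (-lambda4) R0 n1 n2 n3 nl3
          nl4 hR0 hR0pos (by linarith) (by linarith) (by linarith) (by linarith)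
          (by simpa using hd2ne) (by simpa using hl3ne) ha3
        exact ⟨Or.inr ⟨by linarith, by linarith, by linarith, by linarith,
          by linarith, by linarith, by linarith⟩, ha2s.le⟩
  exact ⟨h3A5.trans h4A5.symm, h4A5, h3A5⟩
end

section
/- Suppose R0 > 0. Then conditions (Q1), (Q2) and (QA6) are all equivalent (each holds if and only if each of the others holds). -/
/-- Strong conclusions from the nonnegative branch of (Q1). -/
lemma aux_of_P1 (c0 c1 c2 d0 d1 d2 a1 a2 a3 l1 l2 R0 : ℝ)
    (e1 : a1 = c1 * d0 - c0 * d1) (e2 : a2 = c2 * d0 - c0 * d2)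
    (e3 : a3 = c2 * d1 - c1 * d2)
    (el1 : l1 = d1 * a1 - d0 * a2) (el2 : l2 = c1 * a3 - c2 * a2)
    (eR : R0 = a1 * a3 - a2 ^ 2) (hR0 : 0 < R0)
    (hc0 : 0 ≤ c0) (hc1 : 0 ≤ c1) (hc2 : 0 ≤ c2)
    (hd0 : 0 ≤ d0) (hd1 : 0 ≤ d1) (hd2 : 0 ≤ d2)
    (hl1 : 0 ≤ l1) (ha2 : 0 ≤ a2) :
    0 < c1 ∧ 0 < c2 ∧ 0 < d0 ∧ 0 < d1 ∧ 0 < a1 ∧ 0 < a2 ∧ 0 < a3 ∧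
      0 < l1 ∧ 0 < l2 := by
  have k0 : a2 ^ 2 < a1 * a3 := by linarith
  have key1 : a2 * l1 = d0 * R0 + d2 * a1 ^ 2 := by
    rw [el1, eR, e1, e2, e3]; ring
  have key2 : a2 * l2 = c2 * R0 + c0 * a3 ^ 2 := by
    rw [el2, eR, e1, e2, e3]; ring
  have ha1 : 0 < a1 := by
    by_contra hx
    push_neg at hx
    have hne : a1 ≠ 0 := by
      intro h0
      rw [h0, zero_mul] at k0
      linarith [sq_nonneg a2]
    have ha1n : a1 < 0 := lt_of_le_of_ne hx hne
    have ha3n : a3 < 0 := by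
      by_contra hy
      push_neg at hy
      have := mul_nonpos_of_nonpos_of_nonneg ha1n.le hy
      linarith [sq_nonneg a2]
    have h5 : d1 * a1 = 0 := by
      have hle : d1 * a1 ≤ 0 := mul_nonpos_of_nonneg_of_nonpos hd1 ha1n.le
      have hge : 0 ≤ d1 * a1 := by linarith [mul_nonneg hd0 ha2]
      linarith
    have hd1z : d1 = 0 := by
      rcases mul_eq_zero.mp h5 with h | h
      · exact h
      · exact absurd h hne
    have hprod : a1 * a3 = -(c1 * c1 * (d0 * d2)) := by
      rw [e1, e3, hd1z]; ring
    linarith [mul_nonneg (mul_nonneg hc1 hc1) (mul_nonneg hd0 hd2), sq_nonneg a2]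
  have ha3 : 0 < a3 := by
    by_contra hx
    push_neg at hx
    have := mul_nonpos_of_nonneg_of_nonpos ha1.le hx
    linarith [sq_nonneg a2]
  have hd0p : 0 < d0 := by
    by_contra hx
    push_neg at hx
    have hz : d0 = 0 := le_antisymm hx hd0
    rw [hz, mul_zero, zero_sub] at e1
    linarith [mul_nonneg hc0 hd1]
  have hprodpos : 0 < a2 * l1 := by
    linarith [mul_pos hd0p hR0, mul_nonneg hd2 (sq_nonneg a1)]
  have ha2p : 0 < a2 := by
    by_contra hx
    push_neg at hx
    have h00 : a2 = 0 := le_antisymm hx ha2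
    rw [h00, zero_mul] at hprodpos
    linarith
  have hl1p : 0 < l1 := by
    by_contra hx
    push_neg at hx
    linarith [mul_nonpos_of_nonneg_of_nonpos ha2 hx]
  have hd1p : 0 < d1 := by
    by_contra hx
    push_neg at hx
    linarith [mul_pos hd0p ha2p, mul_nonpos_of_nonpos_of_nonneg hx ha1.le]
  have hc1p : 0 < c1 := by
    by_contra hx
    push_neg at hx
    linarith [mul_nonneg hc0 hd1, mul_nonpos_of_nonpos_of_nonneg hx hd0p.le]
  have hc2p : 0 < c2 := by
    by_contra hx
    push_neg at hx
    linarith [mul_nonneg hc0 hd2, mul_nonpos_of_nonpos_of_nonneg hx hd0p.le]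
  have hl2p : 0 < l2 := by
    by_contra hx
    push_neg at hx
    linarith [mul_pos hc2p hR0, mul_nonneg hc0 (sq_nonneg a3),
      mul_nonpos_of_nonneg_of_nonpos ha2p.le hx]
  exact ⟨hc1p, hc2p, hd0p, hd1p, ha1, ha2p, ha3, hl1p, hl2p⟩

/-- Strong conclusions from the nonnegative branch of (Q2). -/
lemma aux_of_P2 (c0 c1 c2 d0 d1 d2 a1 a2 a3 l1 l2 R0 : ℝ)
    (e1 : a1 = c1 * d0 - c0 * d1) (e2 : a2 = c2 * d0 - c0 * d2)
    (e3 : a3 = c2 * d1 - c1 * d2)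
    (el1 : l1 = d1 * a1 - d0 * a2) (el2 : l2 = c1 * a3 - c2 * a2)
    (eR : R0 = a1 * a3 - a2 ^ 2) (hR0 : 0 < R0)
    (hc0 : 0 ≤ c0) (hc1 : 0 ≤ c1) (hc2 : 0 ≤ c2)
    (hd0 : 0 ≤ d0) (hd1 : 0 ≤ d1) (hd2 : 0 ≤ d2)
    (hl2 : 0 ≤ l2) (ha2 : 0 ≤ a2) :
    0 < c1 ∧ 0 < c2 ∧ 0 < d0 ∧ 0 < d1 ∧ 0 < a1 ∧ 0 < a2 ∧ 0 < a3 ∧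
      0 < l1 ∧ 0 < l2 := by
  have k0 : a2 ^ 2 < a1 * a3 := by linarith
  have key1 : a2 * l1 = d0 * R0 + d2 * a1 ^ 2 := by
    rw [el1, eR, e1, e2, e3]; ring
  have key2 : a2 * l2 = c2 * R0 + c0 * a3 ^ 2 := by
    rw [el2, eR, e1, e2, e3]; ring
  have ha3 : 0 < a3 := by
    by_contra hx
    push_neg at hx
    have hne : a3 ≠ 0 := by
      intro h0
      rw [h0, mul_zero] at k0
      linarith [sq_nonneg a2]
    have ha3n : a3 < 0 := lt_of_le_of_ne hx hne
    have ha1n : a1 < 0 := by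
      by_contra hy
      push_neg at hy
      have := mul_nonpos_of_nonneg_of_nonpos hy ha3n.le
      linarith [sq_nonneg a2]
    have h5 : c1 * a3 = 0 := by
      have hle : c1 * a3 ≤ 0 := mul_nonpos_of_nonneg_of_nonpos hc1 ha3n.le
      have hge : 0 ≤ c1 * a3 := by linarith [mul_nonneg hc2 ha2]
      linarith
    have hc1z : c1 = 0 := by
      rcases mul_eq_zero.mp h5 with h | h
      · exact h
      · exact absurd h hne
    have hprod : a1 * a3 = -(d1 * d1 * (c0 * c2)) := by
      rw [e1, e3, hc1z]; ring
    linarith [mul_nonneg (mul_nonneg hd1 hd1) (mul_nonneg hc0 hc2), sq_nonneg a2]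
  have ha1 : 0 < a1 := by
    by_contra hx
    push_neg at hx
    have := mul_nonpos_of_nonpos_of_nonneg hx ha3.le
    linarith [sq_nonneg a2]
  have hc2p : 0 < c2 := by
    by_contra hx
    push_neg at hx
    have hz : c2 = 0 := le_antisymm hx hc2
    rw [hz, zero_mul, zero_sub] at e3
    linarith [mul_nonneg hc1 hd2]
  have hprodpos : 0 < a2 * l2 := by
    linarith [mul_pos hc2p hR0, mul_nonneg hc0 (sq_nonneg a3)]
  have ha2p : 0 < a2 := by
    by_contra hx
    push_neg at hx
    have h00 : a2 = 0 := le_antisymm hx ha2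
    rw [h00, zero_mul] at hprodpos
    linarith
  have hl2p : 0 < l2 := by
    by_contra hx
    push_neg at hx
    linarith [mul_nonpos_of_nonneg_of_nonpos ha2 hx]
  have hc1p : 0 < c1 := by
    by_contra hx
    push_neg at hx
    linarith [mul_pos hc2p ha2p, mul_nonpos_of_nonpos_of_nonneg hx ha3.le]
  have hd1p : 0 < d1 := by
    by_contra hx
    push_neg at hx
    linarith [mul_nonneg hc1 hd2, mul_nonpos_of_nonneg_of_nonpos hc2p.le hx]
  have hd0p : 0 < d0 := by
    by_contra hx
    push_neg at hx
    linarith [mul_nonneg hc0 hd2, mul_nonpos_of_nonneg_of_nonpos hc2p.le hx]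
  have hl1p : 0 < l1 := by
    by_contra hx
    push_neg at hx
    linarith [mul_pos hd0p hR0, mul_nonneg hd2 (sq_nonneg a1),
      mul_nonpos_of_nonneg_of_nonpos ha2p.le hx]
  exact ⟨hc1p, hc2p, hd0p, hd1p, ha1, ha2p, ha3, hl1p, hl2p⟩

/-- Strong conclusions from the nonnegative branch of (QA6). -/
lemma aux_of_P6 (c0 c1 c2 d0 d1 d2 a1 a2 a3 l1 l2 R0 : ℝ)
    (e1 : a1 = c1 * d0 - c0 * d1) (e2 : a2 = c2 * d0 - c0 * d2)
    (e3 : a3 = c2 * d1 - c1 * d2)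
    (el1 : l1 = d1 * a1 - d0 * a2) (el2 : l2 = c1 * a3 - c2 * a2)
    (eR : R0 = a1 * a3 - a2 ^ 2) (hR0 : 0 < R0)
    (hc0 : 0 ≤ c0) (hd0 : 0 ≤ d0) (hd2 : 0 ≤ d2) (hl1 : 0 ≤ l1)
    (hd0ne : d0 ≠ 0) (hl1ne : l1 ≠ 0) (ha1 : 0 < a1) :
    0 < c1 ∧ 0 < c2 ∧ 0 < d0 ∧ 0 < d1 ∧ 0 < a1 ∧ 0 < a2 ∧ 0 < a3 ∧
      0 < l1 ∧ 0 < l2 := by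
  have k0 : a2 ^ 2 < a1 * a3 := by linarith
  have key1 : a2 * l1 = d0 * R0 + d2 * a1 ^ 2 := by
    rw [el1, eR, e1, e2, e3]; ring
  have key2 : a2 * l2 = c2 * R0 + c0 * a3 ^ 2 := by
    rw [el2, eR, e1, e2, e3]; ring
  have hd0p : 0 < d0 := lt_of_le_of_ne hd0 (Ne.symm hd0ne)
  have hl1p : 0 < l1 := lt_of_le_of_ne hl1 (Ne.symm hl1ne)
  have ha3 : 0 < a3 := by
    by_contra hx
    push_neg at hx
    have := mul_nonpos_of_nonneg_of_nonpos ha1.le hx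
    linarith [sq_nonneg a2]
  have hprodpos : 0 < a2 * l1 := by
    linarith [mul_pos hd0p hR0, mul_nonneg hd2 (sq_nonneg a1)]
  have ha2p : 0 < a2 := by
    by_contra hx
    push_neg at hx
    linarith [mul_nonpos_of_nonpos_of_nonneg hx hl1p.le]
  have hd1p : 0 < d1 := by
    by_contra hx
    push_neg at hx
    linarith [mul_pos hd0p ha2p, mul_nonpos_of_nonpos_of_nonneg hx ha1.le]
  have hc1p : 0 < c1 := by
    by_contra hx
    push_neg at hx
    linarith [mul_nonneg hc0 hd1p.le, mul_nonpos_of_nonpos_of_nonneg hx hd0p.le]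
  have hc2p : 0 < c2 := by
    by_contra hx
    push_neg at hx
    linarith [mul_nonneg hc0 hd2, mul_nonpos_of_nonpos_of_nonneg hx hd0p.le]
  have hl2p : 0 < l2 := by
    by_contra hx
    push_neg at hx
    linarith [mul_pos hc2p hR0, mul_nonneg hc0 (sq_nonneg a3),
      mul_nonpos_of_nonneg_of_nonpos ha2p.le hx]
  exact ⟨hc1p, hc2p, hd0p, hd1p, ha1, ha2p, ha3, hl1p, hl2p⟩

/-- with `R0 > 0`, conditions (Q1), (Q2) and (QA6) are all equivalent. -/
theorem stmt_5 (c0 c1 c2 d0 d1 d2 : ℝ)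
    (alpha1 alpha2 alpha3 lambda1 lambda2 R0 : ℝ)
    (halpha1 : alpha1 = c1 * d0 - c0 * d1)
    (halpha2 : alpha2 = c2 * d0 - c0 * d2)
    (halpha3 : alpha3 = c2 * d1 - c1 * d2)
    (hlambda1 : lambda1 = d1 * alpha1 - d0 * alpha2)
    (hlambda2 : lambda2 = c1 * alpha3 - c2 * alpha2)
    (hR0 : R0 = alpha1 * alpha3 - alpha2 ^ 2)
    (hR0pos : 0 < R0)
    (Q1 Q2 QA6 : Prop)
    (hQ1 : Q1 ↔
      (((0 ≤ c0 ∧ 0 ≤ c1 ∧ 0 ≤ c2 ∧ 0 ≤ d0 ∧ 0 ≤ d1 ∧ 0 ≤ d2 ∧ 0 ≤ lambda1) ∨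
        (c0 ≤ 0 ∧ c1 ≤ 0 ∧ c2 ≤ 0 ∧ d0 ≤ 0 ∧ d1 ≤ 0 ∧ d2 ≤ 0 ∧ lambda1 ≤ 0)) ∧
       0 ≤ alpha2))
    (hQ2 : Q2 ↔
      (((0 ≤ c0 ∧ 0 ≤ c1 ∧ 0 ≤ c2 ∧ 0 ≤ d0 ∧ 0 ≤ d1 ∧ 0 ≤ d2 ∧ 0 ≤ lambda2) ∨
        (c0 ≤ 0 ∧ c1 ≤ 0 ∧ c2 ≤ 0 ∧ d0 ≤ 0 ∧ d1 ≤ 0 ∧ d2 ≤ 0 ∧ lambda2 ≤ 0)) ∧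
       0 ≤ alpha2))
    (hQA6 : QA6 ↔
      (((0 ≤ c0 ∧ 0 ≤ d0 ∧ 0 ≤ d2 ∧ 0 ≤ lambda1) ∨
        (c0 ≤ 0 ∧ d0 ≤ 0 ∧ d2 ≤ 0 ∧ lambda1 ≤ 0)) ∧
       d0 ≠ 0 ∧ lambda1 ≠ 0 ∧ 0 < alpha1)) :
    (Q1 ↔ Q2) ∧ (Q2 ↔ QA6) ∧ (Q1 ↔ QA6) := by
  rw [hQ1, hQ2, hQA6]
  have ne1 : alpha1 = -c1 * -d0 - -c0 * -d1 := by rw [halpha1]; ring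
  have ne2 : alpha2 = -c2 * -d0 - -c0 * -d2 := by rw [halpha2]; ring
  have ne3 : alpha3 = -c2 * -d1 - -c1 * -d2 := by rw [halpha3]; ring
  have nel1 : -lambda1 = -d1 * alpha1 - -d0 * alpha2 := by rw [hlambda1]; ring
  have nel2 : -lambda2 = -c1 * alpha3 - -c2 * alpha2 := by rw [hlambda2]; ring
  have imp12 :
      (((0 ≤ c0 ∧ 0 ≤ c1 ∧ 0 ≤ c2 ∧ 0 ≤ d0 ∧ 0 ≤ d1 ∧ 0 ≤ d2 ∧ 0 ≤ lambda1) ∨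
        (c0 ≤ 0 ∧ c1 ≤ 0 ∧ c2 ≤ 0 ∧ d0 ≤ 0 ∧ d1 ≤ 0 ∧ d2 ≤ 0 ∧ lambda1 ≤ 0)) ∧
       0 ≤ alpha2) →
      (((0 ≤ c0 ∧ 0 ≤ c1 ∧ 0 ≤ c2 ∧ 0 ≤ d0 ∧ 0 ≤ d1 ∧ 0 ≤ d2 ∧ 0 ≤ lambda2) ∨
        (c0 ≤ 0 ∧ c1 ≤ 0 ∧ c2 ≤ 0 ∧ d0 ≤ 0 ∧ d1 ≤ 0 ∧ d2 ≤ 0 ∧ lambda2 ≤ 0)) ∧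
       0 ≤ alpha2) := by
    rintro ⟨⟨h0, h1, h2, h3, h4, h5, h6⟩ | ⟨h0, h1, h2, h3, h4, h5, h6⟩, ha2⟩
    · obtain ⟨s1, s2, s3, s4, s5, s6, s7, s8, s9⟩ :=
        aux_of_P1 c0 c1 c2 d0 d1 d2 alpha1 alpha2 alpha3 lambda1 lambda2 R0
          halpha1 halpha2 halpha3 hlambda1 hlambda2 hR0 hR0pos
          h0 h1 h2 h3 h4 h5 h6 ha2
      exact ⟨Or.inl ⟨h0, h1, h2, h3, h4, h5, s9.le⟩, ha2⟩
    · obtain ⟨s1, s2, s3, s4, s5, s6, s7, s8, s9⟩ :=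
        aux_of_P1 (-c0) (-c1) (-c2) (-d0) (-d1) (-d2) alpha1 alpha2 alpha3
          (-lambda1) (-lambda2) R0 ne1 ne2 ne3 nel1 nel2 hR0 hR0pos
          (by linarith) (by linarith) (by linarith) (by linarith)
          (by linarith) (by linarith) (by linarith) ha2
      exact ⟨Or.inr ⟨h0, h1, h2, h3, h4, h5, by linarith⟩, ha2⟩
  have imp26 :
      (((0 ≤ c0 ∧ 0 ≤ c1 ∧ 0 ≤ c2 ∧ 0 ≤ d0 ∧ 0 ≤ d1 ∧ 0 ≤ d2 ∧ 0 ≤ lambda2) ∨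
        (c0 ≤ 0 ∧ c1 ≤ 0 ∧ c2 ≤ 0 ∧ d0 ≤ 0 ∧ d1 ≤ 0 ∧ d2 ≤ 0 ∧ lambda2 ≤ 0)) ∧
       0 ≤ alpha2) →
      (((0 ≤ c0 ∧ 0 ≤ d0 ∧ 0 ≤ d2 ∧ 0 ≤ lambda1) ∨
        (c0 ≤ 0 ∧ d0 ≤ 0 ∧ d2 ≤ 0 ∧ lambda1 ≤ 0)) ∧
       d0 ≠ 0 ∧ lambda1 ≠ 0 ∧ 0 < alpha1) := by
    rintro ⟨⟨h0, h1, h2, h3, h4, h5, h6⟩ | ⟨h0, h1, h2, h3, h4, h5, h6⟩, ha2⟩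
    · obtain ⟨s1, s2, s3, s4, s5, s6, s7, s8, s9⟩ :=
        aux_of_P2 c0 c1 c2 d0 d1 d2 alpha1 alpha2 alpha3 lambda1 lambda2 R0
          halpha1 halpha2 halpha3 hlambda1 hlambda2 hR0 hR0pos
          h0 h1 h2 h3 h4 h5 h6 ha2
      exact ⟨Or.inl ⟨h0, h3, h5, s8.le⟩, ne_of_gt s3, ne_of_gt s8, s5⟩
    · obtain ⟨s1, s2, s3, s4, s5, s6, s7, s8, s9⟩ :=
        aux_of_P2 (-c0) (-c1) (-c2) (-d0) (-d1) (-d2) alpha1 alpha2 alpha3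
          (-lambda1) (-lambda2) R0 ne1 ne2 ne3 nel1 nel2 hR0 hR0pos
          (by linarith) (by linarith) (by linarith) (by linarith)
          (by linarith) (by linarith) (by linarith) ha2
      refine ⟨Or.inr ⟨h0, h3, h5, by linarith⟩, ?_, ?_, s5⟩
      · intro h; rw [h] at s3; norm_num at s3
      · intro h; rw [h] at s8; norm_num at s8
  have imp61 :
      (((0 ≤ c0 ∧ 0 ≤ d0 ∧ 0 ≤ d2 ∧ 0 ≤ lambda1) ∨
        (c0 ≤ 0 ∧ d0 ≤ 0 ∧ d2 ≤ 0 ∧ lambda1 ≤ 0)) ∧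
       d0 ≠ 0 ∧ lambda1 ≠ 0 ∧ 0 < alpha1) →
      (((0 ≤ c0 ∧ 0 ≤ c1 ∧ 0 ≤ c2 ∧ 0 ≤ d0 ∧ 0 ≤ d1 ∧ 0 ≤ d2 ∧ 0 ≤ lambda1) ∨
        (c0 ≤ 0 ∧ c1 ≤ 0 ∧ c2 ≤ 0 ∧ d0 ≤ 0 ∧ d1 ≤ 0 ∧ d2 ≤ 0 ∧ lambda1 ≤ 0)) ∧
       0 ≤ alpha2) := by
    rintro ⟨⟨h0, h1, h2, h3⟩ | ⟨h0, h1, h2, h3⟩, hd0ne, hl1ne, ha1⟩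
    · obtain ⟨s1, s2, s3, s4, s5, s6, s7, s8, s9⟩ :=
        aux_of_P6 c0 c1 c2 d0 d1 d2 alpha1 alpha2 alpha3 lambda1 lambda2 R0
          halpha1 halpha2 halpha3 hlambda1 hlambda2 hR0 hR0pos
          h0 h1 h2 h3 hd0ne hl1ne ha1
      exact ⟨Or.inl ⟨h0, s1.le, s2.le, h1, s4.le, h2, h3⟩, s6.le⟩
    · obtain ⟨s1, s2, s3, s4, s5, s6, s7, s8, s9⟩ :=
        aux_of_P6 (-c0) (-c1) (-c2) (-d0) (-d1) (-d2) alpha1 alpha2 alpha3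
          (-lambda1) (-lambda2) R0 ne1 ne2 ne3 nel1 nel2 hR0 hR0pos
          (by linarith) (by linarith) (by linarith) (by linarith)
          (by simpa using hd0ne) (by simpa using hl1ne) ha1
      exact ⟨Or.inr ⟨h0, by linarith, by linarith, h1, by linarith, h2, h3⟩,
        s6.le⟩
  exact ⟨⟨imp12, fun h => imp61 (imp26 h)⟩,
    ⟨imp26, fun h => imp12 (imp61 h)⟩,
    ⟨fun h => imp26 (imp12 h), imp61⟩⟩
end

section
/- Suppose R0 > 0. Then condition (QA5) holds if and only if condition (QA7) holds. -/
set_option maxHeartbeats 1000000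


/-- with `R0 > 0`, condition (QA5) holds iff condition (QA7) holds. -/
theorem stmt_6 (c0 c1 c2 d0 d1 d2 : ℝ)
    (alpha1 alpha2 alpha3 lambda3 lambda4 R0 : ℝ)
    (halpha1 : alpha1 = c1 * d0 - c0 * d1)
    (halpha2 : alpha2 = c2 * d0 - c0 * d2)
    (halpha3 : alpha3 = c2 * d1 - c1 * d2)
    (hlambda3 : lambda3 = d2 * alpha2 - d1 * alpha3)
    (hlambda4 : lambda4 = c0 * alpha2 - c1 * alpha1)
    (hR0 : R0 = alpha1 * alpha3 - alpha2 ^ 2)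
    (hR0pos : 0 < R0) :
    -- (QA5)
    ((((0 ≤ c2 ∧ 0 ≤ d0 ∧ 0 ≤ d2 ∧ 0 ≤ lambda3) ∨
       (c2 ≤ 0 ∧ d0 ≤ 0 ∧ d2 ≤ 0 ∧ lambda3 ≤ 0)) ∧
      d2 ≠ 0 ∧ lambda3 ≠ 0 ∧ alpha3 < 0)
    ↔
    -- (QA7)
    (((0 ≤ c0 ∧ 0 ≤ c2 ∧ 0 ≤ d0 ∧ 0 ≤ lambda4) ∨
       (c0 ≤ 0 ∧ c2 ≤ 0 ∧ d0 ≤ 0 ∧ lambda4 ≤ 0)) ∧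
      c0 ≠ 0 ∧ lambda4 ≠ 0 ∧ alpha1 < 0)) := by
  have hI4 : alpha2 * lambda3 = -(d2 * R0) - d0 * alpha3 ^ 2 := by
    rw [hlambda3, hR0, halpha1, halpha2, halpha3]; ring
  have hI5 : alpha2 * lambda4 = -(c0 * R0) - c2 * alpha1 ^ 2 := by
    rw [hlambda4, hR0, halpha1, halpha2, halpha3]; ring
  have hA : c0 * d2 = c2 * d0 - alpha2 := by rw [halpha2]; ring
  have h13 : alpha1 * alpha3 = R0 + alpha2 ^ 2 := by rw [hR0]; ring
  constructor
  · rintro ⟨h, hd2, hl3, ha3⟩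
    have ha1 : alpha1 < 0 := by nlinarith [sq_nonneg alpha2]
    rcases h with ⟨hc2, hd0, hd2', hl3'⟩ | ⟨hc2, hd0, hd2', hl3'⟩
    · have hd2p : 0 < d2 := lt_of_le_of_ne hd2' (Ne.symm hd2)
      have hl3p : 0 < lambda3 := lt_of_le_of_ne hl3' (Ne.symm hl3)
      have ha2 : alpha2 < 0 := by
        nlinarith [mul_pos hd2p hR0pos, mul_nonneg hd0 (sq_nonneg alpha3)]
      have hcd : 0 < c0 * d2 := by nlinarith [mul_nonneg hc2 hd0]
      have hc0 : 0 < c0 := by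
        rcases mul_pos_iff.mp hcd with ⟨h, _⟩ | ⟨_, h⟩
        · exact h
        · linarith
      have hl4 : 0 < lambda4 := by
        nlinarith [mul_pos hc0 hR0pos, mul_nonneg hc2 (sq_nonneg alpha1)]
      exact ⟨Or.inl ⟨hc0.le, hc2, hd0, hl4.le⟩, hc0.ne', hl4.ne', ha1⟩
    · have hd2n : d2 < 0 := lt_of_le_of_ne hd2' hd2
      have hl3n : lambda3 < 0 := lt_of_le_of_ne hl3' hl3
      have ha2 : alpha2 < 0 := by
        nlinarith [mul_pos (neg_pos.2 hd2n) hR0pos,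
          mul_nonneg (neg_nonneg.2 hd0) (sq_nonneg alpha3)]
      have hcd : 0 < c0 * d2 := by
        nlinarith [mul_nonneg (neg_nonneg.2 hc2) (neg_nonneg.2 hd0)]
      have hc0 : c0 < 0 := by
        rcases mul_pos_iff.mp hcd with ⟨_, h⟩ | ⟨h, _⟩
        · linarith
        · exact h
      have hl4 : lambda4 < 0 := by
        nlinarith [mul_pos (neg_pos.2 hc0) hR0pos,
          mul_nonneg (neg_nonneg.2 hc2) (sq_nonneg alpha1)]
      exact ⟨Or.inr ⟨hc0.le, hc2, hd0, hl4.le⟩, hc0.ne, hl4.ne, ha1⟩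
  · rintro ⟨h, hc0, hl4, ha1⟩
    have ha3 : alpha3 < 0 := by nlinarith [sq_nonneg alpha2]
    rcases h with ⟨hc0', hc2, hd0, hl4'⟩ | ⟨hc0', hc2, hd0, hl4'⟩
    · have hc0p : 0 < c0 := lt_of_le_of_ne hc0' (Ne.symm hc0)
      have hl4p : 0 < lambda4 := lt_of_le_of_ne hl4' (Ne.symm hl4)
      have ha2 : alpha2 < 0 := by
        nlinarith [mul_pos hc0p hR0pos, mul_nonneg hc2 (sq_nonneg alpha1)]
      have hcd : 0 < c0 * d2 := by nlinarith [mul_nonneg hc2 hd0]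
      have hd2 : 0 < d2 := by
        rcases mul_pos_iff.mp hcd with ⟨_, h⟩ | ⟨h, _⟩
        · exact h
        · linarith
      have hl3 : 0 < lambda3 := by
        nlinarith [mul_pos hd2 hR0pos, mul_nonneg hd0 (sq_nonneg alpha3)]
      exact ⟨Or.inl ⟨hc2, hd0, hd2.le, hl3.le⟩, hd2.ne', hl3.ne', ha3⟩
    · have hc0n : c0 < 0 := lt_of_le_of_ne hc0' hc0
      have hl4n : lambda4 < 0 := lt_of_le_of_ne hl4' hl4
      have ha2 : alpha2 < 0 := by
        nlinarith [mul_pos (neg_pos.2 hc0n) hR0pos,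
          mul_nonneg (neg_nonneg.2 hc2) (sq_nonneg alpha1)]
      have hcd : 0 < c0 * d2 := by
        nlinarith [mul_nonneg (neg_nonneg.2 hc2) (neg_nonneg.2 hd0)]
      have hd2 : d2 < 0 := by
        rcases mul_pos_iff.mp hcd with ⟨h, _⟩ | ⟨_, h⟩
        · linarith
        · exact h
      have hl3 : lambda3 < 0 := by
        nlinarith [mul_pos (neg_pos.2 hd2) hR0pos,
          mul_nonneg (neg_nonneg.2 hd0) (sq_nonneg alpha3)]
      exact ⟨Or.inr ⟨hc2, hd0, hd2.le, hl3.le⟩, hd2.ne, hl3.ne, ha3⟩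
end

section
/- Suppose x >= 0. Then condition (C2) holds if and only if condition (CA2) holds. -/
/-- A finite list of real numbers "has the same sign" if either all entries are
nonnegative or all entries are nonpositive. -/
def SameSign (l : List ℝ) : Prop := (∀ t ∈ l, 0 ≤ t) ∨ (∀ t ∈ l, t ≤ 0)


private lemma mul_nn {u v : ℝ} (hu : u ≤ 0) (hv : v ≤ 0) : 0 ≤ u * v := by nlinarith only [hu, hv]

private lemma mul_np {u v : ℝ} (hu : 0 ≤ u) (hv : v ≤ 0) : u * v ≤ 0 := by nlinarith only [hu, hv]

private lemma mul_pn {u v : ℝ} (hu : u ≤ 0) (hv : 0 ≤ v) : u * v ≤ 0 := by nlinarith only [hu, hv]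

set_option maxHeartbeats 4000000 in
/-- with `x ≥ 0`, condition (C2) holds iff condition (CA2) holds. -/
theorem stmt_9 (a0 a1 a2 a3 b0 b1 b2 b3 x : ℝ) (hx : 0 ≤ x)
    (a b : ℝ → ℝ)
    (ha : ∀ s, a s = a3 * s ^ 3 + a2 * s ^ 2 + a1 * s + a0)
    (hb : ∀ s, b s = b3 * s ^ 3 + b2 * s ^ 2 + b1 * s + b0)
    (atil btil : ℝ) (hatil : atil = a (-x)) (hbtil : btil = b (-x))
    (c0 c1 c2 : ℝ)
    (hc : ∀ s, (c2 * s ^ 2 + c1 * s + c0) * (s + x) = a s * b (-x) - b s * a (-x))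
    (ctil : ℝ) (hctil : ctil = c2 * x ^ 2 - c1 * x + c0)
    (d0 d1 d2 : ℝ)
    (hd : ∀ s, (d2 * s ^ 2 + d1 * s + d0) * (s + x)
        = b (-x) * (b s * ctil - b (-x) * (c2 * s ^ 2 + c1 * s + c0)))
    (alpha1 alpha2 alpha3 : ℝ)
    (halpha1 : alpha1 = c1 * d0 - c0 * d1)
    (halpha2 : alpha2 = c2 * d0 - c0 * d2)
    (halpha3 : alpha3 = c2 * d1 - c1 * d2)
    (lambda3 : ℝ) (hlambda3 : lambda3 = d2 * alpha2 - d1 * alpha3)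
    (B : Matrix (Fin 3) (Fin 3) ℝ) (hBsymm : B.IsSymm)
    (hB : ∀ z w : ℝ, z ≠ w →
        b z * a w - a z * b w
          = (z - w) * ∑ i : Fin 3, ∑ j : Fin 3, B i j * z ^ (i : ℕ) * w ^ (j : ℕ))
    (R0ab : ℝ) (hR0 : R0ab = B.det)
    :
    -- (C2)
    (((0 ≤ a0 ∧ 0 ≤ a1 ∧ 0 ≤ a2 ∧ 0 ≤ a3 ∧ 0 ≤ b0 ∧ 0 ≤ b1 ∧ 0 ≤ b2 ∧ 0 ≤ b3) ∧
      SameSign [atil, btil, c0, c1, c2, d0, d1, d2, lambda3] ∧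
      0 ≤ ctil ∧ 0 ≤ -alpha2 ∧ 0 < R0ab)
    ↔
    -- (CA2)
    ((0 < b0 ∨ 0 < b1 ∨ 0 < b2 ∨ 0 < b3) ∧
      SameSign [atil, btil] ∧ btil ≠ 0 ∧
      0 ≤ c2 * d2 ∧ 0 ≤ d0 * lambda3 ∧ 0 ≤ -(alpha2 * d0 * d2) ∧
      d0 ≠ 0 ∧ d2 ≠ 0 ∧ 0 < ctil ∧ alpha3 < 0 ∧ 0 < R0ab)) := by
  subst halpha1
  subst halpha2
  subst halpha3
  subst hlambda3
  have hATIL : atil = a0 - a1*x + a2*x^2 - a3*x^3 := by rw [hatil, ha]; ring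
  have hBTIL : btil = b0 - b1*x + b2*x^2 - b3*x^3 := by rw [hbtil, hb]; ring
  have p0 := hc 0
  have p1 := hc 1
  have pm1 := hc (-1)
  have p2 := hc 2
  rw [← hatil, ← hbtil, ha, hb] at p0 p1 pm1 p2
  have hE1 : c2 = a3*btil - b3*atil := by linear_combination (1/2) * p0 + (-1/2) * p1 + (-1/6) * pm1 + (1/6) * p2
  have hE2 : c1 + c2*x = a2*btil - b2*atil := by linear_combination (-1) * p0 + (1/2) * p1 + (1/2) * pm1
  have hE3 : c0 + c1*x = a1*btil - b1*atil := by linear_combination (-1/2) * p0 + (1) * p1 + (-1/3) * pm1 + (-1/6) * p2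
  have hE4 : c0*x = a0*btil - b0*atil := by linear_combination (1) * p0
  have q0 := hd 0
  have q1 := hd 1
  have qm1 := hd (-1)
  have q2 := hd 2
  rw [← hbtil, hb] at q0 q1 qm1 q2
  have hF1 : d2 = btil*b3*ctil := by linear_combination (1/2) * q0 + (-1/2) * q1 + (-1/6) * qm1 + (1/6) * q2
  have hF2 : d1 + d2*x = btil*(b2*ctil - btil*c2) := by linear_combination (-1) * q0 + (1/2) * q1 + (1/2) * qm1
  have hF3 : d0 + d1*x = btil*(b1*ctil - btil*c1) := by linear_combination (-1/2) * q0 + (1) * q1 + (-1/3) * qm1 + (-1/6) * q2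
  have hF4 : d0*x = btil*(b0*ctil - btil*c0) := by linear_combination (1) * q0
  have g00 := hB 0 2 (by norm_num)
  have g01 := hB 0 3 (by norm_num)
  have g02 := hB 0 4 (by norm_num)
  have g10 := hB 1 2 (by norm_num)
  have g11 := hB 1 3 (by norm_num)
  have g12 := hB 1 4 (by norm_num)
  have g20 := hB (-1) 2 (by norm_num)
  have g21 := hB (-1) 3 (by norm_num)
  have g22 := hB (-1) 4 (by norm_num)
  rw [ha, ha, hb, hb] at g00 g01 g02 g10 g11 g12 g20 g21 g22
  simp only [Fin.sum_univ_three, Fin.val_zero, Fin.val_one, Fin.val_two] at g00 g01 g02 g10 g11 g12 g20 g21 g22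
  have hB00 : B 0 0 = (-1*a1*b0 + a0*b1) := by linear_combination (3) * g00 + (-8/3) * g01 + (3/4) * g02
  have hB01 : B 0 1 = (-1*a2*b0 + a0*b2) := by linear_combination (-7/4) * g00 + (2) * g01 + (-5/8) * g02
  have hB02 : B 0 2 = (-1*a3*b0 + a0*b3) := by linear_combination (1/4) * g00 + (-1/3) * g01 + (1/8) * g02
  have hB10 : B 1 0 = (-1*a2*b0 + a0*b2) := by linear_combination (3) * g10 + (-2) * g11 + (1/2) * g12 + (-1) * g20 + (1) * g21 + (-3/10) * g22
  have hB11 : B 1 1 = (-1*a3*b0 + -1*a2*b1 + a1*b2 + a0*b3) := by linear_combination (-7/4) * g10 + (3/2) * g11 + (-5/12) * g12 + (7/12) * g20 + (-3/4) * g21 + (1/4) * g22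
  have hB12 : B 1 2 = (-1*a3*b1 + a1*b3) := by linear_combination (1/4) * g10 + (-1/4) * g11 + (1/12) * g12 + (-1/12) * g20 + (1/8) * g21 + (-1/20) * g22
  have hB20 : B 2 0 = (-1*a3*b0 + a0*b3) := by linear_combination (-3) * g00 + (8/3) * g01 + (-3/4) * g02 + (3) * g10 + (-2) * g11 + (1/2) * g12 + (1) * g20 + (-1) * g21 + (3/10) * g22
  have hB21 : B 2 1 = (-1*a3*b1 + a1*b3) := by linear_combination (7/4) * g00 + (-2) * g01 + (5/8) * g02 + (-7/4) * g10 + (3/2) * g11 + (-5/12) * g12 + (-7/12) * g20 + (3/4) * g21 + (-1/4) * g22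
  have hB22 : B 2 2 = (-1*a3*b2 + a2*b3) := by linear_combination (-1/4) * g00 + (1/3) * g01 + (-1/8) * g02 + (1/4) * g10 + (-1/4) * g11 + (1/12) * g12 + (1/12) * g20 + (-1/8) * g21 + (1/20) * g22
  have hDET : R0ab = (a3^3*b0^3 + -1*a2*a3^2*b0^2*b1 + a2^2*a3*b0^2*b2 + -1*a2^3*b0^2*b3 + a1*a3^2*b0*b1^2 + -2*a1*a3^2*b0^2*b2 + -1*a1*a2*a3*b0*b1*b2 + 3*a1*a2*a3*b0^2*b3 + a1*a2^2*b0*b1*b3 + a1^2*a3*b0*b2^2 + -2*a1^2*a3*b0*b1*b3 + -1*a1^2*a2*b0*b2*b3 + a1^3*b0*b3^2 + -1*a0*a3^2*b1^3 + 3*a0*a3^2*b0*b1*b2 + -3*a0*a3^2*b0^2*b3 + a0*a2*a3*b1^2*b2 + -2*a0*a2*a3*b0*b2^2 + -1*a0*a2*a3*b0*b1*b3 + -1*a0*a2^2*b1^2*b3 + 2*a0*a2^2*b0*b2*b3 + -1*a0*a1*a3*b1*b2^2 + 2*a0*a1*a3*b1^2*b3 + a0*a1*a3*b0*b2*b3 +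 a0*a1*a2*b1*b2*b3 + -3*a0*a1*a2*b0*b3^2 + -1*a0*a1^2*b1*b3^2 + a0^2*a3*b2^3 + -3*a0^2*a3*b1*b2*b3 + 3*a0^2*a3*b0*b3^2 + -1*a0^2*a2*b2^2*b3 + 2*a0^2*a2*b1*b3^2 + a0^2*a1*b2*b3^2 + -1*a0^3*b3^3) := by
    rw [hR0, Matrix.det_fin_three, hB00, hB01, hB02, hB10, hB11, hB12, hB20, hB21, hB22]; ring
  have hT : ((c2*d0 - c0*d2)^2 - (c1*d0 - c0*d1)*(c2*d1 - c1*d2))*d2 = (c2*d0 - c0*d2)*(d2*(c2*d0 - c0*d2) - d1*(c2*d1 - c1*d2)) + (c2*d1 - c1*d2)^2*d0 := by ring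
  clear p0 p1 pm1 p2 q0 q1 qm1 q2 g00 g01 g02 g10 g11 g12 g20 g21 g22
  clear hB00 hB01 hB02 hB10 hB11 hB12 hB20 hB21 hB22 hB hc hd hR0 hBsymm hatil hbtil
  constructor
  · rintro ⟨⟨ha0n,ha1n,ha2n,ha3n,hb0n,hb1n,hb2n,hb3n⟩, hss, hctil0, hal2n, hdetpos⟩
    have hbne : btil ≠ 0 := by
      intro hbz
      have ec2 : c2 = -(b3*atil) := by linear_combination hE1 + a3*hbz
      rcases eq_or_ne atil 0 with haz | hane
      · have hR00 : R0ab = 0 := by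
          linear_combination hDET + (-1*a3^2*b3^3*x^6 + a3^2*b2^3*x^3 + -3*a3^2*b1*b2*b3*x^3 + -1*a3^2*b1^3 + 3*a3^2*b0*b3^2*x^3 + 3*a3^2*b0*b1*b2 + -3*a3^2*b0^2*b3 + 2*a2*a3*b3^3*x^5 + -1*a2*a3*b2^2*b3*x^3 + -1*a2*a3*b2^3*x^2 + 2*a2*a3*b1*b3^2*x^3 + 3*a2*a3*b1*b2*b3*x^2 + a2*a3*b1^2*b2 + -3*a2*a3*b0*b3^2*x^2 + -2*a2*a3*b0*b2^2 + -1*a2*a3*b0*b1*b3 + -1*a2^2*b3^3*x^4 + a2^2*b2^2*b3*x^2 + -2*a2^2*b1*b3^2*x^2 + -1*a2^2*b1^2*b3 + 2*a2^2*b0*b2*b3 + -2*a1*a3*b3^3*x^4 + a1*a3*b2*b3^2*x^3 + a1*a3*b2^3*x + -3*a1*a3*b1*b2*b3*x + -1*a1*a3*b1*b2^2 + 2*a1*a3*b1^2*b3 + 3*a1*a3*b0*b3^2*x + a1*a3*b0*b2*b3 + 2*a1*a2*b3^3*x^3 + -1*a1*a2*b2*b3^2*x^2 + -1*a1*a2*b2^2*b3*x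 + 2*a1*a2*b1*b3^2*x + a1*a2*b1*b2*b3 + -3*a1*a2*b0*b3^2 + -1*a1^2*b3^3*x^2 + a1^2*b2*b3^2*x + -1*a1^2*b1*b3^2 + -1*a0*a3*b3^3*x^3 + a0*a3*b2^3 + -3*a0*a3*b1*b2*b3 + 3*a0*a3*b0*b3^2 + a0*a2*b3^3*x^2 + -1*a0*a2*b2^2*b3 + 2*a0*a2*b1*b3^2 + -1*a0*a1*b3^3*x + a0*a1*b2*b3^2 + -1*a0^2*b3^3) * haz - (-1*a3^2*b3^3*x^6 + a3^2*b2^3*x^3 + -3*a3^2*b1*b2*b3*x^3 + -1*a3^2*b1^3 + 3*a3^2*b0*b3^2*x^3 + 3*a3^2*b0*b1*b2 + -3*a3^2*b0^2*b3 + 2*a2*a3*b3^3*x^5 + -1*a2*a3*b2^2*b3*x^3 + -1*a2*a3*b2^3*x^2 + 2*a2*a3*b1*b3^2*x^3 + 3*a2*a3*b1*b2*b3*x^2 + a2*a3*b1^2*b2 + -3*a2*a3*b0*b3^2*x^2 + -2*a2*a3*b0*b2^2 + -1*a2*a3*b0*b1*b3 + -1*a2^2*b3^3*x^4 + a2^2*b2^2*b3*x^2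 + -2*a2^2*b1*b3^2*x^2 + -1*a2^2*b1^2*b3 + 2*a2^2*b0*b2*b3 + -2*a1*a3*b3^3*x^4 + a1*a3*b2*b3^2*x^3 + a1*a3*b2^3*x + -3*a1*a3*b1*b2*b3*x + -1*a1*a3*b1*b2^2 + 2*a1*a3*b1^2*b3 + 3*a1*a3*b0*b3^2*x + a1*a3*b0*b2*b3 + 2*a1*a2*b3^3*x^3 + -1*a1*a2*b2*b3^2*x^2 + -1*a1*a2*b2^2*b3*x + 2*a1*a2*b1*b3^2*x + a1*a2*b1*b2*b3 + -3*a1*a2*b0*b3^2 + -1*a1^2*b3^3*x^2 + a1^2*b2*b3^2*x + -1*a1^2*b1*b3^2 + -1*a0*a3*b3^3*x^3 + a0*a3*b2^3 + -3*a0*a3*b1*b2*b3 + 3*a0*a3*b0*b3^2 + a0*a2*b3^3*x^2 + -1*a0*a2*b2^2*b3 + 2*a0*a2*b1*b3^2 + -1*a0*a1*b3^3*x + a0*a1*b2*b3^2 + -1*a0^2*b3^3) * hATIL + (a3^3*b3^2*x^6 + a3^3*b2*b3*x^5 + a3^3*b2^2*x^4 + -1*a3^3*b1*b3*x^4 + a3^3*b1*b2*x^3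 + a3^3*b1^2*x^2 + -2*a3^3*b0*b3*x^3 + -1*a3^3*b0*b2*x^2 + a3^3*b0*b1*x + a3^3*b0^2 + -3*a2*a3^2*b3^2*x^5 + -3*a2*a3^2*b2*b3*x^4 + -2*a2*a3^2*b2^2*x^3 + a2*a3^2*b1*b3*x^3 + -2*a2*a3^2*b1*b2*x^2 + -1*a2*a3^2*b1^2*x + 3*a2*a3^2*b0*b3*x^2 + -1*a2*a3^2*b0*b1 + 3*a2^2*a3*b3^2*x^4 + 3*a2^2*a3*b2*b3*x^3 + a2^2*a3*b2^2*x^2 + a2^2*a3*b1*b3*x^2 + a2^2*a3*b1*b2*x + a2^2*a3*b0*b2 + -1*a2^3*b3^2*x^3 + -1*a2^3*b2*b3*x^2 + -1*a2^3*b1*b3*x + -1*a2^3*b0*b3 + 3*a1*a3^2*b3^2*x^4 + 2*a1*a3^2*b2*b3*x^3 + 2*a1*a3^2*b2^2*x^2 + -3*a1*a3^2*b1*b3*x^2 + a1*a3^2*b1*b2*x + a1*a3^2*b1^2 + -3*a1*a3^2*b0*b3*x + -2*a1*a3^2*b0*b2 + -6*a1*a2*a3*b3^2*x^3 + -4*a1*a2*a3*b2*b3*x^2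 + -2*a1*a2*a3*b2^2*x + 2*a1*a2*a3*b1*b3*x + -1*a1*a2*a3*b1*b2 + 3*a1*a2*a3*b0*b3 + 3*a1*a2^2*b3^2*x^2 + 2*a1*a2^2*b2*b3*x + a1*a2^2*b1*b3 + 3*a1^2*a3*b3^2*x^2 + a1^2*a3*b2*b3*x + a1^2*a3*b2^2 + -2*a1^2*a3*b1*b3 + -3*a1^2*a2*b3^2*x + -1*a1^2*a2*b2*b3 + a1^3*b3^2) * hbz - (a3^3*b3^2*x^6 + a3^3*b2*b3*x^5 + a3^3*b2^2*x^4 + -1*a3^3*b1*b3*x^4 + a3^3*b1*b2*x^3 + a3^3*b1^2*x^2 + -2*a3^3*b0*b3*x^3 + -1*a3^3*b0*b2*x^2 + a3^3*b0*b1*x + a3^3*b0^2 + -3*a2*a3^2*b3^2*x^5 + -3*a2*a3^2*b2*b3*x^4 + -2*a2*a3^2*b2^2*x^3 + a2*a3^2*b1*b3*x^3 + -2*a2*a3^2*b1*b2*x^2 + -1*a2*a3^2*b1^2*x + 3*a2*a3^2*b0*b3*x^2 + -1*a2*a3^2*b0*b1 + 3*a2^2*a3*b3^2*x^4 + 3*a2^2*a3*b2*b3*x^3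 + a2^2*a3*b2^2*x^2 + a2^2*a3*b1*b3*x^2 + a2^2*a3*b1*b2*x + a2^2*a3*b0*b2 + -1*a2^3*b3^2*x^3 + -1*a2^3*b2*b3*x^2 + -1*a2^3*b1*b3*x + -1*a2^3*b0*b3 + 3*a1*a3^2*b3^2*x^4 + 2*a1*a3^2*b2*b3*x^3 + 2*a1*a3^2*b2^2*x^2 + -3*a1*a3^2*b1*b3*x^2 + a1*a3^2*b1*b2*x + a1*a3^2*b1^2 + -3*a1*a3^2*b0*b3*x + -2*a1*a3^2*b0*b2 + -6*a1*a2*a3*b3^2*x^3 + -4*a1*a2*a3*b2*b3*x^2 + -2*a1*a2*a3*b2^2*x + 2*a1*a2*a3*b1*b3*x + -1*a1*a2*a3*b1*b2 + 3*a1*a2*a3*b0*b3 + 3*a1*a2^2*b3^2*x^2 + 2*a1*a2^2*b2*b3*x + a1*a2^2*b1*b3 + 3*a1^2*a3*b3^2*x^2 + a1^2*a3*b2*b3*x + a1^2*a3*b2^2 + -2*a1^2*a3*b1*b3 + -3*a1^2*a2*b3^2*x + -1*a1^2*a2*b2*b3 + a1^3*b3^2) * hBTIL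
        rw [hR00] at hdetpos; exact lt_irrefl 0 hdetpos
      · rcases hss with hP | hN
        · have hsatil : 0 ≤ atil := hP atil (by simp)
          have hsc2 : 0 ≤ c2 := hP c2 (by simp)
          have hsc1 : 0 ≤ c1 := hP c1 (by simp)
          have hsc0 : 0 ≤ c0 := hP c0 (by simp)
          have h30 : b3*atil = 0 := le_antisymm (by linarith only [ec2, hsc2]) (mul_nonneg hb3n hsatil)
          have hb3z : b3 = 0 := by
            rcases mul_eq_zero.mp h30 with h | h
            · exact h
            · exact absurd h hane
          have hc2z : c2 = 0 := by linear_combination ec2 - atil*hb3z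
          have ec1 : c1 = -(b2*atil) := by linear_combination hE2 + a2*hbz - x*hc2z
          have h20 : b2*atil = 0 := le_antisymm (by linarith only [ec1, hsc1]) (mul_nonneg hb2n hsatil)
          have hb2z : b2 = 0 := by
            rcases mul_eq_zero.mp h20 with h | h
            · exact h
            · exact absurd h hane
          have hc1z : c1 = 0 := by linear_combination ec1 - atil*hb2z
          have ec0 : c0 = -(b1*atil) := by linear_combination hE3 + a1*hbz - x*hc1z
          have h10 : b1*atil = 0 := le_antisymm (by linarith only [ec0, hsc0]) (mul_nonneg hb1n hsatil)
          have hb1z : b1 = 0 := by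
            rcases mul_eq_zero.mp h10 with h | h
            · exact h
            · exact absurd h hane
          have hc0z : c0 = 0 := by linear_combination ec0 - atil*hb1z
          have h00 : b0*atil = 0 := by linear_combination hE4 + a0*hbz - x*hc0z
          have hb0z : b0 = 0 := by
            rcases mul_eq_zero.mp h00 with h | h
            · exact h
            · exact absurd h hane
          have hR00 : R0ab = 0 := by rw [hDET, hb0z, hb1z, hb2z, hb3z]; ring
          rw [hR00] at hdetpos; exact lt_irrefl 0 hdetpos

        · have hsatil : atil ≤ 0 := hN atil (by simp)
          have hsc2 : c2 ≤ 0 := hN c2 (by simp)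
          have hsc1 : c1 ≤ 0 := hN c1 (by simp)
          have hsc0 : c0 ≤ 0 := hN c0 (by simp)
          have h30 : b3*atil = 0 := le_antisymm (mul_np hb3n hsatil) (by linarith only [ec2, hsc2])
          have hb3z : b3 = 0 := by
            rcases mul_eq_zero.mp h30 with h | h
            · exact h
            · exact absurd h hane
          have hc2z : c2 = 0 := by linear_combination ec2 - atil*hb3z
          have ec1 : c1 = -(b2*atil) := by linear_combination hE2 + a2*hbz - x*hc2z
          have h20 : b2*atil = 0 := le_antisymm (mul_np hb2n hsatil) (by linarith only [ec1, hsc1])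
          have hb2z : b2 = 0 := by
            rcases mul_eq_zero.mp h20 with h | h
            · exact h
            · exact absurd h hane
          have hc1z : c1 = 0 := by linear_combination ec1 - atil*hb2z
          have ec0 : c0 = -(b1*atil) := by linear_combination hE3 + a1*hbz - x*hc1z
          have h10 : b1*atil = 0 := le_antisymm (mul_np hb1n hsatil) (by linarith only [ec0, hsc0])
          have hb1z : b1 = 0 := by
            rcases mul_eq_zero.mp h10 with h | h
            · exact h
            · exact absurd h hane
          have hc0z : c0 = 0 := by linear_combination ec0 - atil*hb1z
          have h00 : b0*atil = 0 := by linear_combination hE4 + a0*hbz - x*hc0z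
          have hb0z : b0 = 0 := by
            rcases mul_eq_zero.mp h00 with h | h
            · exact h
            · exact absurd h hane
          have hR00 : R0ab = 0 := by rw [hDET, hb0z, hb1z, hb2z, hb3z]; ring
          rw [hR00] at hdetpos; exact lt_irrefl 0 hdetpos

    have hb2sq : 0 < btil^2 := lt_of_le_of_ne (sq_nonneg btil) (Ne.symm (pow_ne_zero 2 hbne))
    have hcpos : 0 < ctil := by
      rcases hctil0.lt_or_eq with h | hceq
      · exact h
      · exfalso
        have hd2z : d2 = 0 := by linear_combination hF1 - btil*b3*hceq
        have hd1e : d1 = -(btil^2*c2) := by linear_combination hF2 - btil*b2*hceq - x*hd2z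
        rcases hss with hP | hN
        · have hsc2 : 0 ≤ c2 := hP c2 (by simp)
          have hsc1 : 0 ≤ c1 := hP c1 (by simp)
          have hsd1 : 0 ≤ d1 := hP d1 (by simp)
          have hsd0 : 0 ≤ d0 := hP d0 (by simp)
          have hc2z : c2 = 0 := le_antisymm (by nlinarith only [hd1e, hsd1, hb2sq]) hsc2
          have hd1z : d1 = 0 := by rw [hd1e, hc2z]; ring
          have hd0e : d0 = -(btil^2*c1) := by linear_combination hF3 - btil*b1*hceq - x*hd1z
          have hc1z : c1 = 0 := le_antisymm (by nlinarith only [hd0e, hsd0, hb2sq]) hsc1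
          have hd0z : d0 = 0 := by rw [hd0e, hc1z]; ring
          have h3 : btil^2*c0 = 0 := by linear_combination hF4 - btil*b0*hceq - x*hd0z
          have hc0z : c0 = 0 := by
            rcases mul_eq_zero.mp h3 with h | h
            · exact absurd h (pow_ne_zero 2 hbne)
            · exact h
          have e3 : a3*btil - b3*atil = 0 := by linear_combination hc2z - hE1
          have e2 : a2*btil - b2*atil = 0 := by linear_combination hc1z + x*hc2z - hE2
          have e1 : a1*btil - b1*atil = 0 := by linear_combination hc0z + x*hc1z - hE3
          have e0 : a0*btil - b0*atil = 0 := by linear_combination x*hc0z - hE4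
          have hz3 : btil^3*R0ab = 0 := by linear_combination (-1*b0^2*b3^3*atil^2 + a3*b0*b2^3*atil*btil + -3*a3*b0*b1*b2*b3*atil*btil + 3*a3*b0^2*b3^2*atil*btil + -1*a3^2*b1^3*btil^2 + 3*a3^2*b0*b1*b2*btil^2 + -3*a3^2*b0^2*b3*btil^2 + -1*a2*b0*b2^2*b3*atil*btil + 2*a2*b0*b1*b3^2*atil*btil + a2*a3*b1^2*b2*btil^2 + -2*a2*a3*b0*b2^2*btil^2 + -1*a2*a3*b0*b1*b3*btil^2 + -1*a2^2*b1^2*b3*btil^2 + 2*a2^2*b0*b2*b3*btil^2 + a1*b0*b2*b3^2*atil*btil + -1*a1*a3*b1*b2^2*btil^2 + 2*a1*a3*b1^2*b3*btil^2 + a1*a3*b0*b2*b3*btil^2 + a1*a2*b1*b2*b3*btil^2 + -3*a1*a2*b0*b3^2*btil^2 + -1*a1^2*b1*b3^2*btil^2 + -1*a0*b0*b3^3*atil*btil + a0*a3*b2^3*btil^2 + -3*a0*a3*b1*b2*b3*btil^2 + 3*a0*a3*b0*b3^2*btil^2 + -1*a0*a2*b2^2*b3*btil^2 + 2*a0*a2*b1*b3^2*btil^2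 + a0*a1*b2*b3^2*btil^2 + -1*a0^2*b3^3*btil^2) * e0 + (b0^2*b2*b3^2*atil^2 + a3*b0^2*b2*b3*atil*btil + a3^2*b0*b1^2*btil^2 + -2*a3^2*b0^2*b2*btil^2 + -3*a2*b0^2*b3^2*atil*btil + -1*a2*a3*b0*b1*b2*btil^2 + 3*a2*a3*b0^2*b3*btil^2 + a2^2*b0*b1*b3*btil^2 + a1*a3*b0*b2^2*btil^2 + -2*a1*a3*b0*b1*b3*btil^2 + -1*a1*a2*b0*b2*b3*btil^2 + a1^2*b0*b3^2*btil^2) * e1 + (-1*b0^2*b1*b3^2*atil^2 + -1*a3*b0^2*b2^2*atil*btil + 2*a3*b0^2*b1*b3*atil*btil + -1*a3^2*b0^2*b1*btil^2 + a2*b0^2*b2*b3*atil*btil + a2*a3*b0^2*b2*btil^2 + -1*a2^2*b0^2*b3*btil^2) * e2 + (b0^3*b3^2*atil^2 + -2*a3*b0^3*b3*atil*btil + a3^2*b0^3*btil^2) * e3 + btil^3*hDET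
          rcases mul_eq_zero.mp hz3 with h'' | h''
          · exact pow_ne_zero 3 hbne h''
          · rw [h''] at hdetpos; exact lt_irrefl 0 hdetpos

        · have hsc2 : c2 ≤ 0 := hN c2 (by simp)
          have hsc1 : c1 ≤ 0 := hN c1 (by simp)
          have hsd1 : d1 ≤ 0 := hN d1 (by simp)
          have hsd0 : d0 ≤ 0 := hN d0 (by simp)
          have hc2z : c2 = 0 := le_antisymm hsc2 (by nlinarith only [hd1e, hsd1, hb2sq])
          have hd1z : d1 = 0 := by rw [hd1e, hc2z]; ring
          have hd0e : d0 = -(btil^2*c1) := by linear_combination hF3 - btil*b1*hceq - x*hd1z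
          have hc1z : c1 = 0 := le_antisymm hsc1 (by nlinarith only [hd0e, hsd0, hb2sq])
          have hd0z : d0 = 0 := by rw [hd0e, hc1z]; ring
          have h3 : btil^2*c0 = 0 := by linear_combination hF4 - btil*b0*hceq - x*hd0z
          have hc0z : c0 = 0 := by
            rcases mul_eq_zero.mp h3 with h | h
            · exact absurd h (pow_ne_zero 2 hbne)
            · exact h
          have e3 : a3*btil - b3*atil = 0 := by linear_combination hc2z - hE1
          have e2 : a2*btil - b2*atil = 0 := by linear_combination hc1z + x*hc2z - hE2
          have e1 : a1*btil - b1*atil = 0 := by linear_combination hc0z + x*hc1z - hE3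
          have e0 : a0*btil - b0*atil = 0 := by linear_combination x*hc0z - hE4
          have hz3 : btil^3*R0ab = 0 := by linear_combination (-1*b0^2*b3^3*atil^2 + a3*b0*b2^3*atil*btil + -3*a3*b0*b1*b2*b3*atil*btil + 3*a3*b0^2*b3^2*atil*btil + -1*a3^2*b1^3*btil^2 + 3*a3^2*b0*b1*b2*btil^2 + -3*a3^2*b0^2*b3*btil^2 + -1*a2*b0*b2^2*b3*atil*btil + 2*a2*b0*b1*b3^2*atil*btil + a2*a3*b1^2*b2*btil^2 + -2*a2*a3*b0*b2^2*btil^2 + -1*a2*a3*b0*b1*b3*btil^2 + -1*a2^2*b1^2*b3*btil^2 + 2*a2^2*b0*b2*b3*btil^2 + a1*b0*b2*b3^2*atil*btil + -1*a1*a3*b1*b2^2*btil^2 + 2*a1*a3*b1^2*b3*btil^2 + a1*a3*b0*b2*b3*btil^2 + a1*a2*b1*b2*b3*btil^2 + -3*a1*a2*b0*b3^2*btil^2 + -1*a1^2*b1*b3^2*btil^2 + -1*a0*b0*b3^3*atil*btil + a0*a3*b2^3*btil^2 + -3*a0*a3*b1*b2*b3*btil^2 + 3*a0*a3*b0*b3^2*btil^2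 + -1*a0*a2*b2^2*b3*btil^2 + 2*a0*a2*b1*b3^2*btil^2 + a0*a1*b2*b3^2*btil^2 + -1*a0^2*b3^3*btil^2) * e0 + (b0^2*b2*b3^2*atil^2 + a3*b0^2*b2*b3*atil*btil + a3^2*b0*b1^2*btil^2 + -2*a3^2*b0^2*b2*btil^2 + -3*a2*b0^2*b3^2*atil*btil + -1*a2*a3*b0*b1*b2*btil^2 + 3*a2*a3*b0^2*b3*btil^2 + a2^2*b0*b1*b3*btil^2 + a1*a3*b0*b2^2*btil^2 + -2*a1*a3*b0*b1*b3*btil^2 + -1*a1*a2*b0*b2*b3*btil^2 + a1^2*b0*b3^2*btil^2) * e1 + (-1*b0^2*b1*b3^2*atil^2 + -1*a3*b0^2*b2^2*atil*btil + 2*a3*b0^2*b1*b3*atil*btil + -1*a3^2*b0^2*b1*btil^2 + a2*b0^2*b2*b3*atil*btil + a2*a3*b0^2*b2*btil^2 + -1*a2^2*b0^2*b3*btil^2) * e2 + (b0^3*b3^2*atil^2 + -2*a3*b0^3*b3*atil*btil + a3^2*b0^3*btil^2) * e3 + btil^3*hDET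
          rcases mul_eq_zero.mp hz3 with h'' | h''
          · exact pow_ne_zero 3 hbne h''
          · rw [h''] at hdetpos; exact lt_irrefl 0 hdetpos

    have hb2sq : 0 < btil^2 := lt_of_le_of_ne (sq_nonneg btil) (Ne.symm (pow_ne_zero 2 hbne))
    have hb4pos : 0 < btil^4 := by nlinarith only [hb2sq]
    have hHpre : btil * (b3^2*c0^3 + -1*b2*b3*c0^2*c1 + b2^2*c0^2*c2 + b1*b3*c0*c1^2 + -2*b1*b3*c0^2*c2 + -1*b1*b2*c0*c1*c2 + b1^2*c0*c2^2 + -1*b0*b3*c1^3 + 3*b0*b3*c0*c1*c2 + b0*b2*c1^2*c2 + -2*b0*b2*c0*c2^2 + -1*b0*b1*c1*c2^2 + b0^2*c2^3) = btil^3 * R0ab := by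
      linear_combination (b3^2*c1^2*x^2*btil + -1*b3^2*c0*c1*x*btil + b3^2*c0^2*btil + b2*b3*c1^2*x*btil + -1*b2*b3*c0*c1*btil + -1*b2^2*c1*c2*x*btil + b2^2*c0*c2*btil + 2*b1*b3*c1*c2*x*btil + b1*b3*c1^2*btil + -2*b1*b3*c0*c2*btil + 2*b1*b3^2*c1*x*atil*btil + -1*b1*b3^2*c0*atil*btil + -1*b1*b2*c1*c2*btil + b1*b2*b3*c1*atil*btil + -1*b1*b2^2*c2*atil*btil + b1^2*c2^2*btil + 2*b1^2*b3*c2*atil*btil + b1^2*b3^2*atil^2*btil + 3*b0*b3*c1*c2*btil + -2*b0*b2*c2^2*btil + -2*a1*b3^2*c1*x*btil^2 + a1*b3^2*c0*btil^2 + -1*a1*b2*b3*c1*btil^2 + a1*b2^2*c2*btil^2 + -2*a1*b1*b3*c2*btil^2 + -2*a1*b1*b3^2*atil*btil^2 + a1^2*b3^2*btil^3) * hE3 + (-1*b3^2*c2^2*x^5*btil + b3^2*c1*c2*x^4*btil + -1*b3^2*c1^2*x^3*btil + -1*b2*b3*c2^2*x^4*btil + b2*b3*c1*c2*x^3*btil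 + -1*b2*b3*c1^2*x^2*btil + -2*b2*b3^2*c2*x^4*atil*btil + b2*b3^2*c1*x^3*atil*btil + -1*b2^2*c2^2*x^3*btil + b2^2*c1*c2*x^2*btil + -2*b2^2*b3*c2*x^3*atil*btil + b2^2*b3*c1*x^2*atil*btil + -1*b2^2*b3^2*x^3*atil^2*btil + -1*b2^3*c2*x^2*atil*btil + -1*b2^3*b3*x^2*atil^2*btil + b1*b3*c2^2*x^3*btil + -1*b1*b3*c1*c2*x^2*btil + -1*b1*b3*c1^2*x*btil + 3*b1*b3^2*c2*x^3*atil*btil + -3*b1*b3^2*c1*x^2*atil*btil + -1*b1*b2*c2^2*x^2*btil + b1*b2*c1*c2*x*btil + 2*b1*b2*b3*c2*x^2*atil*btil + -1*b1*b2*b3*c1*x*atil*btil + 3*b1*b2*b3^2*x^2*atil^2*btil + b1*b2^2*c2*x*atil*btil + b1*b2^2*b3*x*atil^2*btil + -1*b1^2*c2^2*x*btil + -3*b1^2*b3*c2*x*atil*btil + -1*b1^2*b3*c1*atil*btil + -3*b1^2*b3^2*x*atil^2*btil + b1^2*b2*c2*atil*btil + 2*b0*b3*c2^2*x^2*btil +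 -2*b0*b3*c1*c2*x*btil + -1*b0*b3*c1^2*btil + b0*b2*c2^2*x*btil + b0*b2*c1*c2*btil + b0*b2*b3*c2*x*atil*btil + b0*b2*b3*c1*atil*btil + -1*b0*b2^2*c2*atil*btil + -1*b0*b2^2*b3*atil^2*btil + -1*b0*b1*c2^2*btil + -3*b0*b1*b3*c2*atil*btil + 2*a2*b3^2*c2*x^4*btil^2 + -1*a2*b3^2*c1*x^3*btil^2 + 2*a2*b2*b3*c2*x^3*btil^2 + -1*a2*b2*b3*c1*x^2*btil^2 + 2*a2*b2*b3^2*x^3*atil*btil^2 + a2*b2^2*c2*x^2*btil^2 + 2*a2*b2^2*b3*x^2*atil*btil^2 + -1*a2*b1*b3*c1*x*btil^2 + -3*a2*b1*b3^2*x^2*atil*btil^2 + a2*b1*b2*c2*x*btil^2 + -1*a2*b1^2*b3*atil*btil^2 + -1*a2*b0*b3*c2*x*btil^2 + -1*a2*b0*b3*c1*btil^2 + a2*b0*b2*c2*btil^2 + 2*a2*b0*b2*b3*atil*btil^2 + -1*a2^2*b3^2*x^3*btil^3 + -1*a2^2*b2*b3*x^2*btil^3 + -1*a2^2*b1*b3*x*btil^3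 + -1*a2^2*b0*b3*btil^3 + -3*a1*b3^2*c2*x^3*btil^2 + 3*a1*b3^2*c1*x^2*btil^2 + -2*a1*b2*b3*c2*x^2*btil^2 + 2*a1*b2*b3*c1*x*btil^2 + -3*a1*b2*b3^2*x^2*atil*btil^2 + -2*a1*b2^2*c2*x*btil^2 + -2*a1*b2^2*b3*x*atil*btil^2 + 3*a1*b1*b3*c2*x*btil^2 + a1*b1*b3*c1*btil^2 + 6*a1*b1*b3^2*x*atil*btil^2 + -1*a1*b1*b2*c2*btil^2 + a1*b1*b2*b3*atil*btil^2 + 3*a1*b0*b3*c2*btil^2 + 3*a1*a2*b3^2*x^2*btil^3 + 2*a1*a2*b2*b3*x*btil^3 + a1*a2*b1*b3*btil^3 + -3*a1^2*b3^2*x*btil^3 + -1*a1^2*b2*b3*btil^3) * hE2 + (b3^2*c2^2*x^6*btil + -1*b3^3*c2*x^6*atil*btil + b3^4*x^6*atil^2*btil + b2*b3*c2^2*x^5*btil + 2*b2*b3^2*c2*x^5*atil*btil + -2*b2*b3^3*x^5*atil^2*btil + b2^2*c2^2*x^4*btil + 2*b2^2*b3*c2*x^4*atil*btil + b2^2*b3^2*x^4*atil^2*btil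 + 2*b2^3*c2*x^3*atil*btil + b2^3*b3*x^3*atil^2*btil + b2^4*x^2*atil^2*btil + -1*b1*b3*c2^2*x^4*btil + -2*b1*b3^2*c2*x^4*atil*btil + 2*b1*b3^3*x^4*atil^2*btil + b1*b2*c2^2*x^3*btil + -4*b1*b2*b3*c2*x^3*atil*btil + -2*b1*b2*b3^2*x^3*atil^2*btil + -3*b1*b2^2*b3*x^2*atil^2*btil + -1*b1*b2^3*x*atil^2*btil + b1^2*c2^2*x^2*btil + 2*b1^2*b3*c2*x^2*atil*btil + b1^2*b3^2*x^2*atil^2*btil + 3*b1^2*b2*b3*x*atil^2*btil + -1*b1^3*c2*atil*btil + -1*b1^3*b3*atil^2*btil + -2*b0*b3*c2^2*x^3*btil + 2*b0*b3^2*c2*x^3*atil*btil + -2*b0*b3^3*x^3*atil^2*btil + -1*b0*b2*c2^2*x^2*btil + -2*b0*b2*b3*c2*x^2*atil*btil + 2*b0*b2*b3^2*x^2*atil^2*btil + b0*b2^3*atil^2*btil + b0*b1*c2^2*x*btil + 2*b0*b1*b3*c2*x*atil*btil + -2*b0*b1*b3^2*x*atil^2*btil + 3*b0*b1*b2*c2*atil*btil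 + b0^2*c2^2*btil + -1*b0^2*b3*c2*atil*btil + b0^2*b3^2*atil^2*btil + a3*b3^2*c2*x^6*btil^2 + -2*a3*b3^3*x^6*atil*btil^2 + a3*b2*b3*c2*x^5*btil^2 + a3*b2*b3^2*x^5*atil*btil^2 + a3*b2^2*c2*x^4*btil^2 + a3*b2^2*b3*x^4*atil*btil^2 + 2*a3*b2^3*x^3*atil*btil^2 + -1*a3*b1*b3*c2*x^4*btil^2 + -1*a3*b1*b3^2*x^4*atil*btil^2 + a3*b1*b2*c2*x^3*btil^2 + -5*a3*b1*b2*b3*x^3*atil*btil^2 + a3*b1^2*c2*x^2*btil^2 + a3*b1^2*b3*x^2*atil*btil^2 + -1*a3*b1^3*atil*btil^2 + -2*a3*b0*b3*c2*x^3*btil^2 + 4*a3*b0*b3^2*x^3*atil*btil^2 + -1*a3*b0*b2*c2*x^2*btil^2 + -1*a3*b0*b2*b3*x^2*atil*btil^2 + a3*b0*b1*c2*x*btil^2 + a3*b0*b1*b3*x*atil*btil^2 + 3*a3*b0*b1*b2*atil*btil^2 + a3*b0^2*c2*btil^2 + -2*a3*b0^2*b3*atil*btil^2 + a3^2*b3^2*x^6*btil^3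 + a3^2*b2*b3*x^5*btil^3 + a3^2*b2^2*x^4*btil^3 + -1*a3^2*b1*b3*x^4*btil^3 + a3^2*b1*b2*x^3*btil^3 + a3^2*b1^2*x^2*btil^3 + -2*a3^2*b0*b3*x^3*btil^3 + -1*a3^2*b0*b2*x^2*btil^3 + a3^2*b0*b1*x*btil^3 + a3^2*b0^2*btil^3 + -3*a2*b3^2*c2*x^5*btil^2 + 3*a2*b3^3*x^5*atil*btil^2 + -3*a2*b2*b3*c2*x^4*btil^2 + -3*a2*b2*b3^2*x^4*atil*btil^2 + -2*a2*b2^2*c2*x^3*btil^2 + -4*a2*b2^2*b3*x^3*atil*btil^2 + -2*a2*b2^3*x^2*atil*btil^2 + a2*b1*b3*c2*x^3*btil^2 + 5*a2*b1*b3^2*x^3*atil*btil^2 + -2*a2*b1*b2*c2*x^2*btil^2 + 4*a2*b1*b2*b3*x^2*atil*btil^2 + -1*a2*b1^2*c2*x*btil^2 + -1*a2*b1^2*b3*x*atil*btil^2 + a2*b1^2*b2*atil*btil^2 + 3*a2*b0*b3*c2*x^2*btil^2 + -3*a2*b0*b3^2*x^2*atil*btil^2 + -2*a2*b0*b2^2*atil*btil^2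 + -1*a2*b0*b1*c2*btil^2 + -2*a2*b0*b1*b3*atil*btil^2 + -3*a2*a3*b3^2*x^5*btil^3 + -3*a2*a3*b2*b3*x^4*btil^3 + -2*a2*a3*b2^2*x^3*btil^3 + a2*a3*b1*b3*x^3*btil^3 + -2*a2*a3*b1*b2*x^2*btil^3 + -1*a2*a3*b1^2*x*btil^3 + 3*a2*a3*b0*b3*x^2*btil^3 + -1*a2*a3*b0*b1*btil^3 + 3*a2^2*b3^2*x^4*btil^3 + 3*a2^2*b2*b3*x^3*btil^3 + a2^2*b2^2*x^2*btil^3 + a2^2*b1*b3*x^2*btil^3 + a2^2*b1*b2*x*btil^3 + a2^2*b0*b2*btil^3 + 3*a1*b3^2*c2*x^4*btil^2 + -3*a1*b3^3*x^4*atil*btil^2 + 2*a1*b2*b3*c2*x^3*btil^2 + 4*a1*b2*b3^2*x^3*atil*btil^2 + 2*a1*b2^2*c2*x^2*btil^2 + 2*a1*b2^2*b3*x^2*atil*btil^2 + 2*a1*b2^3*x*atil*btil^2 + -3*a1*b1*b3*c2*x^2*btil^2 + -3*a1*b1*b3^2*x^2*atil*btil^2 + a1*b1*b2*c2*x*btil^2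 + -5*a1*b1*b2*b3*x*atil*btil^2 + -1*a1*b1*b2^2*atil*btil^2 + a1*b1^2*c2*btil^2 + 3*a1*b1^2*b3*atil*btil^2 + -3*a1*b0*b3*c2*x*btil^2 + 3*a1*b0*b3^2*x*atil*btil^2 + -2*a1*b0*b2*c2*btil^2 + -1*a1*b0*b2*b3*atil*btil^2 + 3*a1*a3*b3^2*x^4*btil^3 + 2*a1*a3*b2*b3*x^3*btil^3 + 2*a1*a3*b2^2*x^2*btil^3 + -3*a1*a3*b1*b3*x^2*btil^3 + a1*a3*b1*b2*x*btil^3 + a1*a3*b1^2*btil^3 + -3*a1*a3*b0*b3*x*btil^3 + -2*a1*a3*b0*b2*btil^3 + -6*a1*a2*b3^2*x^3*btil^3 + -4*a1*a2*b2*b3*x^2*btil^3 + -2*a1*a2*b2^2*x*btil^3 + 2*a1*a2*b1*b3*x*btil^3 + -1*a1*a2*b1*b2*btil^3 + 3*a1*a2*b0*b3*btil^3 + 3*a1^2*b3^2*x^2*btil^3 + a1^2*b2*b3*x*btil^3 + a1^2*b2^2*btil^3 + -2*a1^2*b1*b3*btil^3) * hE1 + (-1*b3^3*atil^2*btil^3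 + -2*a3*b3^3*x^3*atil*btil^3 + a3*b2^3*atil*btil^3 + -3*a3*b1*b2*b3*atil*btil^3 + 3*a3*b0*b3^2*atil*btil^3 + -1*a3^2*b3^3*x^6*btil^3 + a3^2*b2^3*x^3*btil^3 + -3*a3^2*b1*b2*b3*x^3*btil^3 + -1*a3^2*b1^3*btil^3 + 3*a3^2*b0*b3^2*x^3*btil^3 + 3*a3^2*b0*b1*b2*btil^3 + -3*a3^2*b0^2*b3*btil^3 + 2*a2*b3^3*x^2*atil*btil^3 + -1*a2*b2^2*b3*atil*btil^3 + 2*a2*b1*b3^2*atil*btil^3 + 2*a2*a3*b3^3*x^5*btil^3 + -1*a2*a3*b2^2*b3*x^3*btil^3 + -1*a2*a3*b2^3*x^2*btil^3 + 2*a2*a3*b1*b3^2*x^3*btil^3 + 3*a2*a3*b1*b2*b3*x^2*btil^3 + a2*a3*b1^2*b2*btil^3 + -3*a2*a3*b0*b3^2*x^2*btil^3 + -2*a2*a3*b0*b2^2*btil^3 + -1*a2*a3*b0*b1*b3*btil^3 + -1*a2^2*b3^3*x^4*btil^3 + a2^2*b2^2*b3*x^2*btil^3 + -2*a2^2*b1*b3^2*x^2*btil^3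 + -1*a2^2*b1^2*b3*btil^3 + 2*a2^2*b0*b2*b3*btil^3 + -2*a1*b3^3*x*atil*btil^3 + a1*b2*b3^2*atil*btil^3 + -2*a1*a3*b3^3*x^4*btil^3 + a1*a3*b2*b3^2*x^3*btil^3 + a1*a3*b2^3*x*btil^3 + -3*a1*a3*b1*b2*b3*x*btil^3 + -1*a1*a3*b1*b2^2*btil^3 + 2*a1*a3*b1^2*b3*btil^3 + 3*a1*a3*b0*b3^2*x*btil^3 + a1*a3*b0*b2*b3*btil^3 + 2*a1*a2*b3^3*x^3*btil^3 + -1*a1*a2*b2*b3^2*x^2*btil^3 + -1*a1*a2*b2^2*b3*x*btil^3 + 2*a1*a2*b1*b3^2*x*btil^3 + a1*a2*b1*b2*b3*btil^3 + -3*a1*a2*b0*b3^2*btil^3 + -1*a1^2*b3^3*x^2*btil^3 + a1^2*b2*b3^2*x*btil^3 + -1*a1^2*b1*b3^2*btil^3 + -1*a0*b3^3*atil*btil^3 + -1*a0*a3*b3^3*x^3*btil^3 + a0*a3*b2^3*btil^3 + -3*a0*a3*b1*b2*b3*btil^3 + 3*a0*a3*b0*b3^2*btil^3 + a0*a2*b3^3*x^2*btil^3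 + -1*a0*a2*b2^2*b3*btil^3 + 2*a0*a2*b1*b3^2*btil^3 + -1*a0*a1*b3^3*x*btil^3 + a0*a1*b2*b3^2*btil^3 + -1*a0^2*b3^3*btil^3) * hATIL + (b3^3*atil^3*btil^2 + -1*b3^4*x^3*atil^3*btil + b2*b3^3*x^2*atil^3*btil + -1*b1*b3^3*x*atil^3*btil + b0*b3^3*atil^3*btil + 3*a3*b3^3*x^3*atil^2*btil^2 + -1*a3*b2^3*atil^2*btil^2 + 3*a3*b1*b2*b3*atil^2*btil^2 + -3*a3*b0*b3^2*atil^2*btil^2 + a3^3*b3^2*x^6*btil^3 + a3^3*b2*b3*x^5*btil^3 + a3^3*b2^2*x^4*btil^3 + -1*a3^3*b1*b3*x^4*btil^3 + a3^3*b1*b2*x^3*btil^3 + a3^3*b1^2*x^2*btil^3 + -2*a3^3*b0*b3*x^3*btil^3 + -1*a3^3*b0*b2*x^2*btil^3 + a3^3*b0*b1*x*btil^3 + a3^3*b0^2*btil^3 + -3*a2*b3^3*x^2*atil^2*btil^2 + a2*b2^2*b3*atil^2*btil^2 + -2*a2*b1*b3^2*atil^2*btil^2 + -3*a2*a3^2*b3^2*x^5*btil^3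 + -3*a2*a3^2*b2*b3*x^4*btil^3 + -2*a2*a3^2*b2^2*x^3*btil^3 + a2*a3^2*b1*b3*x^3*btil^3 + -2*a2*a3^2*b1*b2*x^2*btil^3 + -1*a2*a3^2*b1^2*x*btil^3 + 3*a2*a3^2*b0*b3*x^2*btil^3 + -1*a2*a3^2*b0*b1*btil^3 + 3*a2^2*a3*b3^2*x^4*btil^3 + 3*a2^2*a3*b2*b3*x^3*btil^3 + a2^2*a3*b2^2*x^2*btil^3 + a2^2*a3*b1*b3*x^2*btil^3 + a2^2*a3*b1*b2*x*btil^3 + a2^2*a3*b0*b2*btil^3 + -1*a2^3*b3^2*x^3*btil^3 + -1*a2^3*b2*b3*x^2*btil^3 + -1*a2^3*b1*b3*x*btil^3 + -1*a2^3*b0*b3*btil^3 + 3*a1*b3^3*x*atil^2*btil^2 + -1*a1*b2*b3^2*atil^2*btil^2 + 3*a1*a3^2*b3^2*x^4*btil^3 + 2*a1*a3^2*b2*b3*x^3*btil^3 + 2*a1*a3^2*b2^2*x^2*btil^3 + -3*a1*a3^2*b1*b3*x^2*btil^3 + a1*a3^2*b1*b2*x*btil^3 + a1*a3^2*b1^2*btil^3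 + -3*a1*a3^2*b0*b3*x*btil^3 + -2*a1*a3^2*b0*b2*btil^3 + -6*a1*a2*a3*b3^2*x^3*btil^3 + -4*a1*a2*a3*b2*b3*x^2*btil^3 + -2*a1*a2*a3*b2^2*x*btil^3 + 2*a1*a2*a3*b1*b3*x*btil^3 + -1*a1*a2*a3*b1*b2*btil^3 + 3*a1*a2*a3*b0*b3*btil^3 + 3*a1*a2^2*b3^2*x^2*btil^3 + 2*a1*a2^2*b2*b3*x*btil^3 + a1*a2^2*b1*b3*btil^3 + 3*a1^2*a3*b3^2*x^2*btil^3 + a1^2*a3*b2*b3*x*btil^3 + a1^2*a3*b2^2*btil^3 + -2*a1^2*a3*b1*b3*btil^3 + -3*a1^2*a2*b3^2*x*btil^3 + -1*a1^2*a2*b2*b3*btil^3 + a1^3*b3^2*btil^3) * hBTIL + (-(btil^3)) * hDET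
    have hH : (b3^2*c0^3 + -1*b2*b3*c0^2*c1 + b2^2*c0^2*c2 + b1*b3*c0*c1^2 + -2*b1*b3*c0^2*c2 + -1*b1*b2*c0*c1*c2 + b1^2*c0*c2^2 + -1*b0*b3*c1^3 + 3*b0*b3*c0*c1*c2 + b0*b2*c1^2*c2 + -2*b0*b2*c0*c2^2 + -1*b0*b1*c1*c2^2 + b0^2*c2^3) = btil^2 * R0ab := by
      have h' : btil * ((b3^2*c0^3 + -1*b2*b3*c0^2*c1 + b2^2*c0^2*c2 + b1*b3*c0*c1^2 + -2*b1*b3*c0^2*c2 + -1*b1*b2*c0*c1*c2 + b1^2*c0*c2^2 + -1*b0*b3*c1^3 + 3*b0*b3*c0*c1*c2 + b0*b2*c1^2*c2 + -2*b0*b2*c0*c2^2 + -1*b0*b1*c1*c2^2 + b0^2*c2^3)) = btil * (btil^2 * R0ab) := by linear_combination hHpre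
      exact mul_left_cancel₀ hbne h'
    have hG : ((c2*d0 - c0*d2)^2 - (c1*d0 - c0*d1)*(c2*d1 - c1*d2)) = btil^4*ctil*R0ab := by
      linear_combination (-1*c2^2*d1*x + c2^2*d0 + -1*c1*c2*d1 + -1*c1*c2^2*btil^2 + c1^2*d2 + -2*c0*c2*d2 + b1*c2^2*btil*ctil) * hF3 + (-1*c2^2*d2*x^3 + c2^2*d1*x^2 + -1*c2^3*x^2*btil^2 + -1*c1*c2*d2*x^2 + c1*c2*d1*x + c1*c2^2*x*btil^2 + -1*c1^2*d2*x + c1^2*c2*btil^2 + c0*c2*d2*x + c0*c2*d1 + -1*c0*c2^2*btil^2 + -1*c0*c1*d2 + b2*c2^2*x^2*btil*ctil + b2*c1*c2*x*btil*ctil + b2*c0*c2*btil*ctil + -2*b1*c2^2*x*btil*ctil + -1*b1*c1*c2*btil*ctil) * hF2 + (c2^2*d2*x^4 + 2*c2^3*x^3*btil^2 + c1*c2*d2*x^3 + c1^2*d2*x^2 + -1*c1^3*btil^2 + -1*c0*c2*d2*x^2 + c0*c1*d2*x + 3*c0*c1*c2*btil^2 + c0^2*d2 + b3*c2^2*x^4*btil*ctil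 + b3*c1*c2*x^3*btil*ctil + b3*c1^2*x^2*btil*ctil + -1*b3*c0*c2*x^2*btil*ctil + b3*c0*c1*x*btil*ctil + b3*c0^2*btil*ctil + -2*b2*c2^2*x^3*btil*ctil + -2*b2*c1*c2*x^2*btil*ctil + -1*b2*c1^2*x*btil*ctil + -1*b2*c0*c1*btil*ctil + 2*b1*c2^2*x^2*btil*ctil + b1*c1*c2*x*btil*ctil + b1*c1^2*btil*ctil + -2*b1*c0*c2*btil*ctil) * hF1 + (c2^3*btil^3*ctil + b3*c2^3*x^3*btil^2*ctil + -1*b3*c1^3*btil^2*ctil + 3*b3*c0*c1*c2*btil^2*ctil + -1*b2*c2^3*x^2*btil^2*ctil + b2*c1^2*c2*btil^2*ctil + -2*b2*c0*c2^2*btil^2*ctil + b1*c2^3*x*btil^2*ctil + -1*b1*c1*c2^2*btil^2*ctil + b0*c2^3*btil^2*ctil) * hBTIL + (-1*c2^3*btil^4 + b3^2*c2^2*x^4*btil^2*ctil + b3^2*c1*c2*x^3*btil^2*ctil + b3^2*c1^2*x^2*btil^2*ctil + -1*b3^2*c0*c2*x^2*btil^2*ctil + b3^2*c0*c1*x*btil^2*ctil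 + b3^2*c0^2*btil^2*ctil + -2*b2*b3*c2^2*x^3*btil^2*ctil + -2*b2*b3*c1*c2*x^2*btil^2*ctil + -1*b2*b3*c1^2*x*btil^2*ctil + -1*b2*b3*c0*c1*btil^2*ctil + b2^2*c2^2*x^2*btil^2*ctil + b2^2*c1*c2*x*btil^2*ctil + b2^2*c0*c2*btil^2*ctil + 2*b1*b3*c2^2*x^2*btil^2*ctil + b1*b3*c1*c2*x*btil^2*ctil + b1*b3*c1^2*btil^2*ctil + -2*b1*b3*c0*c2*btil^2*ctil + -2*b1*b2*c2^2*x*btil^2*ctil + -1*b1*b2*c1*c2*btil^2*ctil + b1^2*c2^2*btil^2*ctil) * hctil + (btil^2*ctil) * hH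
    have hRpos : 0 < ((c2*d0 - c0*d2)^2 - (c1*d0 - c0*d1)*(c2*d1 - c1*d2)) := by rw [hG]; exact mul_pos (mul_pos hb4pos hcpos) hdetpos
    rcases hss with hP | hN
    · have hsatil : 0 ≤ atil := hP atil (by simp)
      have hsb : 0 ≤ btil := hP btil (by simp)
      have hsc0 : 0 ≤ c0 := hP c0 (by simp)
      have hsc1 : 0 ≤ c1 := hP c1 (by simp)
      have hsc2 : 0 ≤ c2 := hP c2 (by simp)
      have hsd0 : 0 ≤ d0 := hP d0 (by simp)
      have hsd1 : 0 ≤ d1 := hP d1 (by simp)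
      have hsd2 : 0 ≤ d2 := hP d2 (by simp)
      have hsl : 0 ≤ (d2*(c2*d0 - c0*d2) - d1*(c2*d1 - c1*d2)) := hP _ (by simp)
      have hbpos : 0 < btil := hsb.lt_of_ne (Ne.symm hbne)
      have hb3pos : 0 < b3 := by
        rcases hb3n.lt_or_eq with h | hb3eq
        · exact h
        · exfalso
          have hd2z : d2 = 0 := by linear_combination hF1 - btil*ctil*hb3eq
          have hcd2 : c0*d2 = 0 := by rw [hd2z]; ring
          have h20 : c2*d0 = 0 := le_antisymm (by linarith only [hal2n, hcd2]) (mul_nonneg hsc2 hsd0)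
          rcases mul_eq_zero.mp h20 with hc2z | hd0z
          · have hRz : ((c2*d0 - c0*d2)^2 - (c1*d0 - c0*d1)*(c2*d1 - c1*d2)) = 0 := by rw [hc2z, hd2z]; ring
            linarith only [hRz, hRpos]
          · rw [hd0z, hd2z] at hRpos hsl
            nlinarith only [hRpos, hsl, hsc0]
      have hd2pos : 0 < d2 := by rw [hF1]; exact mul_pos (mul_pos hbpos hb3pos) hcpos
      have hd0pos : 0 < d0 := by
        rcases hsd0.lt_or_eq with h | h
        · exact h
        · exfalso
          nlinarith only [hT, mul_pos hRpos hd2pos, mul_nonneg hal2n hsl, h, sq_nonneg (c2*d1 - c1*d2)]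
      have hal3neg : c2*d1 - c1*d2 < 0 := by
        rcases lt_or_ge (c2*d1 - c1*d2) 0 with h | hge
        · exact h
        · exfalso
          have h1 : 0 ≤ d1*(c2*d1 - c1*d2) := mul_nonneg hsd1 hge
          have h2 : d2*(c2*d0 - c0*d2) ≤ 0 := mul_np hd2pos.le (by linarith only [hal2n])
          have h3 : d2*(c2*d0 - c0*d2) = 0 := by linarith only [hsl, h1, h2]
          have h4 : d1*(c2*d1 - c1*d2) = 0 := by linarith only [hsl, h1, h2]
          have hal2z : c2*d0 - c0*d2 = 0 := by
            rcases mul_eq_zero.mp h3 with h' | h'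
            · exact absurd h' (ne_of_gt hd2pos)
            · exact h'
          rcases mul_eq_zero.mp h4 with hd1z | hal3z
          · have h8 : c2*d1 = 0 := by rw [hd1z]; ring
            have h6 : 0 ≤ c1*d2 := mul_nonneg hsc1 hd2pos.le
            have hal3z : c2*d1 - c1*d2 = 0 := by linarith only [h8, h6, hge]
            rw [hal2z, hal3z] at hRpos
            norm_num at hRpos
          · rw [hal2z, hal3z] at hRpos
            norm_num at hRpos
      refine ⟨Or.inr (Or.inr (Or.inr hb3pos)), Or.inl ?_, hbne, mul_nonneg hsc2 hsd2, mul_nonneg hsd0 hsl, ?_, ne_of_gt hd0pos, ne_of_gt hd2pos, hcpos, hal3neg, hdetpos⟩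
      · intro t ht
        simp only [List.mem_cons, List.not_mem_nil, or_false] at ht
        rcases ht with rfl | rfl
        · exact hsatil
        · exact hsb
      · nlinarith only [mul_nonneg (mul_nonneg hal2n hsd0) hsd2]
    · have hsatil : atil ≤ 0 := hN atil (by simp)
      have hsb : btil ≤ 0 := hN btil (by simp)
      have hsc0 : c0 ≤ 0 := hN c0 (by simp)
      have hsc1 : c1 ≤ 0 := hN c1 (by simp)
      have hsc2 : c2 ≤ 0 := hN c2 (by simp)
      have hsd0 : d0 ≤ 0 := hN d0 (by simp)
      have hsd1 : d1 ≤ 0 := hN d1 (by simp)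
      have hsd2 : d2 ≤ 0 := hN d2 (by simp)
      have hsl : (d2*(c2*d0 - c0*d2) - d1*(c2*d1 - c1*d2)) ≤ 0 := hN _ (by simp)
      have hbneg : btil < 0 := hsb.lt_of_ne hbne
      have hb3pos : 0 < b3 := by
        rcases hb3n.lt_or_eq with h | hb3eq
        · exact h
        · exfalso
          have hd2z : d2 = 0 := by linear_combination hF1 - btil*ctil*hb3eq
          have hcd2 : c0*d2 = 0 := by rw [hd2z]; ring
          have h20 : c2*d0 = 0 := le_antisymm (by linarith only [hal2n, hcd2]) (mul_nn hsc2 hsd0)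
          rcases mul_eq_zero.mp h20 with hc2z | hd0z
          · have hRz : ((c2*d0 - c0*d2)^2 - (c1*d0 - c0*d1)*(c2*d1 - c1*d2)) = 0 := by rw [hc2z, hd2z]; ring
            linarith only [hRz, hRpos]
          · rw [hd0z, hd2z] at hRpos hsl
            nlinarith only [hRpos, hsl, hsc0]
      have hd2neg : d2 < 0 := by
        rw [hF1]
        nlinarith only [mul_pos hb3pos hcpos, hbneg]
      have hd0neg : d0 < 0 := by
        rcases hsd0.lt_or_eq with h | h
        · exact h
        · exfalso
          nlinarith only [hT, mul_neg_of_pos_of_neg hRpos hd2neg, mul_nonneg hal2n (neg_nonneg.mpr hsl), h, sq_nonneg (c2*d1 - c1*d2)]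
      have hal3neg : c2*d1 - c1*d2 < 0 := by
        rcases lt_or_ge (c2*d1 - c1*d2) 0 with h | hge
        · exact h
        · exfalso
          have h1 : d1*(c2*d1 - c1*d2) ≤ 0 := mul_pn hsd1 hge
          have h2 : 0 ≤ d2*(c2*d0 - c0*d2) := mul_nn hd2neg.le (by linarith only [hal2n])
          have h3 : d2*(c2*d0 - c0*d2) = 0 := by linarith only [hsl, h1, h2]
          have h4 : d1*(c2*d1 - c1*d2) = 0 := by linarith only [hsl, h1, h2]
          have hal2z : c2*d0 - c0*d2 = 0 := by
            rcases mul_eq_zero.mp h3 with h' | h'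
            · exact absurd h' (ne_of_lt hd2neg)
            · exact h'
          rcases mul_eq_zero.mp h4 with hd1z | hal3z
          · have h8 : c2*d1 = 0 := by rw [hd1z]; ring
            have h6 : 0 ≤ c1*d2 := mul_nn hsc1 hd2neg.le
            have hal3z : c2*d1 - c1*d2 = 0 := by linarith only [h8, h6, hge]
            rw [hal2z, hal3z] at hRpos
            norm_num at hRpos
          · rw [hal2z, hal3z] at hRpos
            norm_num at hRpos
      refine ⟨Or.inr (Or.inr (Or.inr hb3pos)), Or.inr ?_, hbne, mul_nn hsc2 hsd2, mul_nn hsd0 hsl, ?_, ne_of_lt hd0neg, ne_of_lt hd2neg, hcpos, hal3neg, hdetpos⟩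
      · intro t ht
        simp only [List.mem_cons, List.not_mem_nil, or_false] at ht
        rcases ht with rfl | rfl
        · exact hsatil
        · exact hsb
      · nlinarith only [mul_nonneg hal2n (mul_nn hsd0 hsd2)]
  · rintro ⟨hex, hss2, hbne, hc2d2, hd0l3, hal2dd, hd0ne, hd2ne, hcpos, hal3neg, hdetpos⟩
    have hb2sq : 0 < btil^2 := lt_of_le_of_ne (sq_nonneg btil) (Ne.symm (pow_ne_zero 2 hbne))
    have hb4pos : 0 < btil^4 := by nlinarith only [hb2sq]
    have hHpre : btil * (b3^2*c0^3 + -1*b2*b3*c0^2*c1 + b2^2*c0^2*c2 + b1*b3*c0*c1^2 + -2*b1*b3*c0^2*c2 + -1*b1*b2*c0*c1*c2 + b1^2*c0*c2^2 + -1*b0*b3*c1^3 + 3*b0*b3*c0*c1*c2 + b0*b2*c1^2*c2 + -2*b0*b2*c0*c2^2 + -1*b0*b1*c1*c2^2 + b0^2*c2^3) = btil^3 * R0ab := by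
      linear_combination (b3^2*c1^2*x^2*btil + -1*b3^2*c0*c1*x*btil + b3^2*c0^2*btil + b2*b3*c1^2*x*btil + -1*b2*b3*c0*c1*btil + -1*b2^2*c1*c2*x*btil + b2^2*c0*c2*btil + 2*b1*b3*c1*c2*x*btil + b1*b3*c1^2*btil + -2*b1*b3*c0*c2*btil + 2*b1*b3^2*c1*x*atil*btil + -1*b1*b3^2*c0*atil*btil + -1*b1*b2*c1*c2*btil + b1*b2*b3*c1*atil*btil + -1*b1*b2^2*c2*atil*btil + b1^2*c2^2*btil + 2*b1^2*b3*c2*atil*btil + b1^2*b3^2*atil^2*btil + 3*b0*b3*c1*c2*btil + -2*b0*b2*c2^2*btil + -2*a1*b3^2*c1*x*btil^2 + a1*b3^2*c0*btil^2 + -1*a1*b2*b3*c1*btil^2 + a1*b2^2*c2*btil^2 + -2*a1*b1*b3*c2*btil^2 + -2*a1*b1*b3^2*atil*btil^2 + a1^2*b3^2*btil^3) * hE3 + (-1*b3^2*c2^2*x^5*btil + b3^2*c1*c2*x^4*btil + -1*b3^2*c1^2*x^3*btil + -1*b2*b3*c2^2*x^4*btil + b2*b3*c1*c2*x^3*btil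 + -1*b2*b3*c1^2*x^2*btil + -2*b2*b3^2*c2*x^4*atil*btil + b2*b3^2*c1*x^3*atil*btil + -1*b2^2*c2^2*x^3*btil + b2^2*c1*c2*x^2*btil + -2*b2^2*b3*c2*x^3*atil*btil + b2^2*b3*c1*x^2*atil*btil + -1*b2^2*b3^2*x^3*atil^2*btil + -1*b2^3*c2*x^2*atil*btil + -1*b2^3*b3*x^2*atil^2*btil + b1*b3*c2^2*x^3*btil + -1*b1*b3*c1*c2*x^2*btil + -1*b1*b3*c1^2*x*btil + 3*b1*b3^2*c2*x^3*atil*btil + -3*b1*b3^2*c1*x^2*atil*btil + -1*b1*b2*c2^2*x^2*btil + b1*b2*c1*c2*x*btil + 2*b1*b2*b3*c2*x^2*atil*btil + -1*b1*b2*b3*c1*x*atil*btil + 3*b1*b2*b3^2*x^2*atil^2*btil + b1*b2^2*c2*x*atil*btil + b1*b2^2*b3*x*atil^2*btil + -1*b1^2*c2^2*x*btil + -3*b1^2*b3*c2*x*atil*btil + -1*b1^2*b3*c1*atil*btil + -3*b1^2*b3^2*x*atil^2*btil + b1^2*b2*c2*atil*btil + 2*b0*b3*c2^2*x^2*btil +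 -2*b0*b3*c1*c2*x*btil + -1*b0*b3*c1^2*btil + b0*b2*c2^2*x*btil + b0*b2*c1*c2*btil + b0*b2*b3*c2*x*atil*btil + b0*b2*b3*c1*atil*btil + -1*b0*b2^2*c2*atil*btil + -1*b0*b2^2*b3*atil^2*btil + -1*b0*b1*c2^2*btil + -3*b0*b1*b3*c2*atil*btil + 2*a2*b3^2*c2*x^4*btil^2 + -1*a2*b3^2*c1*x^3*btil^2 + 2*a2*b2*b3*c2*x^3*btil^2 + -1*a2*b2*b3*c1*x^2*btil^2 + 2*a2*b2*b3^2*x^3*atil*btil^2 + a2*b2^2*c2*x^2*btil^2 + 2*a2*b2^2*b3*x^2*atil*btil^2 + -1*a2*b1*b3*c1*x*btil^2 + -3*a2*b1*b3^2*x^2*atil*btil^2 + a2*b1*b2*c2*x*btil^2 + -1*a2*b1^2*b3*atil*btil^2 + -1*a2*b0*b3*c2*x*btil^2 + -1*a2*b0*b3*c1*btil^2 + a2*b0*b2*c2*btil^2 + 2*a2*b0*b2*b3*atil*btil^2 + -1*a2^2*b3^2*x^3*btil^3 + -1*a2^2*b2*b3*x^2*btil^3 + -1*a2^2*b1*b3*x*btil^3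 + -1*a2^2*b0*b3*btil^3 + -3*a1*b3^2*c2*x^3*btil^2 + 3*a1*b3^2*c1*x^2*btil^2 + -2*a1*b2*b3*c2*x^2*btil^2 + 2*a1*b2*b3*c1*x*btil^2 + -3*a1*b2*b3^2*x^2*atil*btil^2 + -2*a1*b2^2*c2*x*btil^2 + -2*a1*b2^2*b3*x*atil*btil^2 + 3*a1*b1*b3*c2*x*btil^2 + a1*b1*b3*c1*btil^2 + 6*a1*b1*b3^2*x*atil*btil^2 + -1*a1*b1*b2*c2*btil^2 + a1*b1*b2*b3*atil*btil^2 + 3*a1*b0*b3*c2*btil^2 + 3*a1*a2*b3^2*x^2*btil^3 + 2*a1*a2*b2*b3*x*btil^3 + a1*a2*b1*b3*btil^3 + -3*a1^2*b3^2*x*btil^3 + -1*a1^2*b2*b3*btil^3) * hE2 + (b3^2*c2^2*x^6*btil + -1*b3^3*c2*x^6*atil*btil + b3^4*x^6*atil^2*btil + b2*b3*c2^2*x^5*btil + 2*b2*b3^2*c2*x^5*atil*btil + -2*b2*b3^3*x^5*atil^2*btil + b2^2*c2^2*x^4*btil + 2*b2^2*b3*c2*x^4*atil*btil + b2^2*b3^2*x^4*atil^2*btil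 + 2*b2^3*c2*x^3*atil*btil + b2^3*b3*x^3*atil^2*btil + b2^4*x^2*atil^2*btil + -1*b1*b3*c2^2*x^4*btil + -2*b1*b3^2*c2*x^4*atil*btil + 2*b1*b3^3*x^4*atil^2*btil + b1*b2*c2^2*x^3*btil + -4*b1*b2*b3*c2*x^3*atil*btil + -2*b1*b2*b3^2*x^3*atil^2*btil + -3*b1*b2^2*b3*x^2*atil^2*btil + -1*b1*b2^3*x*atil^2*btil + b1^2*c2^2*x^2*btil + 2*b1^2*b3*c2*x^2*atil*btil + b1^2*b3^2*x^2*atil^2*btil + 3*b1^2*b2*b3*x*atil^2*btil + -1*b1^3*c2*atil*btil + -1*b1^3*b3*atil^2*btil + -2*b0*b3*c2^2*x^3*btil + 2*b0*b3^2*c2*x^3*atil*btil + -2*b0*b3^3*x^3*atil^2*btil + -1*b0*b2*c2^2*x^2*btil + -2*b0*b2*b3*c2*x^2*atil*btil + 2*b0*b2*b3^2*x^2*atil^2*btil + b0*b2^3*atil^2*btil + b0*b1*c2^2*x*btil + 2*b0*b1*b3*c2*x*atil*btil + -2*b0*b1*b3^2*x*atil^2*btil + 3*b0*b1*b2*c2*atil*btil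 + b0^2*c2^2*btil + -1*b0^2*b3*c2*atil*btil + b0^2*b3^2*atil^2*btil + a3*b3^2*c2*x^6*btil^2 + -2*a3*b3^3*x^6*atil*btil^2 + a3*b2*b3*c2*x^5*btil^2 + a3*b2*b3^2*x^5*atil*btil^2 + a3*b2^2*c2*x^4*btil^2 + a3*b2^2*b3*x^4*atil*btil^2 + 2*a3*b2^3*x^3*atil*btil^2 + -1*a3*b1*b3*c2*x^4*btil^2 + -1*a3*b1*b3^2*x^4*atil*btil^2 + a3*b1*b2*c2*x^3*btil^2 + -5*a3*b1*b2*b3*x^3*atil*btil^2 + a3*b1^2*c2*x^2*btil^2 + a3*b1^2*b3*x^2*atil*btil^2 + -1*a3*b1^3*atil*btil^2 + -2*a3*b0*b3*c2*x^3*btil^2 + 4*a3*b0*b3^2*x^3*atil*btil^2 + -1*a3*b0*b2*c2*x^2*btil^2 + -1*a3*b0*b2*b3*x^2*atil*btil^2 + a3*b0*b1*c2*x*btil^2 + a3*b0*b1*b3*x*atil*btil^2 + 3*a3*b0*b1*b2*atil*btil^2 + a3*b0^2*c2*btil^2 + -2*a3*b0^2*b3*atil*btil^2 + a3^2*b3^2*x^6*btil^3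 + a3^2*b2*b3*x^5*btil^3 + a3^2*b2^2*x^4*btil^3 + -1*a3^2*b1*b3*x^4*btil^3 + a3^2*b1*b2*x^3*btil^3 + a3^2*b1^2*x^2*btil^3 + -2*a3^2*b0*b3*x^3*btil^3 + -1*a3^2*b0*b2*x^2*btil^3 + a3^2*b0*b1*x*btil^3 + a3^2*b0^2*btil^3 + -3*a2*b3^2*c2*x^5*btil^2 + 3*a2*b3^3*x^5*atil*btil^2 + -3*a2*b2*b3*c2*x^4*btil^2 + -3*a2*b2*b3^2*x^4*atil*btil^2 + -2*a2*b2^2*c2*x^3*btil^2 + -4*a2*b2^2*b3*x^3*atil*btil^2 + -2*a2*b2^3*x^2*atil*btil^2 + a2*b1*b3*c2*x^3*btil^2 + 5*a2*b1*b3^2*x^3*atil*btil^2 + -2*a2*b1*b2*c2*x^2*btil^2 + 4*a2*b1*b2*b3*x^2*atil*btil^2 + -1*a2*b1^2*c2*x*btil^2 + -1*a2*b1^2*b3*x*atil*btil^2 + a2*b1^2*b2*atil*btil^2 + 3*a2*b0*b3*c2*x^2*btil^2 + -3*a2*b0*b3^2*x^2*atil*btil^2 + -2*a2*b0*b2^2*atil*btil^2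 + -1*a2*b0*b1*c2*btil^2 + -2*a2*b0*b1*b3*atil*btil^2 + -3*a2*a3*b3^2*x^5*btil^3 + -3*a2*a3*b2*b3*x^4*btil^3 + -2*a2*a3*b2^2*x^3*btil^3 + a2*a3*b1*b3*x^3*btil^3 + -2*a2*a3*b1*b2*x^2*btil^3 + -1*a2*a3*b1^2*x*btil^3 + 3*a2*a3*b0*b3*x^2*btil^3 + -1*a2*a3*b0*b1*btil^3 + 3*a2^2*b3^2*x^4*btil^3 + 3*a2^2*b2*b3*x^3*btil^3 + a2^2*b2^2*x^2*btil^3 + a2^2*b1*b3*x^2*btil^3 + a2^2*b1*b2*x*btil^3 + a2^2*b0*b2*btil^3 + 3*a1*b3^2*c2*x^4*btil^2 + -3*a1*b3^3*x^4*atil*btil^2 + 2*a1*b2*b3*c2*x^3*btil^2 + 4*a1*b2*b3^2*x^3*atil*btil^2 + 2*a1*b2^2*c2*x^2*btil^2 + 2*a1*b2^2*b3*x^2*atil*btil^2 + 2*a1*b2^3*x*atil*btil^2 + -3*a1*b1*b3*c2*x^2*btil^2 + -3*a1*b1*b3^2*x^2*atil*btil^2 + a1*b1*b2*c2*x*btil^2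 + -5*a1*b1*b2*b3*x*atil*btil^2 + -1*a1*b1*b2^2*atil*btil^2 + a1*b1^2*c2*btil^2 + 3*a1*b1^2*b3*atil*btil^2 + -3*a1*b0*b3*c2*x*btil^2 + 3*a1*b0*b3^2*x*atil*btil^2 + -2*a1*b0*b2*c2*btil^2 + -1*a1*b0*b2*b3*atil*btil^2 + 3*a1*a3*b3^2*x^4*btil^3 + 2*a1*a3*b2*b3*x^3*btil^3 + 2*a1*a3*b2^2*x^2*btil^3 + -3*a1*a3*b1*b3*x^2*btil^3 + a1*a3*b1*b2*x*btil^3 + a1*a3*b1^2*btil^3 + -3*a1*a3*b0*b3*x*btil^3 + -2*a1*a3*b0*b2*btil^3 + -6*a1*a2*b3^2*x^3*btil^3 + -4*a1*a2*b2*b3*x^2*btil^3 + -2*a1*a2*b2^2*x*btil^3 + 2*a1*a2*b1*b3*x*btil^3 + -1*a1*a2*b1*b2*btil^3 + 3*a1*a2*b0*b3*btil^3 + 3*a1^2*b3^2*x^2*btil^3 + a1^2*b2*b3*x*btil^3 + a1^2*b2^2*btil^3 + -2*a1^2*b1*b3*btil^3) * hE1 + (-1*b3^3*atil^2*btil^3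 + -2*a3*b3^3*x^3*atil*btil^3 + a3*b2^3*atil*btil^3 + -3*a3*b1*b2*b3*atil*btil^3 + 3*a3*b0*b3^2*atil*btil^3 + -1*a3^2*b3^3*x^6*btil^3 + a3^2*b2^3*x^3*btil^3 + -3*a3^2*b1*b2*b3*x^3*btil^3 + -1*a3^2*b1^3*btil^3 + 3*a3^2*b0*b3^2*x^3*btil^3 + 3*a3^2*b0*b1*b2*btil^3 + -3*a3^2*b0^2*b3*btil^3 + 2*a2*b3^3*x^2*atil*btil^3 + -1*a2*b2^2*b3*atil*btil^3 + 2*a2*b1*b3^2*atil*btil^3 + 2*a2*a3*b3^3*x^5*btil^3 + -1*a2*a3*b2^2*b3*x^3*btil^3 + -1*a2*a3*b2^3*x^2*btil^3 + 2*a2*a3*b1*b3^2*x^3*btil^3 + 3*a2*a3*b1*b2*b3*x^2*btil^3 + a2*a3*b1^2*b2*btil^3 + -3*a2*a3*b0*b3^2*x^2*btil^3 + -2*a2*a3*b0*b2^2*btil^3 + -1*a2*a3*b0*b1*b3*btil^3 + -1*a2^2*b3^3*x^4*btil^3 + a2^2*b2^2*b3*x^2*btil^3 + -2*a2^2*b1*b3^2*x^2*btil^3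 + -1*a2^2*b1^2*b3*btil^3 + 2*a2^2*b0*b2*b3*btil^3 + -2*a1*b3^3*x*atil*btil^3 + a1*b2*b3^2*atil*btil^3 + -2*a1*a3*b3^3*x^4*btil^3 + a1*a3*b2*b3^2*x^3*btil^3 + a1*a3*b2^3*x*btil^3 + -3*a1*a3*b1*b2*b3*x*btil^3 + -1*a1*a3*b1*b2^2*btil^3 + 2*a1*a3*b1^2*b3*btil^3 + 3*a1*a3*b0*b3^2*x*btil^3 + a1*a3*b0*b2*b3*btil^3 + 2*a1*a2*b3^3*x^3*btil^3 + -1*a1*a2*b2*b3^2*x^2*btil^3 + -1*a1*a2*b2^2*b3*x*btil^3 + 2*a1*a2*b1*b3^2*x*btil^3 + a1*a2*b1*b2*b3*btil^3 + -3*a1*a2*b0*b3^2*btil^3 + -1*a1^2*b3^3*x^2*btil^3 + a1^2*b2*b3^2*x*btil^3 + -1*a1^2*b1*b3^2*btil^3 + -1*a0*b3^3*atil*btil^3 + -1*a0*a3*b3^3*x^3*btil^3 + a0*a3*b2^3*btil^3 + -3*a0*a3*b1*b2*b3*btil^3 + 3*a0*a3*b0*b3^2*btil^3 + a0*a2*b3^3*x^2*btil^3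 + -1*a0*a2*b2^2*b3*btil^3 + 2*a0*a2*b1*b3^2*btil^3 + -1*a0*a1*b3^3*x*btil^3 + a0*a1*b2*b3^2*btil^3 + -1*a0^2*b3^3*btil^3) * hATIL + (b3^3*atil^3*btil^2 + -1*b3^4*x^3*atil^3*btil + b2*b3^3*x^2*atil^3*btil + -1*b1*b3^3*x*atil^3*btil + b0*b3^3*atil^3*btil + 3*a3*b3^3*x^3*atil^2*btil^2 + -1*a3*b2^3*atil^2*btil^2 + 3*a3*b1*b2*b3*atil^2*btil^2 + -3*a3*b0*b3^2*atil^2*btil^2 + a3^3*b3^2*x^6*btil^3 + a3^3*b2*b3*x^5*btil^3 + a3^3*b2^2*x^4*btil^3 + -1*a3^3*b1*b3*x^4*btil^3 + a3^3*b1*b2*x^3*btil^3 + a3^3*b1^2*x^2*btil^3 + -2*a3^3*b0*b3*x^3*btil^3 + -1*a3^3*b0*b2*x^2*btil^3 + a3^3*b0*b1*x*btil^3 + a3^3*b0^2*btil^3 + -3*a2*b3^3*x^2*atil^2*btil^2 + a2*b2^2*b3*atil^2*btil^2 + -2*a2*b1*b3^2*atil^2*btil^2 + -3*a2*a3^2*b3^2*x^5*btil^3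 + -3*a2*a3^2*b2*b3*x^4*btil^3 + -2*a2*a3^2*b2^2*x^3*btil^3 + a2*a3^2*b1*b3*x^3*btil^3 + -2*a2*a3^2*b1*b2*x^2*btil^3 + -1*a2*a3^2*b1^2*x*btil^3 + 3*a2*a3^2*b0*b3*x^2*btil^3 + -1*a2*a3^2*b0*b1*btil^3 + 3*a2^2*a3*b3^2*x^4*btil^3 + 3*a2^2*a3*b2*b3*x^3*btil^3 + a2^2*a3*b2^2*x^2*btil^3 + a2^2*a3*b1*b3*x^2*btil^3 + a2^2*a3*b1*b2*x*btil^3 + a2^2*a3*b0*b2*btil^3 + -1*a2^3*b3^2*x^3*btil^3 + -1*a2^3*b2*b3*x^2*btil^3 + -1*a2^3*b1*b3*x*btil^3 + -1*a2^3*b0*b3*btil^3 + 3*a1*b3^3*x*atil^2*btil^2 + -1*a1*b2*b3^2*atil^2*btil^2 + 3*a1*a3^2*b3^2*x^4*btil^3 + 2*a1*a3^2*b2*b3*x^3*btil^3 + 2*a1*a3^2*b2^2*x^2*btil^3 + -3*a1*a3^2*b1*b3*x^2*btil^3 + a1*a3^2*b1*b2*x*btil^3 + a1*a3^2*b1^2*btil^3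 + -3*a1*a3^2*b0*b3*x*btil^3 + -2*a1*a3^2*b0*b2*btil^3 + -6*a1*a2*a3*b3^2*x^3*btil^3 + -4*a1*a2*a3*b2*b3*x^2*btil^3 + -2*a1*a2*a3*b2^2*x*btil^3 + 2*a1*a2*a3*b1*b3*x*btil^3 + -1*a1*a2*a3*b1*b2*btil^3 + 3*a1*a2*a3*b0*b3*btil^3 + 3*a1*a2^2*b3^2*x^2*btil^3 + 2*a1*a2^2*b2*b3*x*btil^3 + a1*a2^2*b1*b3*btil^3 + 3*a1^2*a3*b3^2*x^2*btil^3 + a1^2*a3*b2*b3*x*btil^3 + a1^2*a3*b2^2*btil^3 + -2*a1^2*a3*b1*b3*btil^3 + -3*a1^2*a2*b3^2*x*btil^3 + -1*a1^2*a2*b2*b3*btil^3 + a1^3*b3^2*btil^3) * hBTIL + (-(btil^3)) * hDET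
    have hH : (b3^2*c0^3 + -1*b2*b3*c0^2*c1 + b2^2*c0^2*c2 + b1*b3*c0*c1^2 + -2*b1*b3*c0^2*c2 + -1*b1*b2*c0*c1*c2 + b1^2*c0*c2^2 + -1*b0*b3*c1^3 + 3*b0*b3*c0*c1*c2 + b0*b2*c1^2*c2 + -2*b0*b2*c0*c2^2 + -1*b0*b1*c1*c2^2 + b0^2*c2^3) = btil^2 * R0ab := by
      have h' : btil * ((b3^2*c0^3 + -1*b2*b3*c0^2*c1 + b2^2*c0^2*c2 + b1*b3*c0*c1^2 + -2*b1*b3*c0^2*c2 + -1*b1*b2*c0*c1*c2 + b1^2*c0*c2^2 + -1*b0*b3*c1^3 + 3*b0*b3*c0*c1*c2 + b0*b2*c1^2*c2 + -2*b0*b2*c0*c2^2 + -1*b0*b1*c1*c2^2 + b0^2*c2^3)) = btil * (btil^2 * R0ab) := by linear_combination hHpre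
      exact mul_left_cancel₀ hbne h'
    have hG : ((c2*d0 - c0*d2)^2 - (c1*d0 - c0*d1)*(c2*d1 - c1*d2)) = btil^4*ctil*R0ab := by
      linear_combination (-1*c2^2*d1*x + c2^2*d0 + -1*c1*c2*d1 + -1*c1*c2^2*btil^2 + c1^2*d2 + -2*c0*c2*d2 + b1*c2^2*btil*ctil) * hF3 + (-1*c2^2*d2*x^3 + c2^2*d1*x^2 + -1*c2^3*x^2*btil^2 + -1*c1*c2*d2*x^2 + c1*c2*d1*x + c1*c2^2*x*btil^2 + -1*c1^2*d2*x + c1^2*c2*btil^2 + c0*c2*d2*x + c0*c2*d1 + -1*c0*c2^2*btil^2 + -1*c0*c1*d2 + b2*c2^2*x^2*btil*ctil + b2*c1*c2*x*btil*ctil + b2*c0*c2*btil*ctil + -2*b1*c2^2*x*btil*ctil + -1*b1*c1*c2*btil*ctil) * hF2 + (c2^2*d2*x^4 + 2*c2^3*x^3*btil^2 + c1*c2*d2*x^3 + c1^2*d2*x^2 + -1*c1^3*btil^2 + -1*c0*c2*d2*x^2 + c0*c1*d2*x + 3*c0*c1*c2*btil^2 + c0^2*d2 + b3*c2^2*x^4*btil*ctil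 + b3*c1*c2*x^3*btil*ctil + b3*c1^2*x^2*btil*ctil + -1*b3*c0*c2*x^2*btil*ctil + b3*c0*c1*x*btil*ctil + b3*c0^2*btil*ctil + -2*b2*c2^2*x^3*btil*ctil + -2*b2*c1*c2*x^2*btil*ctil + -1*b2*c1^2*x*btil*ctil + -1*b2*c0*c1*btil*ctil + 2*b1*c2^2*x^2*btil*ctil + b1*c1*c2*x*btil*ctil + b1*c1^2*btil*ctil + -2*b1*c0*c2*btil*ctil) * hF1 + (c2^3*btil^3*ctil + b3*c2^3*x^3*btil^2*ctil + -1*b3*c1^3*btil^2*ctil + 3*b3*c0*c1*c2*btil^2*ctil + -1*b2*c2^3*x^2*btil^2*ctil + b2*c1^2*c2*btil^2*ctil + -2*b2*c0*c2^2*btil^2*ctil + b1*c2^3*x*btil^2*ctil + -1*b1*c1*c2^2*btil^2*ctil + b0*c2^3*btil^2*ctil) * hBTIL + (-1*c2^3*btil^4 + b3^2*c2^2*x^4*btil^2*ctil + b3^2*c1*c2*x^3*btil^2*ctil + b3^2*c1^2*x^2*btil^2*ctil + -1*b3^2*c0*c2*x^2*btil^2*ctil + b3^2*c0*c1*x*btil^2*ctil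 + b3^2*c0^2*btil^2*ctil + -2*b2*b3*c2^2*x^3*btil^2*ctil + -2*b2*b3*c1*c2*x^2*btil^2*ctil + -1*b2*b3*c1^2*x*btil^2*ctil + -1*b2*b3*c0*c1*btil^2*ctil + b2^2*c2^2*x^2*btil^2*ctil + b2^2*c1*c2*x*btil^2*ctil + b2^2*c0*c2*btil^2*ctil + 2*b1*b3*c2^2*x^2*btil^2*ctil + b1*b3*c1*c2*x*btil^2*ctil + b1*b3*c1^2*btil^2*ctil + -2*b1*b3*c0*c2*btil^2*ctil + -2*b1*b2*c2^2*x*btil^2*ctil + -1*b1*b2*c1*c2*btil^2*ctil + b1^2*c2^2*btil^2*ctil) * hctil + (btil^2*ctil) * hH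
    have hRpos : 0 < ((c2*d0 - c0*d2)^2 - (c1*d0 - c0*d1)*(c2*d1 - c1*d2)) := by rw [hG]; exact mul_pos (mul_pos hb4pos hcpos) hdetpos
    have hd0d2 : 0 < d0*d2 := by
      rcases hd0ne.lt_or_gt with hd0n | hd0p <;> rcases hd2ne.lt_or_gt with hd2n | hd2p
      · exact mul_pos_of_neg_of_neg hd0n hd2n
      · exfalso
        have hal2nn : 0 ≤ c2*d0 - c0*d2 := by nlinarith only [hal2dd, mul_neg_of_neg_of_pos hd0n hd2p]
        have hlamnp : (d2*(c2*d0 - c0*d2) - d1*(c2*d1 - c1*d2)) ≤ 0 := by nlinarith only [hd0l3, hd0n]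
        nlinarith only [hT, mul_pos hRpos hd2p, mul_nonneg hal2nn (neg_nonneg.mpr hlamnp), mul_pos (mul_pos_of_neg_of_neg hal3neg hal3neg) (neg_pos.mpr hd0n)]
      · exfalso
        have hal2nn : 0 ≤ c2*d0 - c0*d2 := by nlinarith only [hal2dd, mul_neg_of_pos_of_neg hd0p hd2n]
        have hlamnn : 0 ≤ (d2*(c2*d0 - c0*d2) - d1*(c2*d1 - c1*d2)) := by nlinarith only [hd0l3, hd0p]
        nlinarith only [hT, mul_neg_of_pos_of_neg hRpos hd2n, mul_nonneg hal2nn hlamnn, mul_pos (mul_pos_of_neg_of_neg hal3neg hal3neg) hd0p]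
      · exact mul_pos hd0p hd2p
    have hal2 : c2*d0 - c0*d2 ≤ 0 := by nlinarith only [hal2dd, hd0d2]
    rcases hd2ne.lt_or_gt with hd2neg | hd2pos
    · -- D- branch
      have hd0neg : d0 < 0 := by nlinarith only [hd0d2, hd2neg]
      have hlam3 : (d2*(c2*d0 - c0*d2) - d1*(c2*d1 - c1*d2)) ≤ 0 := by nlinarith only [hd0l3, hd0neg]
      have hc2 : c2 ≤ 0 := by nlinarith only [hc2d2, hd2neg]
      have hd1 : d1 ≤ 0 := by nlinarith only [hlam3, mul_nn hd2neg.le hal2, hal3neg]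
      have hc0 : c0 ≤ 0 := by nlinarith only [hal2, mul_nn hc2 hd0neg.le, hd2neg]
      have hc1 : c1 < 0 := by nlinarith only [hal3neg, mul_nn hc2 hd1, hd2neg]
      have hbneg : btil < 0 := by
        rcases hbne.lt_or_gt with h | hbpos
        · exact h
        · exfalso
          have hbc : 0 < btil*ctil := mul_pos hbpos hcpos
          have hq3 : b3 < 0 := by nlinarith only [hF1, hd2neg, hbc]
          have hq2 : b2 ≤ 0 := by nlinarith only [hF2, hbc, mul_nonneg (sq_nonneg btil) (neg_nonneg.mpr hc2), mul_nonneg (neg_nonneg.mpr hd2neg.le) hx, hd1]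
          have hq1 : b1 ≤ 0 := by nlinarith only [hF3, hbc, mul_nonneg (sq_nonneg btil) (neg_nonneg.mpr hc1.le), mul_nonneg (neg_nonneg.mpr hd1) hx, hd0neg]
          have hq0 : b0 ≤ 0 := by nlinarith only [hF4, hbc, mul_nonneg (sq_nonneg btil) (neg_nonneg.mpr hc0), mul_nonneg (neg_nonneg.mpr hd0neg.le) hx]
          rcases hex with h' | h' | h' | h' <;> linarith only [hq3, hq2, hq1, hq0, h']
      have hbc : btil*ctil < 0 := mul_neg_of_neg_of_pos hbneg hcpos
      have hatil0 : atil ≤ 0 := by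
        rcases hss2 with h | h
        · exfalso
          have hb' := h btil (by simp)
          linarith only [hb', hbneg]
        · exact h atil (by simp)
      have hq3 : 0 < b3 := by nlinarith only [hF1, hd2neg, hbc]
      have hq2 : 0 ≤ b2 := by nlinarith only [hF2, hbc, mul_nonneg (sq_nonneg btil) (neg_nonneg.mpr hc2), mul_nonneg (neg_nonneg.mpr hd2neg.le) hx, hd1]
      have hq1 : 0 ≤ b1 := by nlinarith only [hF3, hbc, mul_nonneg (sq_nonneg btil) (neg_nonneg.mpr hc1.le), mul_nonneg (neg_nonneg.mpr hd1) hx, hd0neg]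
      have hq0 : 0 ≤ b0 := by nlinarith only [hF4, hbc, mul_nonneg (sq_nonneg btil) (neg_nonneg.mpr hc0), mul_nonneg (neg_nonneg.mpr hd0neg.le) hx]
      have hp3 : 0 ≤ a3 := by nlinarith only [hE1, hbneg, hc2, mul_nonneg hq3.le (neg_nonneg.mpr hatil0)]
      have hp2 : 0 ≤ a2 := by nlinarith only [hE2, hbneg, hc1.le, mul_nonneg (neg_nonneg.mpr hc2) hx, mul_nonneg hq2 (neg_nonneg.mpr hatil0)]
      have hp1 : 0 ≤ a1 := by nlinarith only [hE3, hbneg, hc0, mul_nonneg (neg_nonneg.mpr hc1.le) hx, mul_nonneg hq1 (neg_nonneg.mpr hatil0)]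
      have hp0 : 0 ≤ a0 := by nlinarith only [hE4, hbneg, mul_nonneg (neg_nonneg.mpr hc0) hx, mul_nonneg hq0 (neg_nonneg.mpr hatil0)]
      refine ⟨⟨hp0, hp1, hp2, hp3, hq0, hq1, hq2, hq3.le⟩, Or.inr ?_, hcpos.le, by linarith only [hal2], hdetpos⟩
      intro t ht
      simp only [List.mem_cons, List.not_mem_nil, or_false] at ht
      rcases ht with rfl | rfl | rfl | rfl | rfl | rfl | rfl | rfl | rfl
      exacts [hatil0, hbneg.le, hc0, hc1.le, hc2, hd0neg.le, hd1, hd2neg.le, hlam3]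
    · -- D+ branch
      have hd0pos : 0 < d0 := by nlinarith only [hd0d2, hd2pos]
      have hlam3 : 0 ≤ (d2*(c2*d0 - c0*d2) - d1*(c2*d1 - c1*d2)) := by nlinarith only [hd0l3, hd0pos]
      have hc2 : 0 ≤ c2 := by nlinarith only [hc2d2, hd2pos]
      have hd1 : 0 ≤ d1 := by nlinarith only [hlam3, mul_np hd2pos.le hal2, hal3neg]
      have hc0 : 0 ≤ c0 := by nlinarith only [hal2, mul_nonneg hc2 hd0pos.le, hd2pos]
      have hc1 : 0 < c1 := by nlinarith only [hal3neg, mul_nonneg hc2 hd1, hd2pos]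
      have hbpos : 0 < btil := by
        rcases hbne.lt_or_gt with hbneg | h
        · exfalso
          have hbc : btil*ctil < 0 := mul_neg_of_neg_of_pos hbneg hcpos
          have hq3 : b3 < 0 := by nlinarith only [hF1, hd2pos, hbc]
          have hq2 : b2 ≤ 0 := by nlinarith only [hF2, hbc, mul_nonneg (sq_nonneg btil) hc2, mul_nonneg hd2pos.le hx, hd1]
          have hq1 : b1 ≤ 0 := by nlinarith only [hF3, hbc, mul_nonneg (sq_nonneg btil) hc1.le, mul_nonneg hd1 hx, hd0pos]
          have hq0 : b0 ≤ 0 := by nlinarith only [hF4, hbc, mul_nonneg (sq_nonneg btil) hc0, mul_nonneg hd0pos.le hx]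
          rcases hex with h' | h' | h' | h' <;> linarith only [hq3, hq2, hq1, hq0, h']
        · exact h
      have hbc : 0 < btil*ctil := mul_pos hbpos hcpos
      have hatil0 : 0 ≤ atil := by
        rcases hss2 with h | h
        · exact h atil (by simp)
        · exfalso
          have hb' := h btil (by simp)
          linarith only [hb', hbpos]
      have hq3 : 0 < b3 := by nlinarith only [hF1, hd2pos, hbc]
      have hq2 : 0 ≤ b2 := by nlinarith only [hF2, hbc, mul_nonneg (sq_nonneg btil) hc2, mul_nonneg hd2pos.le hx, hd1]
      have hq1 : 0 ≤ b1 := by nlinarith only [hF3, hbc, mul_nonneg (sq_nonneg btil) hc1.le, mul_nonneg hd1 hx, hd0pos]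
      have hq0 : 0 ≤ b0 := by nlinarith only [hF4, hbc, mul_nonneg (sq_nonneg btil) hc0, mul_nonneg hd0pos.le hx]
      have hp3 : 0 ≤ a3 := by nlinarith only [hE1, hbpos, hc2, mul_nonneg hq3.le hatil0]
      have hp2 : 0 ≤ a2 := by nlinarith only [hE2, hbpos, hc1.le, mul_nonneg hc2 hx, mul_nonneg hq2 hatil0]
      have hp1 : 0 ≤ a1 := by nlinarith only [hE3, hbpos, hc0, mul_nonneg hc1.le hx, mul_nonneg hq1 hatil0]
      have hp0 : 0 ≤ a0 := by nlinarith only [hE4, hbpos, mul_nonneg hc0 hx, mul_nonneg hq0 hatil0]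
      refine ⟨⟨hp0, hp1, hp2, hp3, hq0, hq1, hq2, hq3.le⟩, Or.inl ?_, hcpos.le, by linarith only [hal2], hdetpos⟩
      intro t ht
      simp only [List.mem_cons, List.not_mem_nil, or_false] at ht
      rcases ht with rfl | rfl | rfl | rfl | rfl | rfl | rfl | rfl | rfl
      exacts [hatil0, hbpos.le, hc0, hc1.le, hc2, hd0pos.le, hd1, hd2pos.le, hlam3]
end

section
/- Let y < x0 be real numbers. Suppose that for all t in the closed interval [y, x0] one has b(-t) ≠ 0 and ctil(t) > 0, and suppose that a(-x0)*b(-x0) >= 0. Then a(-y)/b(-y) > 0; in particular a(-y) ≠ 0. -/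
/-! Evaluating the identity `q(s) (s + x) = a(s) b(-x) - b(s) a(-x)` at the root `s = -x` of
`s + x` through its derivative gives `ctil(x) = a'(-x) b(-x) - b'(-x) a(-x)`, i.e. minus the
numerator of the derivative of `t ↦ a(-t)/b(-t)`. So that quotient strictly decreases on
`[y, x0]`; it is `≥ 0` at `x0` and hence `> 0` at `y`. -/

open Set Filter Topology

lemma hasDerivAt_of_eq_cubic {f : ℝ → ℝ} {p q r c : ℝ}
    (hf : ∀ t, f t = p * t ^ 3 + q * t ^ 2 + r * t + c) (x : ℝ) :
    HasDerivAt f (3 * p * x ^ 2 + 2 * q * x + r) x := by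
  rw [funext hf]
  refine ((((hasDerivAt_pow 3 x).const_mul p).add ((hasDerivAt_pow 2 x).const_mul q)).add
    ((hasDerivAt_id x).const_mul r)).add_const c |>.congr_deriv ?_
  push_cast
  ring

lemma HasDerivAt.eq_of_eq_mul_sub {F q : ℝ → ℝ} {F' z : ℝ} (hF : HasDerivAt F F' z)
    (hq : ContinuousAt q z) (h : ∀ s, F s = q s * (s - z)) : q z = F' := by
  have hslope : slope F z =ᶠ[𝓝[≠] z] q := by
    filter_upwards [self_mem_nhdsWithin] with s hs
    rw [slope_def_field, h, h, sub_self, mul_zero, sub_zero,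
      mul_div_cancel_right₀ _ (sub_ne_zero.2 hs)]
  exact tendsto_nhds_unique (hq.tendsto.mono_left nhdsWithin_le_nhds)
    ((hasDerivAt_iff_tendsto_slope.1 hF).congr' hslope)

lemma eq_wronskian_of_mul_add_eq {a b q : ℝ → ℝ} {a' b' x : ℝ} (ha : HasDerivAt a a' (-x))
    (hb : HasDerivAt b b' (-x)) (hq : ContinuousAt q (-x))
    (h : ∀ s, q s * (s + x) = a s * b (-x) - b s * a (-x)) :
    q (-x) = a' * b (-x) - b' * a (-x) :=
  ((ha.mul_const (b (-x))).sub (hb.mul_const (a (-x)))).eq_of_eq_mul_sub hq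
    fun s => by rw [sub_neg_eq_add, h]; rfl

lemma strictAntiOn_div_of_wronskian_neg {A B A' B' : ℝ → ℝ} {D : Set ℝ} (hD : Convex ℝ D)
    (hA : ∀ t ∈ D, HasDerivAt A (A' t) t) (hB : ∀ t ∈ D, HasDerivAt B (B' t) t)
    (hB0 : ∀ t ∈ D, B t ≠ 0) (hW : ∀ t ∈ D, A' t * B t - B' t * A t < 0) :
    StrictAntiOn (fun t => A t / B t) D := by
  have hderiv : ∀ t ∈ D, HasDerivAt (fun t => A t / B t)
      ((A' t * B t - A t * B' t) / B t ^ 2) t :=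
    fun t ht => (hA t ht).div (hB t ht) (hB0 t ht)
  refine strictAntiOn_of_hasDerivWithinAt_neg hD
    (fun t ht => (hderiv t ht).continuousAt.continuousWithinAt)
    (fun t ht => (hderiv t (interior_subset ht)).hasDerivWithinAt) fun t ht => ?_
  have ht := interior_subset ht
  exact div_neg_of_neg_of_pos (by linarith [hW t ht]) (sq_pos_of_ne_zero (hB0 t ht))

/-- if `b(-t) ≠ 0` and `ctil(t) > 0` throughout `[y, x0]` and
`a(-x0)*b(-x0) ≥ 0`, then `a(-y)/b(-y) > 0`; in particular `a(-y) ≠ 0`. -/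
theorem stmt_13 (a0 a1 a2 a3 b0 b1 b2 b3 : ℝ)
    (a b : ℝ → ℝ)
    (ha : ∀ s, a s = a3 * s ^ 3 + a2 * s ^ 2 + a1 * s + a0)
    (hb : ∀ s, b s = b3 * s ^ 3 + b2 * s ^ 2 + b1 * s + b0)
    (c0 c1 c2 : ℝ → ℝ)
    (hc : ∀ x s : ℝ, (c2 x * s ^ 2 + c1 x * s + c0 x) * (s + x)
        = a s * b (-x) - b s * a (-x))
    (ctil : ℝ → ℝ)
    (hctil : ∀ x, ctil x = c2 x * x ^ 2 - c1 x * x + c0 x)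
    (y x0 : ℝ) (hyx : y < x0)
    (hIcc : ∀ t ∈ Set.Icc y x0, b (-t) ≠ 0 ∧ 0 < ctil t)
    (hx0 : 0 ≤ a (-x0) * b (-x0)) :
    0 < a (-y) / b (-y) ∧ a (-y) ≠ 0 := by
  obtain ⟨a', ha'⟩ : ∃ a' : ℝ → ℝ, ∀ s, HasDerivAt a (a' s) s :=
    ⟨_, hasDerivAt_of_eq_cubic ha⟩
  obtain ⟨b', hb'⟩ : ∃ b' : ℝ → ℝ, ∀ s, HasDerivAt b (b' s) s :=
    ⟨_, hasDerivAt_of_eq_cubic hb⟩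
  have hwronskian : ∀ t, ctil t = a' (-t) * b (-t) - b' (-t) * a (-t) := fun t => by
    rw [hctil, ← eq_wronskian_of_mul_add_eq (ha' _) (hb' _) (by fun_prop) (hc t)]
    ring
  have hA : ∀ t, HasDerivAt (fun t => a (-t)) (-a' (-t)) t := fun t =>
    ((ha' (-t)).comp t (hasDerivAt_neg t)).congr_deriv (mul_neg_one _)
  have hB : ∀ t, HasDerivAt (fun t => b (-t)) (-b' (-t)) t := fun t =>
    ((hb' (-t)).comp t (hasDerivAt_neg t)).congr_deriv (mul_neg_one _)
  have hanti : StrictAntiOn (fun t => a (-t) / b (-t)) (Icc y x0) :=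
    strictAntiOn_div_of_wronskian_neg (convex_Icc y x0) (fun t _ => hA t) (fun t _ => hB t)
      (fun t ht => (hIcc t ht).1) fun t ht => by linarith [hwronskian t, (hIcc t ht).2]
  have hy : 0 < a (-y) / b (-y) :=
    (div_nonneg_iff.2 (mul_nonneg_iff.1 hx0)).trans_lt
      (hanti (left_mem_Icc.2 hyx.le) (right_mem_Icc.2 hyx.le) hyx)
  exact ⟨hy, (div_ne_zero_iff.1 hy.ne').1⟩
end

section
/- Suppose x >= 0 and condition (C5) holds. Then btil ≠ 0, d0 ≠ 0, lambda1 ≠ 0, ctil ≠ 0, and alpha1 > 0. -/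
lemma SameSign.pair_nonneg {l : List ℝ} (h : SameSign l) {u v : ℝ}
    (hu : u ∈ l) (hv : v ∈ l) : 0 ≤ u * v := by
  rcases h with h | h
  · exact mul_nonneg (h u hu) (h v hv)
  · have := mul_nonneg (neg_nonneg.2 (h u hu)) (neg_nonneg.2 (h v hv))
    nlinarith

lemma bez3_entries (p0 p1 p2 p3 q0 q1 q2 q3 : ℝ) (p q : ℝ → ℝ)
    (hp : ∀ s, p s = p3 * s ^ 3 + p2 * s ^ 2 + p1 * s + p0)
    (hq : ∀ s, q s = q3 * s ^ 3 + q2 * s ^ 2 + q1 * s + q0)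
    (M : Matrix (Fin 3) (Fin 3) ℝ)
    (h : ∀ z w : ℝ, z ≠ w →
        p z * q w - q z * p w
          = (z - w) * ∑ i : Fin 3, ∑ j : Fin 3, M i j * z ^ (i : ℕ) * w ^ (j : ℕ)) :
    M 0 0 = p1*q0 - p0*q1 ∧ M 0 1 = p2*q0 - p0*q2 ∧ M 0 2 = p3*q0 - p0*q3 ∧
    M 1 0 = p2*q0 - p0*q2 ∧ M 1 1 = p2*q1 - p1*q2 + p3*q0 - p0*q3 ∧ M 1 2 = p3*q1 - p1*q3 ∧
    M 2 0 = p3*q0 - p0*q3 ∧ M 2 1 = p3*q1 - p1*q3 ∧ M 2 2 = p3*q2 - p2*q3 := by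
  have e1 := h 2 (-1) (by norm_num)
  have e2 := h 2 0 (by norm_num)
  have e3 := h 2 1 (by norm_num)
  have e4 := h 3 (-1) (by norm_num)
  have e5 := h 3 0 (by norm_num)
  have e6 := h 3 1 (by norm_num)
  have e7 := h 4 (-1) (by norm_num)
  have e8 := h 4 0 (by norm_num)
  have e9 := h 4 1 (by norm_num)
  simp only [hp, hq, Fin.sum_univ_three, Fin.val_zero, Fin.val_one, Fin.val_two]
    at e1 e2 e3 e4 e5 e6 e7 e8 e9
  norm_num at e1 e2 e3 e4 e5 e6 e7 e8 e9
  refine ⟨by linarith, by linarith, by linarith, by linarith, by linarith,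
    by linarith, by linarith, by linarith, by linarith⟩

set_option maxHeartbeats 4000000 in
/-- if `x ≥ 0` and condition (C5) holds, then `btil ≠ 0`, `d0 ≠ 0`,
`lambda1 ≠ 0`, `ctil ≠ 0`, and `alpha1 > 0`. -/
theorem stmt_16 (a0 a1 a2 a3 b0 b1 b2 b3 x : ℝ) (hx : 0 ≤ x)
    (a b : ℝ → ℝ)
    (ha : ∀ s, a s = a3 * s ^ 3 + a2 * s ^ 2 + a1 * s + a0)
    (hb : ∀ s, b s = b3 * s ^ 3 + b2 * s ^ 2 + b1 * s + b0)
    (atil btil : ℝ)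
    (hatil : atil = -a0 * x ^ 3 + a1 * x ^ 2 - a2 * x + a3)
    (hbtil : btil = -b0 * x ^ 3 + b1 * x ^ 2 - b2 * x + b3)
    -- the Bezoutian matrix of `a` and `b`
    (Bab : Matrix (Fin 3) (Fin 3) ℝ) (hBabsymm : Bab.IsSymm)
    (hBab : ∀ z w : ℝ, z ≠ w →
        a z * b w - b z * a w
          = (z - w) * ∑ i : Fin 3, ∑ j : Fin 3, Bab i j * z ^ (i : ℕ) * w ^ (j : ℕ))
    -- `[c0, c1, c2] = -[x^2, -x, 1] * B(a,b)`
    (c0 c1 c2 : ℝ)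
    (hc0 : c0 = -(x ^ 2 * Bab 0 0 + (-x) * Bab 1 0 + 1 * Bab 2 0))
    (hc1 : c1 = -(x ^ 2 * Bab 0 1 + (-x) * Bab 1 1 + 1 * Bab 2 1))
    (hc2 : c2 = -(x ^ 2 * Bab 0 2 + (-x) * Bab 1 2 + 1 * Bab 2 2))
    -- the cubic `c(s) = c2*s^3 + c1*s^2 + c0*s`
    (cf : ℝ → ℝ)
    (hcf : ∀ s, cf s = c2 * s ^ 3 + c1 * s ^ 2 + c0 * s)
    (ctil : ℝ)
    (hctil : ctil = c0 * x ^ 2 - c1 * x + c2)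
    -- the Bezoutian matrix of the cubics `b` and `c`
    (Bbc : Matrix (Fin 3) (Fin 3) ℝ) (hBbcsymm : Bbc.IsSymm)
    (hBbc : ∀ z w : ℝ, z ≠ w →
        b z * cf w - cf z * b w
          = (z - w) * ∑ i : Fin 3, ∑ j : Fin 3, Bbc i j * z ^ (i : ℕ) * w ^ (j : ℕ))
    -- `[d0, d1, d2] = -btil * [x^2, -x, 1] * B(b,c)`
    (d0 d1 d2 : ℝ)
    (hd0 : d0 = -btil * (x ^ 2 * Bbc 0 0 + (-x) * Bbc 1 0 + 1 * Bbc 2 0))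
    (hd1 : d1 = -btil * (x ^ 2 * Bbc 0 1 + (-x) * Bbc 1 1 + 1 * Bbc 2 1))
    (hd2 : d2 = -btil * (x ^ 2 * Bbc 0 2 + (-x) * Bbc 1 2 + 1 * Bbc 2 2))
    (alpha1 alpha2 lambda1 : ℝ)
    (halpha1 : alpha1 = c1 * d0 - c0 * d1)
    (halpha2 : alpha2 = c2 * d0 - c0 * d2)
    (hlambda1 : lambda1 = d1 * alpha1 - d0 * alpha2)
    -- the Bezoutian matrix of `b` and `a`, and `R0ab` its determinant
    (Bba : Matrix (Fin 3) (Fin 3) ℝ) (hBbasymm : Bba.IsSymm)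
    (hBba : ∀ z w : ℝ, z ≠ w →
        b z * a w - a z * b w
          = (z - w) * ∑ i : Fin 3, ∑ j : Fin 3, Bba i j * z ^ (i : ℕ) * w ^ (j : ℕ))
    (R0ab : ℝ) (hR0 : R0ab = Bba.det)
    -- condition (C5)
    (hC5 : (0 ≤ a0 ∧ 0 ≤ a1 ∧ 0 ≤ a2 ∧ 0 ≤ a3 ∧ 0 ≤ b0 ∧ 0 ≤ b1 ∧ 0 ≤ b2 ∧ 0 ≤ b3) ∧
      SameSign [atil, btil, c0, c1, c2, d0, d1, d2, lambda1] ∧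
      0 ≤ ctil ∧ 0 ≤ alpha2 ∧ 0 < R0ab) :
    btil ≠ 0 ∧ d0 ≠ 0 ∧ lambda1 ≠ 0 ∧ ctil ≠ 0 ∧ 0 < alpha1 := by
  obtain ⟨⟨ha0, ha1, ha2, ha3, hb0, hb1, hb2, hb3⟩, hSS, hctilnn, halpha2nn, hR0pos⟩ := hC5
  -- extract the entries of the three Bezout matrices
  obtain ⟨eA00, eA01, eA02, eA10, eA11, eA12, eA20, eA21, eA22⟩ :=
    bez3_entries a0 a1 a2 a3 b0 b1 b2 b3 a b ha hb Bab hBab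
  obtain ⟨eC00, eC01, eC02, eC10, eC11, eC12, eC20, eC21, eC22⟩ :=
    bez3_entries b0 b1 b2 b3 0 c0 c1 c2 b cf hb (by intro s; rw [hcf]; ring) Bbc hBbc
  obtain ⟨eB00, eB01, eB02, eB10, eB11, eB12, eB20, eB21, eB22⟩ :=
    bez3_entries b0 b1 b2 b3 a0 a1 a2 a3 b a hb ha Bba hBba
  -- explicit determinant
  have hR0e : R0ab =
      (b1*a0 - b0*a1) * ((b2*a1 - b1*a2 + b3*a0 - b0*a3) * (b3*a2 - b2*a3)
          - (b3*a1 - b1*a3) * (b3*a1 - b1*a3))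
      - (b2*a0 - b0*a2) * ((b2*a0 - b0*a2) * (b3*a2 - b2*a3)
          - (b3*a1 - b1*a3) * (b3*a0 - b0*a3))
      + (b3*a0 - b0*a3) * ((b2*a0 - b0*a2) * (b3*a1 - b1*a3)
          - (b2*a1 - b1*a2 + b3*a0 - b0*a3) * (b3*a0 - b0*a3)) := by
    rw [hR0, Matrix.det_fin_three, eB00, eB01, eB02, eB10, eB11, eB12, eB20, eB21, eB22]
    ring
  -- recurrence identities for c
  have hcr0 : c0 = btil * a0 - atil * b0 := by
    rw [hc0, eA00, eA10, eA20, hatil, hbtil]; ring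
  have hcr1 : c1 + x * c0 = btil * a1 - atil * b1 := by
    rw [hc1, hc0, eA01, eA11, eA21, eA00, eA10, eA20, hatil, hbtil]; ring
  have hcr2 : c2 + x * c1 = btil * a2 - atil * b2 := by
    rw [hc2, hc1, eA02, eA12, eA22, eA01, eA11, eA21, hatil, hbtil]; ring
  have hcr3 : x * c2 = btil * a3 - atil * b3 := by
    rw [hc2, eA02, eA12, eA22, hatil, hbtil]; ring
  -- recurrence identities for d
  have hdr0 : d0 = btil * ctil * b0 := by
    rw [hd0, eC00, eC10, eC20, hctil]; ring
  have hdr1 : d1 + x * d0 = btil * ctil * b1 - btil^2 * c0 := by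
    rw [hd1, hd0, eC01, eC11, eC21, eC00, eC10, eC20, hctil, hbtil]; ring
  have hdr2 : d2 + x * d1 = btil * ctil * b2 - btil^2 * c1 := by
    rw [hd2, hd1, eC02, eC12, eC22, eC01, eC11, eC21, hctil, hbtil]; ring
  -- compact forms of alpha1, alpha2, alpha3
  have hA1 : alpha1 = btil^2 * ((a1*b0 - a0*b1) * ctil + c0^2) := by
    simp only [halpha1, hd0, hd1,
      eC00, eC01, eC02, eC10, eC11, eC12, eC20, eC21, eC22,
      hctil, hc0, hc1, hc2,
      eA00, eA01, eA02, eA10, eA11, eA12, eA20, eA21, eA22, hbtil]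
    ring
  have hA2 : alpha2 = btil^2 * (((a2*b0 - a0*b2) - x*(a1*b0 - a0*b1)) * ctil
      + c0 * (c1 - x*c0)) := by
    simp only [halpha2, hd0, hd2,
      eC00, eC01, eC02, eC10, eC11, eC12, eC20, eC21, eC22,
      hctil, hc0, hc1, hc2,
      eA00, eA01, eA02, eA10, eA11, eA12, eA20, eA21, eA22, hbtil]
    ring
  have hA3 : c2 * d1 - c1 * d2 = btil^2 * ((((a2*b1 - a1*b2 + a3*b0 - a0*b3)
        - 2*x*(a2*b0 - a0*b2)) + x^2*(a1*b0 - a0*b1)) * ctil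
      + (c1 - x*c0)^2) := by
    simp only [hd1, hd2,
      eC00, eC01, eC02, eC10, eC11, eC12, eC20, eC21, eC22,
      hctil, hc0, hc1, hc2,
      eA00, eA01, eA02, eA10, eA11, eA12, eA20, eA21, eA22, hbtil]
    ring
  have hR0link : R0ab = ctil * ((a1*b0 - a0*b1) * (((a2*b1 - a1*b2 + a3*b0 - a0*b3)
        - 2*x*(a2*b0 - a0*b2)) + x^2*(a1*b0 - a0*b1))
        - ((a2*b0 - a0*b2) - x*(a1*b0 - a0*b1))^2)
      + ((a1*b0 - a0*b1) * (c1 - x*c0)^2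
        - 2*((a2*b0 - a0*b2) - x*(a1*b0 - a0*b1)) * c0 * (c1 - x*c0)
        + (((a2*b1 - a1*b2 + a3*b0 - a0*b3) - 2*x*(a2*b0 - a0*b2))
            + x^2*(a1*b0 - a0*b1)) * c0^2) := by
    simp only [hR0e, hctil, hc0, hc1, hc2,
      eA00, eA01, eA02, eA10, eA11, eA12, eA20, eA21, eA22]
    ring
  -- the master identity
  have hM : alpha1 * (c2 * d1 - c1 * d2) - alpha2^2 = btil^4 * ctil * R0ab := by
    rw [hA1, hA3, hA2, hR0link]
    ring
  -- `btil ≠ 0`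
  have hbtilne : btil ≠ 0 := by
    intro hbz
    rcases eq_or_ne atil 0 with haz | haz
    · -- common root forces the resultant to vanish
      rw [hatil] at haz
      rw [hbtil] at hbz
      have ha3e : a3 = a0 * x^3 - a1 * x^2 + a2 * x := by linarith only [haz]
      have hb3e : b3 = b0 * x^3 - b1 * x^2 + b2 * x := by linarith only [hbz]
      have : R0ab = 0 := by rw [hR0e, ha3e, hb3e]; ring
      linarith only [this, hR0pos]
    · -- atil ≠ 0 : the list-sign conditions force b ≡ 0
      have hpc0 : 0 ≤ c0 * atil := hSS.pair_nonneg (by simp) (by simp)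
      have hpc1 : 0 ≤ c1 * atil := hSS.pair_nonneg (by simp) (by simp)
      have hpc2 : 0 ≤ c2 * atil := hSS.pair_nonneg (by simp) (by simp)
      have hb0z : b0 = 0 := by
        have h1 : c0 * atil = -(atil^2 * b0) := by rw [hcr0, hbz]; ring
        have h2 : atil^2 * b0 ≤ 0 := by linarith only [h1, hpc0]
        have h3 : atil^2 * b0 = 0 := le_antisymm h2 (mul_nonneg (sq_nonneg atil) hb0)
        rcases mul_eq_zero.mp h3 with h | h
        · exact absurd (pow_eq_zero_iff (two_ne_zero) |>.mp h) haz
        · exact h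
      have hc0z : c0 = 0 := by rw [hcr0, hbz, hb0z]; ring
      have h1 := hcr1; rw [hbz, hc0z] at h1
      have hc1e : c1 = -(atil * b1) := by linarith only [h1]
      have hb1z : b1 = 0 := by
        have hp2 : 0 ≤ -(atil * b1) * atil := by rw [← hc1e]; exact hpc1
        have h2 : atil^2 * b1 ≤ 0 := by linarith only [hp2]
        have h3 : atil^2 * b1 = 0 := le_antisymm h2 (mul_nonneg (sq_nonneg atil) hb1)
        rcases mul_eq_zero.mp h3 with h | h
        · exact absurd (pow_eq_zero_iff (two_ne_zero) |>.mp h) haz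
        · exact h
      have hc1z : c1 = 0 := by rw [hc1e, hb1z]; ring
      have h4 := hcr2; rw [hbz, hc1z] at h4
      have hc2e : c2 = -(atil * b2) := by linarith only [h4]
      have hb2z : b2 = 0 := by
        have hp2 : 0 ≤ -(atil * b2) * atil := by rw [← hc2e]; exact hpc2
        have h2 : atil^2 * b2 ≤ 0 := by linarith only [hp2]
        have h3 : atil^2 * b2 = 0 := le_antisymm h2 (mul_nonneg (sq_nonneg atil) hb2)
        rcases mul_eq_zero.mp h3 with h | h
        · exact absurd (pow_eq_zero_iff (two_ne_zero) |>.mp h) haz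
        · exact h
      have hc2z : c2 = 0 := by rw [hc2e, hb2z]; ring
      have hb3z : b3 = 0 := by
        have h5 := hcr3; rw [hbz, hc2z] at h5
        have h6 : atil * b3 = 0 := by linarith only [h5]
        exact (mul_eq_zero.mp h6).resolve_left haz
      have : R0ab = 0 := by rw [hR0e, hb0z, hb1z, hb2z, hb3z]; ring
      linarith only [this, hR0pos]
  -- `ctil > 0`
  have hctilpos : 0 < ctil := by
    rcases hctilnn.lt_or_eq with h | h
    · exact h
    · exfalso
      have hcz : ctil = 0 := h.symm
      have hd0z : d0 = 0 := by rw [hdr0, hcz]; ring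
      have hbtilsq : 0 < btil^2 := by positivity
      have h1 := hdr1; rw [hcz, hd0z] at h1
      have hd1e : d1 = -(btil^2 * c0) := by linarith only [h1]
      have hc0z : c0 = 0 := by
        have hp : 0 ≤ c0 * d1 := hSS.pair_nonneg (by simp) (by simp)
        have hp2 : 0 ≤ c0 * -(btil^2 * c0) := by rw [← hd1e]; exact hp
        have h2 : btil^2 * c0^2 ≤ 0 := by linarith only [hp2]
        have h3 : c0^2 ≤ 0 := by nlinarith only [h2, hbtilsq]
        exact pow_eq_zero_iff (two_ne_zero) |>.mp (le_antisymm h3 (sq_nonneg c0))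
      have hd1z : d1 = 0 := by rw [hd1e, hc0z]; ring
      have h4 := hdr2; rw [hcz, hd1z] at h4
      have hd2e : d2 = -(btil^2 * c1) := by linarith only [h4]
      have hc1z : c1 = 0 := by
        have hp : 0 ≤ c1 * d2 := hSS.pair_nonneg (by simp) (by simp)
        have hp2 : 0 ≤ c1 * -(btil^2 * c1) := by rw [← hd2e]; exact hp
        have h2 : btil^2 * c1^2 ≤ 0 := by linarith only [hp2]
        have h3 : c1^2 ≤ 0 := by nlinarith only [h2, hbtilsq]
        exact pow_eq_zero_iff (two_ne_zero) |>.mp (le_antisymm h3 (sq_nonneg c1))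
      have hc2z : c2 = 0 := by
        rw [hctil] at hcz; rw [hc0z, hc1z] at hcz; linarith only [hcz]
      -- now btil * a_i = atil * b_i for all i, so all Bezout entries vanish
      have H0 : btil * a0 = atil * b0 := by rw [hc0z] at hcr0; linarith only [hcr0]
      have H1 : btil * a1 = atil * b1 := by
        rw [hc0z, hc1z] at hcr1; linarith only [hcr1]
      have H2 : btil * a2 = atil * b2 := by
        rw [hc1z, hc2z] at hcr2; linarith only [hcr2]
      have H3 : btil * a3 = atil * b3 := by rw [hc2z] at hcr3; linarith only [hcr3]
      have hE00 : b1*a0 - b0*a1 = 0 := by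
        have h5 : btil * (b1*a0 - b0*a1) = 0 := by linear_combination b1 * H0 - b0 * H1
        exact (mul_eq_zero.mp h5).resolve_left hbtilne
      have hE01 : b2*a0 - b0*a2 = 0 := by
        have h5 : btil * (b2*a0 - b0*a2) = 0 := by linear_combination b2 * H0 - b0 * H2
        exact (mul_eq_zero.mp h5).resolve_left hbtilne
      have hE02 : b3*a0 - b0*a3 = 0 := by
        have h5 : btil * (b3*a0 - b0*a3) = 0 := by linear_combination b3 * H0 - b0 * H3
        exact (mul_eq_zero.mp h5).resolve_left hbtilne
      have : R0ab = 0 := by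
        rw [hR0e, hE00, hE01, hE02]; ring
      linarith only [this, hR0pos]
  have hKpos : 0 < btil^4 * ctil * R0ab := by
    have h4 : 0 < btil^4 := by positivity
    exact mul_pos (mul_pos h4 hctilpos) hR0pos
  -- `d0 ≠ 0`
  have hd0ne : d0 ≠ 0 := by
    intro hdz
    have hp : 0 ≤ c0 * lambda1 := hSS.pair_nonneg (by simp) (by simp)
    have hlam : lambda1 = -(c0 * d1) * d1 := by
      rw [hlambda1, halpha1, hdz]; ring
    have hp2 : 0 ≤ c0 * (-(c0 * d1) * d1) := by rw [← hlam]; exact hp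
    have h2 : (c0 * d1)^2 ≤ 0 := by linarith only [hp2]
    have hc0d1 : c0 * d1 = 0 :=
      pow_eq_zero_iff (two_ne_zero) |>.mp (le_antisymm h2 (sq_nonneg (c0 * d1)))
    have ha1z : alpha1 = 0 := by rw [halpha1, hdz]; linarith only [hc0d1]
    rw [ha1z] at hM
    linarith only [hM, hKpos, sq_nonneg alpha2]
  -- `alpha1 > 0`
  have halpha1ne : alpha1 ≠ 0 := by
    intro h
    rw [h] at hM
    linarith only [hM, hKpos, sq_nonneg alpha2]
  have halpha1pos : 0 < alpha1 := by
    rcases halpha1ne.lt_or_gt with hneg | hpos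
    · exfalso
      have hp01 : 0 ≤ d0 * d1 := hSS.pair_nonneg (by simp) (by simp)
      have hp0l : 0 ≤ d0 * lambda1 := hSS.pair_nonneg (by simp) (by simp)
      have hpc1d0 : 0 ≤ c1 * d0 := hSS.pair_nonneg (by simp) (by simp)
      have hkey : d0 * lambda1 = (d0 * d1) * alpha1 - d0^2 * alpha2 := by
        rw [hlambda1]; ring
      have hterm1 : (d0 * d1) * alpha1 ≤ 0 := by nlinarith only [hp01, hneg]
      have hterm2 : 0 ≤ d0^2 * alpha2 := mul_nonneg (sq_nonneg d0) halpha2nn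
      have hz1 : (d0 * d1) * alpha1 = 0 := by
        linarith only [hkey, hp0l, hterm1, hterm2]
      have hz2 : d0^2 * alpha2 = 0 := by
        linarith only [hkey, hp0l, hterm1, hterm2]
      have hd1z : d1 = 0 := by
        have h1 : d0 * d1 = 0 := (mul_eq_zero.mp hz1).resolve_right halpha1ne
        exact (mul_eq_zero.mp h1).resolve_left hd0ne
      have ha1e : alpha1 = c1 * d0 := by rw [halpha1, hd1z]; ring
      linarith only [ha1e, hpc1d0, hneg]
    · exact hpos
  -- `lambda1 ≠ 0`
  have hlamne : lambda1 ≠ 0 := by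
    intro hlz
    have hlam0 : d1 * alpha1 - d0 * alpha2 = 0 := by rw [← hlambda1]; exact hlz
    have hsyz : d0 * (c2*d1 - c1*d2) - d1 * alpha2 + d2 * alpha1 = 0 := by
      rw [halpha1, halpha2]; ring
    have hkey : d1 * (btil^4 * ctil * R0ab) + d2 * alpha1 * alpha2 = 0 := by
      linear_combination (-d1) * hM + (c2*d1 - c1*d2) * hlam0 + alpha2 * hsyz
    have hp12 : 0 ≤ d1 * d2 := hSS.pair_nonneg (by simp) (by simp)
    have hpc1d2 : 0 ≤ c1 * d2 := hSS.pair_nonneg (by simp) (by simp)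
    have hsq' : (d1 * (btil^4 * ctil * R0ab))^2
        = -((btil^4 * ctil * R0ab) * ((d1 * d2) * (alpha1 * alpha2))) := by
      linear_combination (d1 * (btil^4 * ctil * R0ab)) * hkey
    have hprod : 0 ≤ (btil^4 * ctil * R0ab) * ((d1 * d2) * (alpha1 * alpha2)) :=
      mul_nonneg hKpos.le (mul_nonneg hp12 (mul_nonneg halpha1pos.le halpha2nn))
    have hsq : (d1 * (btil^4 * ctil * R0ab))^2 ≤ 0 := by linarith only [hsq', hprod]
    have hd1K : d1 * (btil^4 * ctil * R0ab) = 0 :=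
      pow_eq_zero_iff (two_ne_zero) |>.mp
        (le_antisymm hsq (sq_nonneg (d1 * (btil^4 * ctil * R0ab))))
    have hd1z : d1 = 0 := (mul_eq_zero.mp hd1K).resolve_right (ne_of_gt hKpos)
    have halpha2z : alpha2 = 0 := by
      rw [hd1z] at hlam0
      have h6 : d0 * alpha2 = 0 := by linarith only [hlam0]
      exact (mul_eq_zero.mp h6).resolve_left hd0ne
    rw [hd1z, halpha2z] at hM
    have hpos2 : 0 ≤ alpha1 * (c1 * d2) := mul_nonneg halpha1pos.le hpc1d2
    linarith only [hM, hpos2, hKpos]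
  exact ⟨hbtilne, hd0ne, hlamne, ne_of_gt hctilpos, halpha1pos⟩
end

section
/- Let K be a field and let r, g, h be elements of K with t := 1 + r*g ≠ 0 and 1 + g*h ≠ 0. Then 1 + (g/t)*(r*t + t^2*h) ≠ 0, and r + h/(1 + g*h) = (r*t + t^2*h)/(1 + (g/t)*(r*t + t^2*h)). (This is the impedance equivalence of Lemma 14: the series connection of a resistor r with the parallel connection of a conductor g and an impedance h equals the parallel connection of a conductor g/(1+r*g) with the series connection of a resistor r*(1+r*g) and the impedance (1+r*g)^2*h.) -/
/-! With `t = 1 + r*g`, the transformed series impedance `r*t + t^2*h` factors as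
`t * (r*(1 + g*h) + h)` and the transformed denominator as `t * (1 + g*h)`; cancelling `t`
leaves `r + h/(1 + g*h)` over a common denominator. -/

theorem transformed_series_eq_mul {K : Type*} [CommRing K] (r g h : K) :
    r * (1 + r * g) + (1 + r * g) ^ 2 * h = (1 + r * g) * (r * (1 + g * h) + h) := by
  ring

theorem one_add_div_mul_transformed_series_eq {K : Type*} [Field K] (r g h : K)
    (ht : 1 + r * g ≠ 0) :
    1 + g / (1 + r * g) * (r * (1 + r * g) + (1 + r * g) ^ 2 * h)
      = (1 + r * g) * (1 + g * h) := by
  rw [transformed_series_eq_mul, ← mul_assoc, div_mul_cancel₀ _ ht]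
  ring

/-- Lemma 14 impedance equivalence: for `r`, `g`, `h` in a field `K` with
`t := 1 + r*g ≠ 0` and `1 + g*h ≠ 0`, the denominator `1 + (g/t)*(r*t + t^2*h)` is nonzero
and `r + h/(1 + g*h) = (r*t + t^2*h)/(1 + (g/t)*(r*t + t^2*h))`. -/
theorem stmt_17 {K : Type*} [Field K] (r g h : K)
    (ht : 1 + r * g ≠ 0) (hgh : 1 + g * h ≠ 0) :
    1 + (g / (1 + r * g)) * (r * (1 + r * g) + (1 + r * g) ^ 2 * h) ≠ 0 ∧
    r + h / (1 + g * h)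
      = (r * (1 + r * g) + (1 + r * g) ^ 2 * h) /
        (1 + (g / (1 + r * g)) * (r * (1 + r * g) + (1 + r * g) ^ 2 * h)) := by
  have hden := one_add_div_mul_transformed_series_eq r g h ht
  refine ⟨hden ▸ mul_ne_zero ht hgh, ?_⟩
  rw [hden, transformed_series_eq_mul, mul_div_mul_left _ _ ht, add_div' _ _ _ hgh]
end

section
/- Suppose x >= 0, z ≠ 0, and condition (Q7) holds. Then btil ≠ 0, d0 ≠ 0, d2 ≠ 0, and alpha1 > 0. -/
private lemma nn_of_mul_pos {c t : ℝ} (hc : 0 < c) (h : 0 ≤ c * t) : 0 ≤ t := by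
  by_contra h'; push_neg at h'
  nlinarith [mul_neg_of_pos_of_neg hc h']

private lemma nn_of_mul_neg {c t : ℝ} (hc : c < 0) (h : c * t ≤ 0) : 0 ≤ t := by
  by_contra h'; push_neg at h'
  nlinarith [mul_pos_of_neg_of_neg hc h']

private lemma np_of_mul_neg {c t : ℝ} (hc : c < 0) (h : 0 ≤ c * t) : t ≤ 0 := by
  by_contra h'; push_neg at h'
  nlinarith [mul_neg_of_neg_of_pos hc h']

private lemma np_of_mul_pos {c t : ℝ} (hc : 0 < c) (h : c * t ≤ 0) : t ≤ 0 := by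
  by_contra h'; push_neg at h'
  nlinarith [mul_pos hc h']

private lemma core_lemma (f0 f1 h0 h1 b2 x : ℝ)
    (hf0 : 0 ≤ f0) (hf1 : 0 ≤ f1) (hh0 : 0 ≤ h0) (hh1 : 0 ≤ h1)
    (hb2 : 0 ≤ b2) (hx : 0 ≤ x)
    (hHtP : 0 < (b2 * x ^ 2 - h1 * x + h0) * (f1 * (f1 * h0 - f0 * h1) + b2 * f0 ^ 2))
    (hal2 : 0 ≤ f1 * h0 - x * f0 * b2)
    (hlam : 0 ≤ (x * h1 - h0) * (f1 * h0 - f0 * h1) + x * f0 * h0 * b2) :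
    0 < h0 ∧ 0 < b2 ∧ 0 < f0 * h0 + x * (f1 * h0 - f0 * h1) := by
  have hh0pos : 0 < h0 := by
    by_contra hc; push_neg at hc
    have h0e : h0 = 0 := le_antisymm hc hh0
    subst h0e
    have hq1 : x * f0 * b2 = 0 := by
      have : 0 ≤ x * f0 * b2 := mul_nonneg (mul_nonneg hx hf0) hb2
      linarith
    have hq2 : x * f0 * h1 ^ 2 = 0 := by
      have : 0 ≤ x * f0 * h1 ^ 2 := mul_nonneg (mul_nonneg hx hf0) (sq_nonneg h1)
      nlinarith [hlam]
    have hexp : (b2 * x ^ 2 - h1 * x + 0) * (f1 * (f1 * 0 - f0 * h1) + b2 * f0 ^ 2)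
        = (x * f0 * b2) * (b2 * x * f0 - x * f1 * h1 - h1 * f0) + f1 * (x * f0 * h1 ^ 2) := by
      ring
    rw [hexp, hq1, hq2] at hHtP
    simp at hHtP
  have hb2pos : 0 < b2 := by
    by_contra hc; push_neg at hc
    have b2e : b2 = 0 := le_antisymm hc hb2
    subst b2e
    have hL : 0 ≤ (x * h1 - h0) * (f1 * h0 - f0 * h1) := by linarith [hlam]
    have h2 : 0 ≤ f1 * ((x * h1 - h0) * (f1 * h0 - f0 * h1)) := mul_nonneg hf1 hL
    have hexp : (0 * x ^ 2 - h1 * x + h0) * (f1 * (f1 * h0 - f0 * h1) + 0 * f0 ^ 2)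
        = -(f1 * ((x * h1 - h0) * (f1 * h0 - f0 * h1))) := by ring
    rw [hexp] at hHtP
    linarith
  refine ⟨hh0pos, hb2pos, ?_⟩
  by_contra hc; push_neg at hc
  have hxP : x * (f1 * (f1 * h0 - f0 * h1) + b2 * f0 ^ 2) ≤ 0 := by
    have t1 : 0 ≤ f0 * (f1 * h0 - x * f0 * b2) := mul_nonneg hf0 hal2
    have t2 : 0 ≤ f1 * (-(f0 * h0 + x * (f1 * h0 - f0 * h1))) :=
      mul_nonneg hf1 (neg_nonneg.2 hc)
    nlinarith [t1, t2]
  rcases lt_trichotomy 0 (f1 * (f1 * h0 - f0 * h1) + b2 * f0 ^ 2) with hP | hP | hP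
  · -- P > 0
    have hxz : x = 0 := by
      by_contra hxne
      have hxpos : 0 < x := lt_of_le_of_ne hx (Ne.symm hxne)
      nlinarith [mul_pos hxpos hP]
    subst hxz
    have hf0z : f0 = 0 := by
      by_contra hf0ne
      have hf0pos : 0 < f0 := lt_of_le_of_ne hf0 (Ne.symm hf0ne)
      nlinarith [mul_pos hf0pos hh0pos]
    subst hf0z
    nlinarith [mul_pos hP hh0pos, mul_nonneg hf1 (mul_nonneg hh0 hh0)]
  · -- P = 0
    rw [← hP] at hHtP
    simp at hHtP
  · -- P < 0
    have hW : f1 * h0 - f0 * h1 < 0 := by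
      by_contra hWc; push_neg at hWc
      nlinarith [mul_nonneg hf1 hWc, mul_nonneg hb2 (sq_nonneg f0)]
    have hHt : b2 * x ^ 2 - h1 * x + h0 < 0 := by
      by_contra hHtc; push_neg at hHtc
      nlinarith [mul_nonneg hHtc (neg_nonneg.2 (le_of_lt hP))]
    have hxpos : 0 < x := by
      rcases hx.lt_or_eq with hxp | hxe
      · exact hxp
      · rw [← hxe] at hHt; nlinarith
    have t1 : 0 < (x * h1 - h0 - b2 * x ^ 2) * (-(f1 * h0 - f0 * h1)) :=
      mul_pos (by linarith) (by linarith)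
    have t2 : 0 ≤ (b2 * x) * (-(f0 * h0 + x * (f1 * h0 - f0 * h1))) :=
      mul_nonneg (mul_nonneg hb2 hx) (neg_nonneg.2 hc)
    nlinarith [t1, t2, hlam]

/-- if `x ≥ 0`, `z ≠ 0` and condition (Q7) holds, then `btil ≠ 0`,
`d0 ≠ 0`, `d2 ≠ 0`, and `alpha1 > 0`. -/
theorem stmt_18 (a0 a1 a2 b0 b1 b2 x z : ℝ) (hx : 0 ≤ x) (hz : z ≠ 0)
    (a b : ℝ → ℝ)
    (ha : ∀ s, a s = a2 * s ^ 2 + a1 * s + a0)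
    (hb : ∀ s, b s = b2 * s ^ 2 + b1 * s + b0)
    (atil btil : ℝ) (hatil : atil = a (-x)) (hbtil : btil = b (-x))
    (f0 f1 : ℝ)
    (hf : ∀ s, (f1 * s + f0) * (s + x) = b (-x) * a s - a (-x) * b s)
    (c0 c1 c2 h0 h1 h2 d0 d1 d2 htil : ℝ)
    (hc2 : c2 = f1) (hc1 : c1 = f0 + x * f1) (hc0 : c0 = x * f0)
    (hh2 : h2 = b2) (hh1 : h1 = b1 - z * f1) (hh0 : h0 = b0 - z * f0)
    (hd2 : d2 = btil * h2) (hd1 : d1 = btil * h1) (hd0 : d0 = btil * h0)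
    (hhtil : htil = h2 * x ^ 2 - h1 * x + h0)
    (alpha1 alpha2 lambda1 R0ab : ℝ)
    (halpha1 : alpha1 = c1 * d0 - c0 * d1)
    (halpha2 : alpha2 = c2 * d0 - c0 * d2)
    (hlambda1 : lambda1 = d1 * alpha1 - d0 * alpha2)
    (hR0 : R0ab = (a1 * b0 - a0 * b1) * (a2 * b1 - a1 * b2) - (a2 * b0 - a0 * b2) ^ 2)
    -- condition (Q7)
    (hQ7 : (0 ≤ a0 ∧ 0 ≤ a1 ∧ 0 ≤ a2 ∧ 0 ≤ b0 ∧ 0 ≤ b1 ∧ 0 ≤ b2) ∧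
      SameSign [atil, btil, z, d0, d1, d2, f0, f1, lambda1] ∧
      0 ≤ alpha2 ∧ 0 ≤ -(btil * htil * R0ab) ∧ htil ≠ 0 ∧ R0ab ≠ 0) :
    btil ≠ 0 ∧ d0 ≠ 0 ∧ d2 ≠ 0 ∧ 0 < alpha1 := by
  obtain ⟨⟨ha0n, ha1n, ha2n, hb0n, hb1n, hb2n⟩, hss, hal2nn, hprodnn, hhtne, hR0ne⟩ := hQ7
  -- values of a, b at -x
  have hat : atil = a2 * x ^ 2 - a1 * x + a0 := by rw [hatil, ha]; ring
  have hbt : btil = b2 * x ^ 2 - b1 * x + b0 := by rw [hbtil, hb]; ring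
  -- coefficient extraction
  have e0 := hf 0
  have e1 := hf 1
  have e2 := hf (-1)
  simp only [ha, hb] at e0 e1 e2
  have ef1 : f1 = btil * a2 - atil * b2 := by
    rw [hat, hbt]; linear_combination e1 / 2 + e2 / 2 - e0
  have ef0 : f0 = btil * a1 - atil * b1 - x * f1 := by
    rw [hat, hbt]; linear_combination e1 / 2 - e2 / 2
  have hE0 : x * f0 = btil * a0 - atil * b0 := by
    rw [hat, hbt]; linear_combination e0
  -- key formulas
  have KA1 : alpha1 = btil * (f0 * h0 + x * (f1 * h0 - f0 * h1)) := by
    rw [halpha1, hc1, hc0, hd0, hd1]; ring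
  have KA2 : alpha2 = btil * (f1 * h0 - x * f0 * b2) := by
    rw [halpha2, hc2, hc0, hd0, hd2, hh2]; ring
  have KL : lambda1 = btil ^ 2 * ((x * h1 - h0) * (f1 * h0 - f0 * h1) + x * f0 * h0 * b2) := by
    rw [hlambda1, KA1, KA2, hd1, hd0]; ring
  have KH : htil = b2 * x ^ 2 - h1 * x + h0 := by rw [hhtil, hh2]
  have EF1 : f1 = (b2 * x ^ 2 - b1 * x + b0) * a2 - (a2 * x ^ 2 - a1 * x + a0) * b2 := by
    rw [ef1, hat, hbt]
  have EF0 : f0 = (b2 * x ^ 2 - b1 * x + b0) * a1 - (a2 * x ^ 2 - a1 * x + a0) * b1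
      - x * ((b2 * x ^ 2 - b1 * x + b0) * a2 - (a2 * x ^ 2 - a1 * x + a0) * b2) := by
    rw [ef0, ef1, hat, hbt]
  have KP : f1 * (f1 * h0 - f0 * h1) + b2 * f0 ^ 2 = -(btil * R0ab) := by
    rw [hh0, hh1, EF0, EF1, hbt, hR0]; ring
  -- btil ≠ 0
  have hbtne : btil ≠ 0 := by
    intro hbz
    have hf1v : f1 = -(atil * b2) := by rw [ef1, hbz]; ring
    have hf0v : f0 + x * f1 = -(atil * b1) := by
      rw [ef0, hbz]; ring
    have hxf0v : x * f0 = -(atil * b0) := by rw [hE0, hbz]; ring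
    have hbpz : b2 * x ^ 2 - b1 * x + b0 = 0 := by rw [← hbt, hbz]
    have hHt : htil = z * (x * f1 - f0) := by
      rw [KH, hh1, hh0]; linear_combination hbpz
    rcases hss with hpos | hneg
    · have hA := hpos atil (by simp)
      have hF0 := hpos f0 (by simp)
      have hF1 := hpos f1 (by simp)
      have hab2 : 0 ≤ atil * b2 := mul_nonneg hA hb2n
      have hf1z : f1 = 0 := le_antisymm (by linarith [hf1v]) hF1
      have hxf0z : x * f0 = 0 := by
        have h1' : 0 ≤ x * f0 := mul_nonneg hx hF0
        have h2' : 0 ≤ atil * b0 := mul_nonneg hA hb0n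
        linarith [hxf0v]
      have hf0ne : f0 ≠ 0 := by
        intro hf0z
        apply hhtne
        rw [hHt, hf1z, hf0z]; ring
      have hxz : x = 0 := by
        rcases mul_eq_zero.mp hxf0z with h | h
        · exact h
        · exact absurd h hf0ne
      have : f0 = -(atil * b1) := by rw [← hf0v, hxz]; ring
      have hab1 : 0 ≤ atil * b1 := mul_nonneg hA hb1n
      exact hf0ne (le_antisymm (by linarith) hF0)
    · have hA := hneg atil (by simp)
      have hF0 := hneg f0 (by simp)
      have hF1 := hneg f1 (by simp)
      have hab2 : atil * b2 ≤ 0 := by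
        have := mul_nonneg (neg_nonneg.2 hA) hb2n; linarith
      have hf1z : f1 = 0 := le_antisymm hF1 (by linarith [hf1v])
      have hxf0z : x * f0 = 0 := by
        have h1' : x * f0 ≤ 0 := by
          have := mul_nonneg hx (neg_nonneg.2 hF0); linarith
        have h2' : atil * b0 ≤ 0 := by
          have := mul_nonneg (neg_nonneg.2 hA) hb0n; linarith
        linarith [hxf0v]
      have hf0ne : f0 ≠ 0 := by
        intro hf0z
        apply hhtne
        rw [hHt, hf1z, hf0z]; ring
      have hxz : x = 0 := by
        rcases mul_eq_zero.mp hxf0z with h | h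
        · exact h
        · exact absurd h hf0ne
      have : f0 = -(atil * b1) := by rw [← hf0v, hxz]; ring
      have hab1 : atil * b1 ≤ 0 := by
        have := mul_nonneg (neg_nonneg.2 hA) hb1n; linarith
      exact hf0ne (le_antisymm hF0 (by linarith))
  -- strict positivity of htil * P
  have hPne : f1 * (f1 * h0 - f0 * h1) + b2 * f0 ^ 2 ≠ 0 := by
    rw [KP]; exact neg_ne_zero.mpr (mul_ne_zero hbtne hR0ne)
  have hHtne2 : b2 * x ^ 2 - h1 * x + h0 ≠ 0 := by rw [← KH]; exact hhtne
  have hHtPeq : (b2 * x ^ 2 - h1 * x + h0) * (f1 * (f1 * h0 - f0 * h1) + b2 * f0 ^ 2)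
      = -(btil * htil * R0ab) := by
    rw [KP, KH]; ring
  have hHtPpos : 0 < (b2 * x ^ 2 - h1 * x + h0) * (f1 * (f1 * h0 - f0 * h1) + b2 * f0 ^ 2) := by
    have hnn : 0 ≤ (b2 * x ^ 2 - h1 * x + h0) * (f1 * (f1 * h0 - f0 * h1) + b2 * f0 ^ 2) := by
      rw [hHtPeq]; exact hprodnn
    exact lt_of_le_of_ne hnn (Ne.symm (mul_ne_zero hHtne2 hPne))
  rcases hss with hpos | hneg
  · -- all nonnegative
    have hBnn := hpos btil (by simp)
    have hD0 := hpos d0 (by simp)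
    have hD1 := hpos d1 (by simp)
    have hF0 := hpos f0 (by simp)
    have hF1 := hpos f1 (by simp)
    have hLam := hpos lambda1 (by simp)
    have hbtpos : 0 < btil := lt_of_le_of_ne hBnn (Ne.symm hbtne)
    have hh0nn : 0 ≤ h0 := nn_of_mul_pos hbtpos (by rw [← hd0]; exact hD0)
    have hh1nn : 0 ≤ h1 := nn_of_mul_pos hbtpos (by rw [← hd1]; exact hD1)
    have hal2' : 0 ≤ f1 * h0 - x * f0 * b2 :=
      nn_of_mul_pos hbtpos (by rw [← KA2]; exact hal2nn)
    have hbt2pos : 0 < btil ^ 2 := pow_pos hbtpos 2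
    have hlam' : 0 ≤ (x * h1 - h0) * (f1 * h0 - f0 * h1) + x * f0 * h0 * b2 :=
      nn_of_mul_pos hbt2pos (by rw [← KL]; exact hLam)
    obtain ⟨hh0pos, hb2pos, hA1pos⟩ :=
      core_lemma f0 f1 h0 h1 b2 x hF0 hF1 hh0nn hh1nn hb2n hx hHtPpos hal2' hlam'
    refine ⟨hbtne, ?_, ?_, ?_⟩
    · rw [hd0]; exact mul_ne_zero hbtne (ne_of_gt hh0pos)
    · rw [hd2, hh2]; exact mul_ne_zero hbtne (ne_of_gt hb2pos)
    · rw [KA1]; exact mul_pos hbtpos hA1pos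
  · -- all nonpositive
    have hBnp := hneg btil (by simp)
    have hD0 := hneg d0 (by simp)
    have hD1 := hneg d1 (by simp)
    have hF0 := hneg f0 (by simp)
    have hF1 := hneg f1 (by simp)
    have hLam := hneg lambda1 (by simp)
    have hbtneg : btil < 0 := lt_of_le_of_ne hBnp hbtne
    have hh0nn : 0 ≤ h0 := nn_of_mul_neg hbtneg (by rw [← hd0]; exact hD0)
    have hh1nn : 0 ≤ h1 := nn_of_mul_neg hbtneg (by rw [← hd1]; exact hD1)
    have hal2e : f1 * h0 - x * f0 * b2 ≤ 0 :=
      np_of_mul_neg hbtneg (by rw [← KA2]; exact hal2nn)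
    have hal2' : 0 ≤ (-f1) * h0 - x * (-f0) * b2 := by
      linarith [(by ring : (-f1) * h0 - x * (-f0) * b2 = -(f1 * h0 - x * f0 * b2))]
    have hbt2pos : 0 < btil ^ 2 := by
      rw [pow_two]; exact mul_pos_of_neg_of_neg hbtneg hbtneg
    have hlame : (x * h1 - h0) * (f1 * h0 - f0 * h1) + x * f0 * h0 * b2 ≤ 0 :=
      np_of_mul_pos hbt2pos (by rw [← KL]; exact hLam)
    have hlam' : 0 ≤ (x * h1 - h0) * ((-f1) * h0 - (-f0) * h1) + x * (-f0) * h0 * b2 := by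
      linarith [hlame, (by ring : (x * h1 - h0) * ((-f1) * h0 - (-f0) * h1) + x * (-f0) * h0 * b2
        = -((x * h1 - h0) * (f1 * h0 - f0 * h1) + x * f0 * h0 * b2))]
    have hHtPpos' : 0 < (b2 * x ^ 2 - h1 * x + h0) *
        ((-f1) * ((-f1) * h0 - (-f0) * h1) + b2 * (-f0) ^ 2) := by
      have hrw : (-f1) * ((-f1) * h0 - (-f0) * h1) + b2 * (-f0) ^ 2
          = f1 * (f1 * h0 - f0 * h1) + b2 * f0 ^ 2 := by ring
      rw [hrw]; exact hHtPpos
    obtain ⟨hh0pos, hb2pos, hA1pos⟩ :=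
      core_lemma (-f0) (-f1) h0 h1 b2 x (neg_nonneg.2 hF0) (neg_nonneg.2 hF1)
        hh0nn hh1nn hb2n hx hHtPpos' hal2' hlam'
    refine ⟨hbtne, ?_, ?_, ?_⟩
    · rw [hd0]; exact mul_ne_zero hbtne (ne_of_gt hh0pos)
    · rw [hd2, hh2]; exact mul_ne_zero hbtne (ne_of_gt hb2pos)
    · have heq : alpha1 = (-btil) * ((-f0) * h0 + x * ((-f1) * h0 - (-f0) * h1)) := by
        rw [KA1]; ring
      rw [heq]
      exact mul_pos (by linarith) hA1pos
end
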